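/- arXiv:2403.04029 — 11 statements merged into one kernel-verified Lean document; each statement's English description precedes it below -/
import Mathlib

section
/- Let S₁ and S₂ be nonempty finite sets, and let ν₁, ν₂ : S₁ × S₂ → ℝ. Consider the mixed extension where for probability mass functions p₁ on S₁ and p₂ on S₂, player i's payoff is E_{ν_i}(p₁,p₂) = Σ_{(s₁,s₂)} p₁(s₁)p₂(s₂)ν_i(s₁,s₂). Suppose the mixed extension is adversarial: for all pairs (p₁,p₂), (q₁,q₂) of mixed strategy profiles, E_{ν₁}(p₁,p₂) ≥ E_{ν₁}(q₁,q₂) if and only if E_{ν₂}(p₁,p₂) ≤ E_{ν₂}(q₁,q₂). Then there exist real numbers α > 0 and β such that ν₂(s₁,s₂) = -α·ν₁(s₁,s₂) + β for all (s₁,s₂) ∈ S₁ × S₂. -/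
lemma deltaMix_mem {S : Type*} [Fintype S] [DecidableEq S] (x y : S) (l : ℝ) (h0 : 0 ≤ l) (h1 : l ≤ 1) :
    (fun i => l * (if i = x then (1:ℝ) else 0) + (1-l) * (if i = y then 1 else 0)) ∈ stdSimplex ℝ S := by
  constructor
  · intro i
    apply add_nonneg <;> apply mul_nonneg
    · exact h0
    · split <;> norm_num
    · linarith
    · split <;> norm_num
  · simp [Finset.sum_add_distrib, ← Finset.mul_sum, Finset.sum_ite_eq']

lemma sum_deltaMix {S₁ S₂ : Type*} [Fintype S₁] [Fintype S₂] [DecidableEq S₁] [DecidableEq S₂]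
    (ν : S₁ × S₂ → ℝ) (x₁ y₁ : S₁) (x₂ y₂ : S₂) (l m : ℝ) :
    (∑ s₁, ∑ s₂, (l * (if s₁ = x₁ then (1:ℝ) else 0) + (1-l) * (if s₁ = y₁ then 1 else 0)) *
      (m * (if s₂ = x₂ then (1:ℝ) else 0) + (1-m) * (if s₂ = y₂ then 1 else 0)) * ν (s₁, s₂))
    = l*m*ν (x₁,x₂) + l*(1-m)*ν (x₁,y₂) + (1-l)*m*ν (y₁,x₂) + (1-l)*(1-m)*ν (y₁,y₂) := by
  simp only [add_mul, mul_add, Finset.sum_add_distrib, ite_mul, mul_ite, mul_zero, zero_mul,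
    mul_one, one_mul, Finset.sum_ite_eq', Finset.mem_univ, if_true, zero_add, add_zero]
  ring

set_option maxHeartbeats 2000000 in
theorem stmt_0 {S₁ S₂ : Type*} [Fintype S₁] [Fintype S₂] [Nonempty S₁] [Nonempty S₂]
    (ν₁ ν₂ : S₁ × S₂ → ℝ)
    (hadv : ∀ p₁ ∈ stdSimplex ℝ S₁, ∀ p₂ ∈ stdSimplex ℝ S₂,
      ∀ q₁ ∈ stdSimplex ℝ S₁, ∀ q₂ ∈ stdSimplex ℝ S₂,
      ((∑ s₁, ∑ s₂, p₁ s₁ * p₂ s₂ * ν₁ (s₁, s₂)) ≥ (∑ s₁, ∑ s₂, q₁ s₁ * q₂ s₂ * ν₁ (s₁, s₂)) ↔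
       (∑ s₁, ∑ s₂, p₁ s₁ * p₂ s₂ * ν₂ (s₁, s₂)) ≤ (∑ s₁, ∑ s₂, q₁ s₁ * q₂ s₂ * ν₂ (s₁, s₂)))) :
    ∃ α : ℝ, 0 < α ∧ ∃ β : ℝ, ∀ s : S₁ × S₂, ν₂ s = -α * ν₁ s + β := by
  classical
  -- KEY: two-point-mixture comparisons
  have KEY : ∀ (x₁ y₁ : S₁) (x₂ y₂ : S₂) (l m : ℝ), 0 ≤ l → l ≤ 1 → 0 ≤ m → m ≤ 1 →
      ∀ (x₁' y₁' : S₁) (x₂' y₂' : S₂) (l' m' : ℝ), 0 ≤ l' → l' ≤ 1 → 0 ≤ m' → m' ≤ 1 →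
      ((l*m*ν₁ (x₁,x₂) + l*(1-m)*ν₁ (x₁,y₂) + (1-l)*m*ν₁ (y₁,x₂) + (1-l)*(1-m)*ν₁ (y₁,y₂) ≥
        l'*m'*ν₁ (x₁',x₂') + l'*(1-m')*ν₁ (x₁',y₂') + (1-l')*m'*ν₁ (y₁',x₂') + (1-l')*(1-m')*ν₁ (y₁',y₂')) ↔
       (l*m*ν₂ (x₁,x₂) + l*(1-m)*ν₂ (x₁,y₂) + (1-l)*m*ν₂ (y₁,x₂) + (1-l)*(1-m)*ν₂ (y₁,y₂) ≤
        l'*m'*ν₂ (x₁',x₂') + l'*(1-m')*ν₂ (x₁',y₂') + (1-l')*m'*ν₂ (y₁',x₂') + (1-l')*(1-m')*ν₂ (y₁',y₂'))) := by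
    intro x₁ y₁ x₂ y₂ l m hl0 hl1 hm0 hm1 x₁' y₁' x₂' y₂' l' m' hl0' hl1' hm0' hm1'
    have := hadv _ (deltaMix_mem x₁ y₁ l hl0 hl1) _ (deltaMix_mem x₂ y₂ m hm0 hm1)
      _ (deltaMix_mem x₁' y₁' l' hl0' hl1') _ (deltaMix_mem x₂' y₂' m' hm0' hm1')
    rwa [sum_deltaMix, sum_deltaMix, sum_deltaMix, sum_deltaMix] at this
  have Keq : ∀ (x₁ y₁ : S₁) (x₂ y₂ : S₂) (l m : ℝ), 0 ≤ l → l ≤ 1 → 0 ≤ m → m ≤ 1 →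
      ∀ (x₁' y₁' : S₁) (x₂' y₂' : S₂) (l' m' : ℝ), 0 ≤ l' → l' ≤ 1 → 0 ≤ m' → m' ≤ 1 →
      (l*m*ν₁ (x₁,x₂) + l*(1-m)*ν₁ (x₁,y₂) + (1-l)*m*ν₁ (y₁,x₂) + (1-l)*(1-m)*ν₁ (y₁,y₂) =
        l'*m'*ν₁ (x₁',x₂') + l'*(1-m')*ν₁ (x₁',y₂') + (1-l')*m'*ν₁ (y₁',x₂') + (1-l')*(1-m')*ν₁ (y₁',y₂')) →
      (l*m*ν₂ (x₁,x₂) + l*(1-m)*ν₂ (x₁,y₂) + (1-l)*m*ν₂ (y₁,x₂) + (1-l)*(1-m)*ν₂ (y₁,y₂) =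
        l'*m'*ν₂ (x₁',x₂') + l'*(1-m')*ν₂ (x₁',y₂') + (1-l')*m'*ν₂ (y₁',x₂') + (1-l')*(1-m')*ν₂ (y₁',y₂')) := by
    intro x₁ y₁ x₂ y₂ l m hl0 hl1 hm0 hm1 x₁' y₁' x₂' y₂' l' m' hl0' hl1' hm0' hm1' h
    exact le_antisymm
      ((KEY x₁ y₁ x₂ y₂ l m hl0 hl1 hm0 hm1 x₁' y₁' x₂' y₂' l' m' hl0' hl1' hm0' hm1').1 h.ge)
      ((KEY x₁' y₁' x₂' y₂' l' m' hl0' hl1' hm0' hm1' x₁ y₁ x₂ y₂ l m hl0 hl1 hm0 hm1).1 h.le)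
  -- pure comparisons
  have pure_iff : ∀ s t : S₁ × S₂, ν₁ t ≤ ν₁ s ↔ ν₂ s ≤ ν₂ t := by
    intro s t
    have := KEY s.1 s.1 s.2 s.2 1 1 (by norm_num) (by norm_num) (by norm_num) (by norm_num)
      t.1 t.1 t.2 t.2 1 1 (by norm_num) (by norm_num) (by norm_num) (by norm_num)
    simpa using this
  have pure_eq : ∀ s t : S₁ × S₂, ν₁ s = ν₁ t → ν₂ s = ν₂ t := by
    intro s t h
    exact le_antisymm ((pure_iff s t).1 h.ge) ((pure_iff t s).1 h.le)
  have pure_lt : ∀ s t : S₁ × S₂, ν₁ t < ν₁ s → ν₂ s < ν₂ t := by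
    intro s t h
    rcases lt_or_ge (ν₂ s) (ν₂ t) with h' | h'
    · exact h'
    · exact absurd ((pure_iff t s).2 h') (not_le.2 h)
  -- edge interpolation lemmas
  have edgeR : ∀ (s : S₁ × S₂) (u₁ : S₁) (u₂ v₂ : S₂) (t : ℝ), 0 ≤ t → t ≤ 1 →
      ν₁ s = t * ν₁ (u₁,u₂) + (1-t) * ν₁ (u₁,v₂) →
      ν₂ s = t * ν₂ (u₁,u₂) + (1-t) * ν₂ (u₁,v₂) := by
    intro s u₁ u₂ v₂ t ht0 ht1 h
    have := Keq s.1 s.1 s.2 s.2 1 1 (by norm_num) (by norm_num) (by norm_num) (by norm_num)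
      u₁ u₁ u₂ v₂ 1 t (by norm_num) (by norm_num) ht0 ht1 (by simpa using by linarith [h] )
    · simpa using this
  have edgeL : ∀ (s : S₁ × S₂) (u₂ : S₂) (u₁ v₁ : S₁) (t : ℝ), 0 ≤ t → t ≤ 1 →
      ν₁ s = t * ν₁ (u₁,u₂) + (1-t) * ν₁ (v₁,u₂) →
      ν₂ s = t * ν₂ (u₁,u₂) + (1-t) * ν₂ (v₁,u₂) := by
    intro s u₂ u₁ v₁ t ht0 ht1 h
    have := Keq s.1 s.1 s.2 s.2 1 1 (by norm_num) (by norm_num) (by norm_num) (by norm_num)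
      u₁ v₁ u₂ u₂ t 1 ht0 ht1 (by norm_num) (by norm_num) (by simpa using by linarith [h])
    · simpa using this
  -- max and min
  obtain ⟨a, ha⟩ := Finite.exists_max ν₁
  obtain ⟨b, hb⟩ := Finite.exists_min ν₁
  by_cases hMm : ν₁ a = ν₁ b
  · -- constant game
    refine ⟨1, one_pos, ν₂ a + ν₁ a, fun s => ?_⟩
    have h1 : ν₁ s = ν₁ a := le_antisymm (ha s) (hMm ▸ hb s)
    have h2 : ν₂ s = ν₂ a := pure_eq s a h1
    rw [h1, h2]; ring
  · have hlt : ν₁ b < ν₁ a := lt_of_le_of_ne (hb a) (fun h => hMm h.symm)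
    set M := ν₁ a with hM
    set m := ν₁ b with hm
    set A := ν₂ a with hA
    set B := ν₂ b with hB
    have hAB : A < B := pure_lt a b hlt
    set c : S₁ × S₂ := (a.1, b.2) with hc
    set d : S₁ × S₂ := (b.1, a.2) with hd
    set z := ν₁ c with hz
    set w := ν₁ d with hw
    set C := ν₂ c with hC
    set D := ν₂ d with hD
    have hmz : m ≤ z := hb c
    have hzM : z ≤ M := ha c
    have hmw : m ≤ w := hb d
    have hwM : w ≤ M := ha d
    have hab1 : (a.1, a.2) = a := rfl
    have hab2 : (b.1, b.2) = b := rfl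
    -- star for c : C*(M-m) = (z-m)*A + (M-z)*B
    have star_c : C*(M-m) = (z-m)*A + (M-z)*B := by
      rcases eq_or_lt_of_le hmz with hzm | hzm
      · -- z = m
        have hCB : C = B := pure_eq c b hzm.symm
        rw [hCB, ← hzm]; ring
      rcases eq_or_lt_of_le hzM with hzM' | hzM'
      · -- z = M
        have hCA : C = A := pure_eq c a hzM'
        rw [hCA, hzM']; ring
      have hzm0 : z - m ≠ 0 := by linarith
      have hMz0 : M - z ≠ 0 := by linarith
      rcases lt_trichotomy w z with hwz | hwz | hwz
      · -- w < z
        have hMw0 : M - w ≠ 0 := by linarith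
        set t₁ := (w - m)/(z - m) with ht₁
        have ht₁0 : 0 ≤ t₁ := div_nonneg (by linarith) (by linarith)
        have ht₁1 : t₁ ≤ 1 := by rw [ht₁, div_le_one (by linarith)]; linarith
        have hcombD : ν₁ d = t₁ * ν₁ (a.1, b.2) + (1-t₁) * ν₁ (b.1, b.2) := by
          show w = t₁ * z + (1-t₁) * m
          rw [ht₁]; field_simp; try ring
        have hgD : D = t₁ * C + (1-t₁) * B := edgeL d b.2 a.1 b.1 t₁ ht₁0 ht₁1 hcombD
        have hD' : D*(z-m) = (w-m)*C + (z-w)*B := by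
          rw [hgD, ht₁]; field_simp; try ring
        set t₂ := (z - w)/(M - w) with ht₂
        have ht₂0 : 0 ≤ t₂ := div_nonneg (by linarith) (by linarith)
        have ht₂1 : t₂ ≤ 1 := by rw [ht₂, div_le_one (by linarith)]; linarith
        have hcombC : ν₁ c = t₂ * ν₁ (a.1, a.2) + (1-t₂) * ν₁ (b.1, a.2) := by
          show z = t₂ * M + (1-t₂) * w
          rw [ht₂]; field_simp; try ring
        have hgC : C = t₂ * A + (1-t₂) * D := edgeL c a.2 a.1 b.1 t₂ ht₂0 ht₂1 hcombC
        have hC' : C*(M-w) = (z-w)*A + (M-z)*D := by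
          rw [hgC, ht₂]; field_simp; try ring
        have key : (C*(M-m) - ((z-m)*A + (M-z)*B)) * (z-w) = 0 := by
          linear_combination (z-m)*hC' + (M-z)*hD'
        rcases mul_eq_zero.mp key with h | h
        · linarith
        · exfalso; linarith
      · -- w = z
        have hDC : D = C := pure_eq d c hwz
        rcases le_or_gt (2*z) (M+m) with hs | hs
        · set t := (M + m - 2*z)/(4*(M-z)) with ht
          have ht0 : 0 ≤ t := div_nonneg (by linarith) (by linarith)
          have ht1 : t ≤ 1 := by rw [ht, div_le_one (by linarith)]; linarith
          have h := Keq a.1 b.1 a.2 b.2 (1/2) (1/2) (by norm_num) (by norm_num) (by norm_num)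
            (by norm_num) a.1 a.1 a.2 b.2 1 t (by norm_num) (by norm_num) ht0 ht1
            (by
              show 1/2*(1/2)*M + 1/2*(1-1/2)*z + (1-1/2)*(1/2)*w + (1-1/2)*(1-1/2)*m =
                1*t*M + 1*(1-t)*z + (1-1)*t*M + (1-1)*(1-t)*z
              rw [hwz, ht]; field_simp; try ring)
          have h2 : 1/2*(1/2)*A + 1/2*(1-1/2)*C + (1-1/2)*(1/2)*D + (1-1/2)*(1-1/2)*B =
              1*t*A + 1*(1-t)*C + (1-1)*t*A + (1-1)*(1-t)*C := h
          rw [hDC] at h2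
          have ht' : t*(4*(M-z)) = M + m - 2*z := by rw [ht]; field_simp; try ring
          linear_combination (-(4:ℝ)*(M-z))*h2 - (A-C)*ht'
        · set t := (M + 2*z - 3*m)/(4*(z-m)) with ht
          have ht0 : 0 ≤ t := div_nonneg (by linarith) (by linarith)
          have ht1 : t ≤ 1 := by rw [ht, div_le_one (by linarith)]; linarith
          have h := Keq a.1 b.1 a.2 b.2 (1/2) (1/2) (by norm_num) (by norm_num) (by norm_num)
            (by norm_num) a.1 b.1 b.2 b.2 t 1 ht0 ht1 (by norm_num) (by norm_num)
            (by
              show 1/2*(1/2)*M + 1/2*(1-1/2)*z + (1-1/2)*(1/2)*w + (1-1/2)*(1-1/2)*m =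
                t*1*z + t*(1-1)*z + (1-t)*1*m + (1-t)*(1-1)*m
              rw [hwz, ht]; field_simp; try ring)
          have h2 : 1/2*(1/2)*A + 1/2*(1-1/2)*C + (1-1/2)*(1/2)*D + (1-1/2)*(1-1/2)*B =
              t*1*C + t*(1-1)*C + (1-t)*1*B + (1-t)*(1-1)*B := h
          rw [hDC] at h2
          have ht' : t*(4*(z-m)) = M + 2*z - 3*m := by rw [ht]; field_simp; try ring
          linear_combination (-(4:ℝ)*(z-m))*h2 + (B-C)*ht'
      · -- z < w
        have hwm0 : w - m ≠ 0 := by linarith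
        set t₁ := (z - m)/(w - m) with ht₁
        have ht₁0 : 0 ≤ t₁ := div_nonneg (by linarith) (by linarith)
        have ht₁1 : t₁ ≤ 1 := by rw [ht₁, div_le_one (by linarith)]; linarith
        have hcombC : ν₁ c = t₁ * ν₁ (b.1, a.2) + (1-t₁) * ν₁ (b.1, b.2) := by
          show z = t₁ * w + (1-t₁) * m
          rw [ht₁]; field_simp; try ring
        have hgC : C = t₁ * D + (1-t₁) * B := edgeR c b.1 a.2 b.2 t₁ ht₁0 ht₁1 hcombC
        have hC' : C*(w-m) = (z-m)*D + (w-z)*B := by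
          rw [hgC, ht₁]; field_simp; try ring
        set t₂ := (w - z)/(M - z) with ht₂
        have ht₂0 : 0 ≤ t₂ := div_nonneg (by linarith) (by linarith)
        have ht₂1 : t₂ ≤ 1 := by rw [ht₂, div_le_one (by linarith)]; linarith
        have hcombD : ν₁ d = t₂ * ν₁ (a.1, a.2) + (1-t₂) * ν₁ (a.1, b.2) := by
          show w = t₂ * M + (1-t₂) * z
          rw [ht₂]; field_simp; try ring
        have hgD : D = t₂ * A + (1-t₂) * C := edgeR d a.1 a.2 b.2 t₂ ht₂0 ht₂1 hcombD
        have hD' : D*(M-z) = (w-z)*A + (M-w)*C := by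
          rw [hgD, ht₂]; field_simp; try ring
        have key : (C*(M-m) - ((z-m)*A + (M-z)*B)) * (w-z) = 0 := by
          linear_combination (z-m)*hD' + (M-z)*hC'
        rcases mul_eq_zero.mp key with h | h
        · linarith
        · exfalso; linarith
    -- star for every pure profile
    have star : ∀ s : S₁ × S₂, ν₂ s * (M-m) = (ν₁ s - m)*A + (M - ν₁ s)*B := by
      intro s
      have hvM := ha s
      have hvm := hb s
      rcases le_or_gt (ν₁ s) z with hv | hv
      · rcases lt_or_ge m z with hz' | hz'
        · have hzm0 : z - m ≠ 0 := by linarith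
          set t := (ν₁ s - m)/(z - m) with ht
          have ht0 : 0 ≤ t := div_nonneg (by linarith) (by linarith)
          have ht1 : t ≤ 1 := by rw [ht, div_le_one (by linarith)]; linarith
          have hcomb : ν₁ s = t * ν₁ (a.1, b.2) + (1-t) * ν₁ (b.1, b.2) := by
            show ν₁ s = t * z + (1-t) * m
            rw [ht]; field_simp; try ring
          have hgs : ν₂ s = t * C + (1-t) * B := edgeL s b.2 a.1 b.1 t ht0 ht1 hcomb
          have hcomb2 : ν₁ s = t * z + (1-t) * m := hcomb
          rw [hgs, hcomb2]
          linear_combination t * star_c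
        · have h1 : ν₁ s = ν₁ b := le_antisymm (by linarith) (hb s)
          have h2 : ν₂ s = B := pure_eq s b h1
          have h3 : ν₁ s = m := h1
          rw [h2, h3]; ring
      · have hzM' : z < M := lt_of_lt_of_le hv (ha s)
        have hMz0 : M - z ≠ 0 := by linarith
        set t := (ν₁ s - z)/(M - z) with ht
        have ht0 : 0 ≤ t := div_nonneg (by linarith) (by linarith)
        have ht1 : t ≤ 1 := by rw [ht, div_le_one (by linarith)]; linarith
        have hcomb : ν₁ s = t * ν₁ (a.1, a.2) + (1-t) * ν₁ (a.1, b.2) := by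
          show ν₁ s = t * M + (1-t) * z
          rw [ht]; field_simp; try ring
        have hgs : ν₂ s = t * A + (1-t) * C := edgeR s a.1 a.2 b.2 t ht0 ht1 hcomb
        have hcomb2 : ν₁ s = t * M + (1-t) * z := hcomb
        rw [hgs, hcomb2]
        linear_combination (1-t) * star_c
    refine ⟨(B-A)/(M-m), div_pos (by linarith) (by linarith), (M*B - m*A)/(M-m), fun s => ?_⟩
    have hMm' : M - m ≠ 0 := by linarith
    have := star s
    field_simp
    linarith [this]
end

section
/- Let P₁ and P₂ be convex subsets of real vector spaces and u₁, u₂ : P₁ × P₂ → ℝ be bi-affine functions (affine in each coordinate separately). If the game ⟨P₁, P₂, u₁, u₂⟩ is adversarial, i.e., for all σ, τ ∈ P₁ × P₂, u₁(σ) ≥ u₁(τ) ⟺ u₂(σ) ≤ u₂(τ), then there exist α > 0 and β ∈ ℝ such that u₂(σ) = -α·u₁(σ) + β for all σ ∈ P₁ × P₂. -/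
/-!
Let `S ⊆ ℝ²` be the image of the profile map `σ ↦ (u₁ σ, u₂ σ)`. Adversariality makes `S` the
graph of a strictly decreasing function of the first coordinate, and biaffinity makes the profile
map send segments in either variable to segments lying in `S`. Two segments in such a graph leaving
a common point on the same side are collinear, the shorter one lying on the longer. Fixing `y₀` and
`e₁, e₂` with `u₁ e₁ y₀ ≠ u₁ e₂ y₀`, this puts every `(u₁ x y₀, u₂ x y₀)` on the line of negative
slope through the two reference profiles. For a general `(x, y)`, in the bilinear patch spanned by
`x, e` and `y, y₀` every row starts strictly inside the column at `x`, hence lies on the line of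
that column; since the rows vary affinely, the column is parallel to the bottom row, which is on
the line.
-/

open Set

def cross (v w : ℝ × ℝ) : ℝ := v.1 * w.2 - v.2 * w.1

def IsAdversarial (S : Set (ℝ × ℝ)) : Prop := ∀ p ∈ S, ∀ q ∈ S, p.1 ≤ q.1 ↔ q.2 ≤ p.2

lemma cross_smul_right (v w : ℝ × ℝ) (k : ℝ) : cross v (k • w) = k * cross v w := by
  simp only [cross, Prod.smul_fst, Prod.smul_snd, smul_eq_mul]
  ring

section Plane

variable {S : Set (ℝ × ℝ)} {a b c d p q r : ℝ × ℝ}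

lemma cross_sub_eq_zero_of_mem_segment (h : r ∈ segment ℝ p q) : cross (q - p) (r - p) = 0 := by
  obtain ⟨s, t, -, -, hst, rfl⟩ := h
  simp only [cross, Prod.fst_sub, Prod.snd_sub, Prod.fst_add, Prod.snd_add, Prod.smul_fst,
    Prod.smul_snd, smul_eq_mul]
  linear_combination (p.2 * q.1 - p.1 * q.2) * hst

lemma mem_segment_of_fst_mem_uIcc (hS : S.InjOn Prod.fst) (hpq : segment ℝ p q ⊆ S) (hr : r ∈ S)
    (h : r.1 ∈ uIcc p.1 q.1) : r ∈ segment ℝ p q := by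
  rw [← segment_eq_uIcc, ← LinearMap.fst_apply (R := ℝ) (M₂ := ℝ) p,
    ← LinearMap.fst_apply (R := ℝ) (M₂ := ℝ) q, ← LinearMap.coe_toAffineMap,
    ← image_segment] at h
  obtain ⟨z, hz, hzr⟩ := h
  rwa [← hS (hpq hz) hr hzr]

lemma mem_uIcc_or_mem_uIcc_of_mul_nonneg {o x y : ℝ} (h : 0 ≤ (x - o) * (y - o)) :
    y ∈ uIcc o x ∨ x ∈ uIcc o y := by
  simp only [mem_uIcc]
  rcases mul_nonneg_iff.1 h with ⟨hx, hy⟩ | ⟨hx, hy⟩ <;> rcases le_total x y with hxy | hxy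
  · exact Or.inr (Or.inl ⟨by linarith, hxy⟩)
  · exact Or.inl (Or.inl ⟨by linarith, hxy⟩)
  · exact Or.inl (Or.inr ⟨hxy, by linarith⟩)
  · exact Or.inr (Or.inr ⟨hxy, by linarith⟩)

lemma cross_sub_eq_zero_of_segment_subset (hS : S.InjOn Prod.fst) (hq : segment ℝ p q ⊆ S)
    (hr : segment ℝ p r ⊆ S) (hside : 0 ≤ (q.1 - p.1) * (r.1 - p.1)) :
    cross (q - p) (r - p) = 0 := by
  rcases mem_uIcc_or_mem_uIcc_of_mul_nonneg hside with h | h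
  · exact cross_sub_eq_zero_of_mem_segment
      (mem_segment_of_fst_mem_uIcc hS hq (hr (right_mem_segment ℝ p r)) h)
  · have := cross_sub_eq_zero_of_mem_segment
      (mem_segment_of_fst_mem_uIcc hS hr (hq (right_mem_segment ℝ p q)) h)
    simp only [cross] at this ⊢
    linarith

lemma cross_sub_eq_zero_of_ruled (hS : S.InjOn Prod.fst) (hcd : segment ℝ c d ⊆ S)
    (hrow : ∀ t ∈ Ioo (0 : ℝ) 1, segment ℝ (t • c + (1 - t) • d) (t • a + (1 - t) • b) ⊆ S) :
    cross (b - d) (c - d) = 0 := by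
  -- `key t` is affine in `t`, and at `t = 0` it is the claim.
  have key : ∀ t ∈ Ioo (0 : ℝ) 1,
      cross ((t • a + (1 - t) • b) - (t • c + (1 - t) • d)) (c - d) = 0 := by
    intro t ht
    set m := t • c + (1 - t) • d with hm_def
    set e := t • a + (1 - t) • b
    have hm : m ∈ segment ℝ c d := ⟨t, 1 - t, ht.1.le, by linarith [ht.2], by ring, rfl⟩
    have hmc : segment ℝ m c ⊆ S :=
      ((convex_segment c d).segment_subset hm (left_mem_segment ℝ c d)).trans hcd
    have hmd : segment ℝ m d ⊆ S :=
      ((convex_segment c d).segment_subset hm (right_mem_segment ℝ c d)).trans hcd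
    have hcm : c - m = (1 - t) • (c - d) := by rw [hm_def]; module
    have hdm : d - m = (-t) • (c - d) := by rw [hm_def]; module
    rcases le_total 0 ((e - m).1 * (c - d).1) with h | h
    · have := cross_sub_eq_zero_of_segment_subset hS (hrow t ht) hmc
        (by
          show 0 ≤ (e.1 - m.1) * (c.1 - m.1)
          rw [← Prod.fst_sub, ← Prod.fst_sub, hcm, Prod.smul_fst, smul_eq_mul, mul_left_comm]
          exact mul_nonneg (by linarith [ht.2]) h)
      rw [hcm, cross_smul_right] at this
      exact (mul_eq_zero.1 this).resolve_left (by linarith [ht.2])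
    · have := cross_sub_eq_zero_of_segment_subset hS (hrow t ht) hmd
        (by
          show 0 ≤ (e.1 - m.1) * (d.1 - m.1)
          rw [← Prod.fst_sub, ← Prod.fst_sub, hdm, Prod.smul_fst, smul_eq_mul, mul_left_comm]
          exact mul_nonneg_of_nonpos_of_nonpos (by linarith [ht.1]) h)
      rw [hdm, cross_smul_right] at this
      exact (mul_eq_zero.1 this).resolve_left (neg_ne_zero.2 ht.1.ne')
  have h₂ := key (1 / 2) ⟨by norm_num, by norm_num⟩
  have h₄ := key (1 / 4) ⟨by norm_num, by norm_num⟩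
  simp only [cross, Prod.fst_sub, Prod.snd_sub, Prod.fst_add, Prod.snd_add, Prod.smul_fst,
    Prod.smul_snd, smul_eq_mul] at h₂ h₄ ⊢
  linear_combination 2 * h₄ - h₂

lemma snd_eq_of_cross_sub_eq_zero {α β : ℝ} (hb : b.2 = -α * b.1 + β) (hd : d.2 = -α * d.1 + β)
    (hbd : b.1 ≠ d.1) (h : cross (b - d) (c - d) = 0) : c.2 = -α * c.1 + β := by
  simp only [cross, Prod.fst_sub, Prod.snd_sub] at h
  apply mul_left_cancel₀ (sub_ne_zero.2 hbd)
  linear_combination h + (c.1 - d.1) * hb - (c.1 - d.1) * hd + (b.1 - d.1) * hd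

lemma exists_line_of_mul_sub_neg (h : (q.1 - p.1) * (q.2 - p.2) < 0) :
    ∃ α, 0 < α ∧ ∃ β, p.2 = -α * p.1 + β ∧ q.2 = -α * q.1 + β := by
  have hpq : q.1 - p.1 ≠ 0 := by rintro h0; simp [h0] at h
  refine ⟨-((q.1 - p.1) * (q.2 - p.2)) / (q.1 - p.1) ^ 2, div_pos (neg_pos.2 h) (sq_pos_iff.2 hpq),
    p.2 + p.1 * (-((q.1 - p.1) * (q.2 - p.2)) / (q.1 - p.1) ^ 2), by ring, ?_⟩
  field_simp
  ring

lemma IsAdversarial.injOn_fst (hS : IsAdversarial S) : S.InjOn Prod.fst := fun p hp q hq h =>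
  Prod.ext h (le_antisymm ((hS q hq p hp).1 h.ge) ((hS p hp q hq).1 h.le))

lemma IsAdversarial.mul_sub_neg (hS : IsAdversarial S) (hp : p ∈ S) (hq : q ∈ S)
    (hpq : p.1 ≠ q.1) : (q.1 - p.1) * (q.2 - p.2) < 0 := by
  rcases hpq.lt_or_gt with h | h
  · exact mul_neg_of_pos_of_neg (by linarith)
      (by linarith [not_le.1 (mt (hS q hq p hp).2 (not_le.2 h))])
  · exact mul_neg_of_neg_of_pos (by linarith)
      (by linarith [not_le.1 (mt (hS p hp q hq).2 (not_le.2 h))])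

end Plane

section Biaffine

variable {V₁ V₂ E : Type*} [AddCommGroup V₁] [Module ℝ V₁] [AddCommGroup V₂] [Module ℝ V₂]
  [AddCommGroup E] [Module ℝ E] {P₁ : Set V₁} {P₂ : Set V₂}

structure IsBiaffineOn (P₁ : Set V₁) (P₂ : Set V₂) (u : V₁ → V₂ → E) : Prop where
  left : ∀ x ∈ P₁, ∀ x' ∈ P₁, ∀ y ∈ P₂, ∀ t ∈ Icc (0 : ℝ) 1,
    u (t • x + (1 - t) • x') y = t • u x y + (1 - t) • u x' y
  right : ∀ x ∈ P₁, ∀ y ∈ P₂, ∀ y' ∈ P₂, ∀ t ∈ Icc (0 : ℝ) 1,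
    u x (t • y + (1 - t) • y') = t • u x y + (1 - t) • u x y'

namespace IsBiaffineOn

variable {u : V₁ → V₂ → E}

lemma swap (h : IsBiaffineOn P₁ P₂ u) : IsBiaffineOn P₂ P₁ (fun y x => u x y) :=
  ⟨fun y hy y' hy' x hx => h.right x hx y hy y' hy',
    fun y hy x hx x' hx' => h.left x hx x' hx' y hy⟩

lemma prodMk {u₁ u₂ : V₁ → V₂ → ℝ} (h₁ : IsBiaffineOn P₁ P₂ u₁) (h₂ : IsBiaffineOn P₁ P₂ u₂) :
    IsBiaffineOn P₁ P₂ (fun x y => (u₁ x y, u₂ x y)) :=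
  ⟨fun x hx x' hx' y hy t ht =>
      Prod.ext (h₁.left x hx x' hx' y hy t ht) (h₂.left x hx x' hx' y hy t ht),
    fun x hx y hy y' hy' t ht =>
      Prod.ext (h₁.right x hx y hy y' hy' t ht) (h₂.right x hx y hy y' hy' t ht)⟩

lemma segment_subset_image2_left (h : IsBiaffineOn P₁ P₂ u) (hP₁ : Convex ℝ P₁) {x x' : V₁}
    {y : V₂} (hx : x ∈ P₁) (hx' : x' ∈ P₁) (hy : y ∈ P₂) :
    segment ℝ (u x y) (u x' y) ⊆ image2 u P₁ P₂ := by
  rintro _ ⟨s, t, hs, ht, hst, rfl⟩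
  obtain rfl : t = 1 - s := by linarith
  rw [← h.left x hx x' hx' y hy s ⟨hs, by linarith⟩]
  exact mem_image2_of_mem (hP₁ hx hx' hs ht (by ring)) hy

lemma segment_subset_image2_right (h : IsBiaffineOn P₁ P₂ u) (hP₂ : Convex ℝ P₂) {x : V₁}
    {y y' : V₂} (hx : x ∈ P₁) (hy : y ∈ P₂) (hy' : y' ∈ P₂) :
    segment ℝ (u x y) (u x y') ⊆ image2 u P₁ P₂ := by
  rw [image2_swap]
  exact h.swap.segment_subset_image2_left hP₂ hy hy' hx

end IsBiaffineOn

end Biaffine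

section Main

variable {V₁ V₂ : Type*} [AddCommGroup V₁] [Module ℝ V₁] [AddCommGroup V₂] [Module ℝ V₂]
  {P₁ : Set V₁} {P₂ : Set V₂} {U : V₁ → V₂ → ℝ × ℝ}

lemma IsBiaffineOn.exists_line_of_fst_ne (hU : IsBiaffineOn P₁ P₂ U) (hP₁ : Convex ℝ P₁)
    (hP₂ : Convex ℝ P₂)
    (hS : IsAdversarial (image2 U P₁ P₂))
    {e₁ e₂ : V₁} {y₀ : V₂} (he₁ : e₁ ∈ P₁) (he₂ : e₂ ∈ P₁) (hy₀ : y₀ ∈ P₂)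
    (hne : (U e₁ y₀).1 ≠ (U e₂ y₀).1) :
    ∃ α, 0 < α ∧ ∃ β, ∀ p ∈ image2 U P₁ P₂, p.2 = -α * p.1 + β := by
  have hinj := hS.injOn_fst
  obtain ⟨α, hα, β, h₁, h₂⟩ := exists_line_of_mul_sub_neg <| hS.mul_sub_neg
    (mem_image2_of_mem he₁ hy₀) (mem_image2_of_mem he₂ hy₀) hne
  have hbase : ∀ x ∈ P₁, (U x y₀).2 = -α * (U x y₀).1 + β := fun x hx =>
    snd_eq_of_cross_sub_eq_zero h₁ h₂ hne <| cross_sub_eq_zero_of_ruled hinj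
      (hU.segment_subset_image2_left hP₁ hx he₂ hy₀) fun t ht => by
        rw [Convex.combo_self (by ring), ← hU.left x hx e₂ he₂ y₀ hy₀ t (Ioo_subset_Icc_self ht)]
        exact hU.segment_subset_image2_left hP₁ (hP₁ hx he₂ ht.1.le (by linarith [ht.2]) (by ring))
          he₁ hy₀
  refine ⟨α, hα, β, ?_⟩
  rintro _ ⟨x, hx, y, hy, rfl⟩
  obtain ⟨e, he, hex⟩ : ∃ e ∈ P₁, (U e y₀).1 ≠ (U x y₀).1 := by
    by_cases h : (U e₁ y₀).1 = (U x y₀).1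
    exacts [⟨e₂, he₂, h ▸ hne.symm⟩, ⟨e₁, he₁, h⟩]
  refine snd_eq_of_cross_sub_eq_zero (hbase e he) (hbase x hx) hex <|
    cross_sub_eq_zero_of_ruled (a := U e y) hinj (hU.segment_subset_image2_right hP₂ hx hy hy₀)
      fun t ht => ?_
  rw [← hU.right x hx y hy y₀ hy₀ t (Ioo_subset_Icc_self ht),
    ← hU.right e he y hy y₀ hy₀ t (Ioo_subset_Icc_self ht)]
  exact hU.segment_subset_image2_left hP₁ hx he
    (hP₂ hy hy₀ ht.1.le (by linarith [ht.2]) (by ring))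

lemma exists_line_of_subsingleton {S : Set (ℝ × ℝ)} (hS : S.Subsingleton) :
    ∃ α, 0 < α ∧ ∃ β, ∀ p ∈ S, p.2 = -α * p.1 + β := by
  rcases hS.eq_empty_or_singleton with rfl | ⟨p, rfl⟩
  · exact ⟨1, one_pos, 0, by simp⟩
  · exact ⟨1, one_pos, p.2 + p.1, by simp⟩

lemma IsBiaffineOn.exists_line (hU : IsBiaffineOn P₁ P₂ U) (hP₁ : Convex ℝ P₁)
    (hP₂ : Convex ℝ P₂)
    (hS : IsAdversarial (image2 U P₁ P₂)) :
    ∃ α, 0 < α ∧ ∃ β, ∀ p ∈ image2 U P₁ P₂, p.2 = -α * p.1 + β := by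
  by_cases hleft : ∃ x ∈ P₁, ∃ x' ∈ P₁, ∃ y ∈ P₂, (U x y).1 ≠ (U x' y).1
  · obtain ⟨x, hx, x', hx', y, hy, hne⟩ := hleft
    exact hU.exists_line_of_fst_ne hP₁ hP₂ hS hx hx' hy hne
  by_cases hright : ∃ x ∈ P₁, ∃ y ∈ P₂, ∃ y' ∈ P₂, (U x y).1 ≠ (U x y').1
  · obtain ⟨x, hx, y, hy, y', hy', hne⟩ := hright
    rw [image2_swap] at hS ⊢
    exact hU.swap.exists_line_of_fst_ne hP₂ hP₁ hS hy hy' hx hne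
  push Not at hleft hright
  refine exists_line_of_subsingleton fun p hp q hq => hS.injOn_fst hp hq ?_
  obtain ⟨⟨x, hx, y, hy, rfl⟩, ⟨x', hx', y', hy', rfl⟩⟩ := And.intro hp hq
  exact (hleft x hx x' hx' y hy).trans (hright x' hx' y hy y' hy')

end Main

theorem stmt_2 {V₁ V₂ : Type*} [AddCommGroup V₁] [Module ℝ V₁] [AddCommGroup V₂] [Module ℝ V₂]
    (P₁ : Set V₁) (P₂ : Set V₂) (hP₁ : Convex ℝ P₁) (hP₂ : Convex ℝ P₂)
    (u₁ u₂ : V₁ → V₂ → ℝ)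
    (hbi : ∀ u ∈ ({u₁, u₂} : Set (V₁ → V₂ → ℝ)),
      (∀ x ∈ P₁, ∀ y ∈ P₁, ∀ z ∈ P₂, ∀ t : ℝ, t ∈ Set.Icc (0:ℝ) 1 →
        u (t • x + (1 - t) • y) z = t * u x z + (1 - t) * u y z) ∧
      (∀ x ∈ P₁, ∀ y ∈ P₂, ∀ z ∈ P₂, ∀ t : ℝ, t ∈ Set.Icc (0:ℝ) 1 →
        u x (t • y + (1 - t) • z) = t * u x y + (1 - t) * u x z))
    (hadv : ∀ σ₁ ∈ P₁, ∀ σ₂ ∈ P₂, ∀ τ₁ ∈ P₁, ∀ τ₂ ∈ P₂,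
      (u₁ σ₁ σ₂ ≥ u₁ τ₁ τ₂ ↔ u₂ σ₁ σ₂ ≤ u₂ τ₁ τ₂)) :
    ∃ α : ℝ, 0 < α ∧ ∃ β : ℝ, ∀ σ₁ ∈ P₁, ∀ σ₂ ∈ P₂, u₂ σ₁ σ₂ = -α * u₁ σ₁ σ₂ + β := by
  have hbiaffine : ∀ u ∈ ({u₁, u₂} : Set (V₁ → V₂ → ℝ)), IsBiaffineOn P₁ P₂ u :=
    fun u hu => ⟨(hbi u hu).1, (hbi u hu).2⟩
  have hU := (hbiaffine u₁ (by simp)).prodMk (hbiaffine u₂ (by simp))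
  obtain ⟨α, hα, β, hline⟩ := hU.exists_line hP₁ hP₂ <| by
    rintro _ ⟨x, hx, y, hy, rfl⟩ _ ⟨x', hx', y', hy', rfl⟩
    exact hadv x' hx' y' hy' x hx y hy
  exact ⟨α, hα, β, fun x hx y hy => hline _ (mem_image2_of_mem hx hy)⟩
end

section
/- Let P₁, P₂ be convex subsets of real vector spaces and u₁, u₂ : P₁ × P₂ → ℝ be bi-affine. The following are equivalent: (a) the game ⟨P₁, P₂, u₁, u₂⟩ is adversarial; (b) u₂ is a positive affine transformation of -u₁ (i.e., u₂ = α(-u₁) + β for some α > 0, β ∈ ℝ); (c) there exists a positive affine transformation v₁ of u₁ such that v₁ + u₂ = 0 identically on P₁ × P₂. -/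
set_option linter.unusedSectionVars false

private lemma aff2 {a b a' b' z z' : ℝ} (hzz : z ≠ z')
    (h1 : a * z + b = a' * z + b') (h2 : a * z' + b = a' * z' + b') (w : ℝ) :
    a * w + b = a' * w + b' := by
  have ha : a = a' := by
    have h3 : a * (z - z') = a' * (z - z') := by linear_combination h1 - h2
    exact mul_right_cancel₀ (sub_ne_zero.2 hzz) h3
  subst ha
  have hb : b = b' := by linarith
  rw [hb]

section main
variable {V₁ V₂ : Type*} [AddCommGroup V₁] [Module ℝ V₁] [AddCommGroup V₂] [Module ℝ V₂]
    {P₁ : Set V₁} {P₂ : Set V₂} {u₁ u₂ : V₁ → V₂ → ℝ}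

private lemma elemV (hP₂ : Convex ℝ P₂)
    (h1R : ∀ x ∈ P₁, ∀ y ∈ P₂, ∀ z ∈ P₂, ∀ t : ℝ, t ∈ Set.Icc (0:ℝ) 1 →
        u₁ x (t • y + (1 - t) • z) = t * u₁ x y + (1 - t) * u₁ x z)
    (h2R : ∀ x ∈ P₁, ∀ y ∈ P₂, ∀ z ∈ P₂, ∀ t : ℝ, t ∈ Set.Icc (0:ℝ) 1 →
        u₂ x (t • y + (1 - t) • z) = t * u₂ x y + (1 - t) * u₂ x z)
    (mono_eq : ∀ a₁ ∈ P₁, ∀ a₂ ∈ P₂, ∀ b₁ ∈ P₁, ∀ b₂ ∈ P₂,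
        u₁ a₁ a₂ = u₁ b₁ b₂ → u₂ a₁ a₂ = u₂ b₁ b₂)
    {a₁ : V₁} (ha₁ : a₁ ∈ P₁) {a₂ : V₂} (ha₂ : a₂ ∈ P₂) {b₂ : V₂} (hb₂ : b₂ ∈ P₂)
    (hz : u₁ a₁ b₂ < u₁ a₁ a₂) :
    ∃ k c : ℝ, k * u₁ a₁ a₂ + c = u₂ a₁ a₂ ∧ k * u₁ a₁ b₂ + c = u₂ a₁ b₂ ∧
      ∀ w₁ ∈ P₁, ∀ w₂ ∈ P₂, u₁ a₁ b₂ ≤ u₁ w₁ w₂ → u₁ w₁ w₂ ≤ u₁ a₁ a₂ →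
        u₂ w₁ w₂ = k * u₁ w₁ w₂ + c := by
  have hne : u₁ a₁ a₂ - u₁ a₁ b₂ ≠ 0 := by linarith
  refine ⟨(u₂ a₁ a₂ - u₂ a₁ b₂) / (u₁ a₁ a₂ - u₁ a₁ b₂),
    u₂ a₁ a₂ - (u₂ a₁ a₂ - u₂ a₁ b₂) / (u₁ a₁ a₂ - u₁ a₁ b₂) * u₁ a₁ a₂, by ring, ?_, ?_⟩
  · field_simp
    ring
  · intro w₁ hw₁ w₂ hw₂ hlo hhi
    set t := (u₁ w₁ w₂ - u₁ a₁ b₂) / (u₁ a₁ a₂ - u₁ a₁ b₂) with ht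
    have ht0 : 0 ≤ t := div_nonneg (by linarith) (by linarith)
    have ht1 : t ≤ 1 := by
      rw [ht, div_le_one (by linarith)]; linarith
    have hmem : t • a₂ + (1 - t) • b₂ ∈ P₂ := hP₂ ha₂ hb₂ ht0 (by linarith) (by ring)
    have htz : t * (u₁ a₁ a₂ - u₁ a₁ b₂) = u₁ w₁ w₂ - u₁ a₁ b₂ := div_mul_cancel₀ _ hne
    have hu1 : u₁ a₁ (t • a₂ + (1 - t) • b₂) = u₁ w₁ w₂ := by
      rw [h1R a₁ ha₁ a₂ ha₂ b₂ hb₂ t ⟨ht0, ht1⟩]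
      linear_combination htz
    have hu2 : u₂ w₁ w₂ = t * u₂ a₁ a₂ + (1 - t) * u₂ a₁ b₂ := by
      rw [← h2R a₁ ha₁ a₂ ha₂ b₂ hb₂ t ⟨ht0, ht1⟩]
      exact mono_eq w₁ hw₁ w₂ hw₂ a₁ ha₁ _ hmem hu1.symm
    rw [hu2, ht]
    field_simp
    ring

private lemma elemH (hP₁ : Convex ℝ P₁)
    (h1L : ∀ x ∈ P₁, ∀ y ∈ P₁, ∀ z ∈ P₂, ∀ t : ℝ, t ∈ Set.Icc (0:ℝ) 1 →
        u₁ (t • x + (1 - t) • y) z = t * u₁ x z + (1 - t) * u₁ y z)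
    (h2L : ∀ x ∈ P₁, ∀ y ∈ P₁, ∀ z ∈ P₂, ∀ t : ℝ, t ∈ Set.Icc (0:ℝ) 1 →
        u₂ (t • x + (1 - t) • y) z = t * u₂ x z + (1 - t) * u₂ y z)
    (mono_eq : ∀ a₁ ∈ P₁, ∀ a₂ ∈ P₂, ∀ b₁ ∈ P₁, ∀ b₂ ∈ P₂,
        u₁ a₁ a₂ = u₁ b₁ b₂ → u₂ a₁ a₂ = u₂ b₁ b₂)
    {a₁ : V₁} (ha₁ : a₁ ∈ P₁) {b₁ : V₁} (hb₁ : b₁ ∈ P₁) {c₂ : V₂} (hc₂ : c₂ ∈ P₂)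
    (hz : u₁ b₁ c₂ < u₁ a₁ c₂) :
    ∃ k c : ℝ, k * u₁ a₁ c₂ + c = u₂ a₁ c₂ ∧ k * u₁ b₁ c₂ + c = u₂ b₁ c₂ ∧
      ∀ w₁ ∈ P₁, ∀ w₂ ∈ P₂, u₁ b₁ c₂ ≤ u₁ w₁ w₂ → u₁ w₁ w₂ ≤ u₁ a₁ c₂ →
        u₂ w₁ w₂ = k * u₁ w₁ w₂ + c := by
  have hne : u₁ a₁ c₂ - u₁ b₁ c₂ ≠ 0 := by linarith
  refine ⟨(u₂ a₁ c₂ - u₂ b₁ c₂) / (u₁ a₁ c₂ - u₁ b₁ c₂),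
    u₂ a₁ c₂ - (u₂ a₁ c₂ - u₂ b₁ c₂) / (u₁ a₁ c₂ - u₁ b₁ c₂) * u₁ a₁ c₂, by ring, ?_, ?_⟩
  · field_simp
    ring
  · intro w₁ hw₁ w₂ hw₂ hlo hhi
    set t := (u₁ w₁ w₂ - u₁ b₁ c₂) / (u₁ a₁ c₂ - u₁ b₁ c₂) with ht
    have ht0 : 0 ≤ t := div_nonneg (by linarith) (by linarith)
    have ht1 : t ≤ 1 := by
      rw [ht, div_le_one (by linarith)]; linarith
    have hmem : t • a₁ + (1 - t) • b₁ ∈ P₁ := hP₁ ha₁ hb₁ ht0 (by linarith) (by ring)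
    have htz : t * (u₁ a₁ c₂ - u₁ b₁ c₂) = u₁ w₁ w₂ - u₁ b₁ c₂ := div_mul_cancel₀ _ hne
    have hu1 : u₁ (t • a₁ + (1 - t) • b₁) c₂ = u₁ w₁ w₂ := by
      rw [h1L a₁ ha₁ b₁ hb₁ c₂ hc₂ t ⟨ht0, ht1⟩]
      linear_combination htz
    have hu2 : u₂ w₁ w₂ = t * u₂ a₁ c₂ + (1 - t) * u₂ b₁ c₂ := by
      rw [← h2L a₁ ha₁ b₁ hb₁ c₂ hc₂ t ⟨ht0, ht1⟩]
      exact mono_eq w₁ hw₁ w₂ hw₂ _ hmem c₂ hc₂ hu1.symm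
    rw [hu2, ht]
    field_simp
    ring

private lemma square (hP₁ : Convex ℝ P₁) (hP₂ : Convex ℝ P₂)
    (h1L : ∀ x ∈ P₁, ∀ y ∈ P₁, ∀ z ∈ P₂, ∀ t : ℝ, t ∈ Set.Icc (0:ℝ) 1 →
        u₁ (t • x + (1 - t) • y) z = t * u₁ x z + (1 - t) * u₁ y z)
    (h1R : ∀ x ∈ P₁, ∀ y ∈ P₂, ∀ z ∈ P₂, ∀ t : ℝ, t ∈ Set.Icc (0:ℝ) 1 →
        u₁ x (t • y + (1 - t) • z) = t * u₁ x y + (1 - t) * u₁ x z)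
    (h2L : ∀ x ∈ P₁, ∀ y ∈ P₁, ∀ z ∈ P₂, ∀ t : ℝ, t ∈ Set.Icc (0:ℝ) 1 →
        u₂ (t • x + (1 - t) • y) z = t * u₂ x z + (1 - t) * u₂ y z)
    (h2R : ∀ x ∈ P₁, ∀ y ∈ P₂, ∀ z ∈ P₂, ∀ t : ℝ, t ∈ Set.Icc (0:ℝ) 1 →
        u₂ x (t • y + (1 - t) • z) = t * u₂ x y + (1 - t) * u₂ x z)
    (mono_eq : ∀ a₁ ∈ P₁, ∀ a₂ ∈ P₂, ∀ b₁ ∈ P₁, ∀ b₂ ∈ P₂,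
        u₁ a₁ a₂ = u₁ b₁ b₂ → u₂ a₁ a₂ = u₂ b₁ b₂)
    {a₁ : V₁} (ha₁ : a₁ ∈ P₁) {a₂ : V₂} (ha₂ : a₂ ∈ P₂)
    {b₁ : V₁} (hb₁ : b₁ ∈ P₁) {b₂ : V₂} (hb₂ : b₂ ∈ P₂)
    (hz : u₁ b₁ b₂ < u₁ a₁ a₂) :
    ∃ k c : ℝ, k * u₁ a₁ a₂ + c = u₂ a₁ a₂ ∧ k * u₁ b₁ b₂ + c = u₂ b₁ b₂ ∧
      ∀ w₁ ∈ P₁, ∀ w₂ ∈ P₂, u₁ b₁ b₂ ≤ u₁ w₁ w₂ → u₁ w₁ w₂ ≤ u₁ a₁ a₂ →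
        u₂ w₁ w₂ = k * u₁ w₁ w₂ + c := by
  rcases le_or_gt (u₁ a₁ b₂) (u₁ b₁ b₂) with hCY | hYC
  · -- C ≤ Y : elemV(a, r) covers [C, X] ⊇ [Y, X]
    obtain ⟨k, c, pX, pC, cov⟩ := elemV hP₂ h1R h2R mono_eq ha₁ ha₂ hb₂ (by linarith)
    exact ⟨k, c, pX, (cov b₁ hb₁ b₂ hb₂ hCY hz.le).symm, fun w₁ hw₁ w₂ hw₂ hlo hhi =>
      cov w₁ hw₁ w₂ hw₂ (by linarith) hhi⟩
  rcases le_or_gt (u₁ a₁ a₂) (u₁ a₁ b₂) with hXC | hCX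
  · -- X ≤ C : elemH(r, b) covers [Y, C] ⊇ [Y, X]
    obtain ⟨k, c, pC, pY, cov⟩ := elemH hP₁ h1L h2L mono_eq ha₁ hb₁ hb₂ (by linarith)
    exact ⟨k, c, (cov a₁ ha₁ a₂ ha₂ hz.le hXC).symm, pY, fun w₁ hw₁ w₂ hw₂ hlo hhi =>
      cov w₁ hw₁ w₂ hw₂ hlo (by linarith)⟩
  · -- Y < C < X
    obtain ⟨k₁, c₁, p1X, p1C, cov₁⟩ := elemV hP₂ h1R h2R mono_eq ha₁ ha₂ hb₂ hCX
    obtain ⟨k₂, c₂, p2C, p2Y, cov₂⟩ := elemH hP₁ h1L h2L mono_eq ha₁ hb₁ hb₂ hYC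
    set X := u₁ a₁ a₂
    set Y := u₁ b₁ b₂
    set C := u₁ a₁ b₂
    set D := u₁ b₁ a₂ with hD
    set s := (C - Y) / ((C - Y) + |D - Y| + 1) with hs
    have habs : (0:ℝ) ≤ |D - Y| := abs_nonneg _
    have hden : (0:ℝ) < (C - Y) + |D - Y| + 1 := by linarith
    have hs0 : 0 < s := div_pos (by linarith) hden
    have hs1 : s < 1 := by
      rw [hs, div_lt_one hden]; linarith
    have hmS : s • a₂ + (1 - s) • b₂ ∈ P₂ := hP₂ ha₂ hb₂ hs0.le (by linarith) (by ring)
    have hA : u₁ a₁ (s • a₂ + (1 - s) • b₂) = s * X + (1 - s) * C :=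
      h1R a₁ ha₁ a₂ ha₂ b₂ hb₂ s ⟨hs0.le, hs1.le⟩
    have hB : u₁ b₁ (s • a₂ + (1 - s) • b₂) = s * D + (1 - s) * Y :=
      h1R b₁ hb₁ a₂ ha₂ b₂ hb₂ s ⟨hs0.le, hs1.le⟩
    have hsabs : s * |D - Y| < C - Y := by
      rw [hs, div_mul_eq_mul_div, div_lt_iff₀ hden]
      nlinarith
    have hsD : s * (D - Y) ≤ s * |D - Y| :=
      mul_le_mul_of_nonneg_left (le_abs_self _) hs0.le
    have hBC : u₁ b₁ (s • a₂ + (1 - s) • b₂) < C := by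
      rw [hB]; nlinarith
    have hCA : C < u₁ a₁ (s • a₂ + (1 - s) • b₂) := by
      rw [hA]; nlinarith
    have hAX : u₁ a₁ (s • a₂ + (1 - s) • b₂) < X := by
      rw [hA]; nlinarith
    obtain ⟨k₃, c₃, p3A, p3B, cov₃⟩ :=
      elemH hP₁ h1L h2L mono_eq ha₁ hb₁ hmS (by linarith)
    -- identify line 1 with line 3 : sample at C (point (a1,b2)) and at A (point (a1,mS))
    have e13 : ∀ w, k₁ * w + c₁ = k₃ * w + c₃ := fun w =>
      aff2 (z := C) (z' := u₁ a₁ (s • a₂ + (1 - s) • b₂)) (ne_of_lt hCA)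
        (by linarith [p1C, cov₃ a₁ ha₁ b₂ hb₂ hBC.le hCA.le])
        (by linarith [p3A, cov₁ a₁ ha₁ _ hmS hCA.le hAX.le]) w
    -- identify line 2 with line 3 : sample at C and at z* (a point on the segment (a1,b2)-(b1,b2))
    set B := u₁ b₁ (s • a₂ + (1 - s) • b₂) with hBdef
    set zs := (max Y B + C) / 2 with hzs
    have hmaxC : max Y B < C := max_lt hYC hBC
    have hzsC : zs < C := by
      have h1 := le_max_left Y B
      have h2 := le_max_right Y B
      simp only [hzs]; linarith
    have hYzs : Y ≤ zs := by
      have h1 := le_max_left Y B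
      simp only [hzs]; linarith
    have hBzs : B ≤ zs := by
      have h2 := le_max_right Y B
      simp only [hzs]; linarith
    set t := (zs - Y) / (C - Y) with htdef
    have hCY' : (0:ℝ) < C - Y := by linarith
    have ht0 : 0 ≤ t := div_nonneg (by linarith) hCY'.le
    have ht1 : t ≤ 1 := by
      rw [htdef, div_le_one hCY']; linarith
    have hmemc : t • a₁ + (1 - t) • b₁ ∈ P₁ := hP₁ ha₁ hb₁ ht0 (by linarith) (by ring)
    have htz : t * (C - Y) = zs - Y := div_mul_cancel₀ _ (ne_of_gt hCY')
    have hu : u₁ (t • a₁ + (1 - t) • b₁) b₂ = zs := by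
      rw [h1L a₁ ha₁ b₁ hb₁ b₂ hb₂ t ⟨ht0, ht1⟩]
      linear_combination htz
    have hc2 : u₂ (t • a₁ + (1 - t) • b₁) b₂ = k₂ * zs + c₂ := by
      have := cov₂ _ hmemc b₂ hb₂ (by rw [hu]; exact hYzs) (by rw [hu]; exact hzsC.le)
      rwa [hu] at this
    have hc3 : u₂ (t • a₁ + (1 - t) • b₁) b₂ = k₃ * zs + c₃ := by
      have := cov₃ _ hmemc b₂ hb₂ (by rw [hu]; exact hBzs) (by rw [hu]; linarith)
      rwa [hu] at this
    have e23 : ∀ w, k₂ * w + c₂ = k₃ * w + c₃ := fun w =>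
      aff2 (z := C) (z' := zs) hzsC.ne'
        (by linarith [p2C, cov₃ a₁ ha₁ b₂ hb₂ hBC.le hCA.le])
        (by linarith [hc2, hc3]) w
    refine ⟨k₁, c₁, p1X, by linarith [e13 Y, e23 Y, p2Y], ?_⟩
    intro w₁ hw₁ w₂ hw₂ hlo hhi
    rcases le_or_gt C (u₁ w₁ w₂) with hc | hc
    · exact cov₁ w₁ hw₁ w₂ hw₂ hc hhi
    · have := cov₂ w₁ hw₁ w₂ hw₂ hlo hc.le
      linarith [e13 (u₁ w₁ w₂), e23 (u₁ w₁ w₂)]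
end main
theorem stmt_3 {V₁ V₂ : Type*} [AddCommGroup V₁] [Module ℝ V₁] [AddCommGroup V₂] [Module ℝ V₂]
    (P₁ : Set V₁) (P₂ : Set V₂) (hP₁ : Convex ℝ P₁) (hP₂ : Convex ℝ P₂)
    (u₁ u₂ : V₁ → V₂ → ℝ)
    (hbi : ∀ u ∈ ({u₁, u₂} : Set (V₁ → V₂ → ℝ)),
      (∀ x ∈ P₁, ∀ y ∈ P₁, ∀ z ∈ P₂, ∀ t : ℝ, t ∈ Set.Icc (0:ℝ) 1 →
        u (t • x + (1 - t) • y) z = t * u x z + (1 - t) * u y z) ∧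
      (∀ x ∈ P₁, ∀ y ∈ P₂, ∀ z ∈ P₂, ∀ t : ℝ, t ∈ Set.Icc (0:ℝ) 1 →
        u x (t • y + (1 - t) • z) = t * u x y + (1 - t) * u x z)) :
    List.TFAE
      [(∀ σ₁ ∈ P₁, ∀ σ₂ ∈ P₂, ∀ τ₁ ∈ P₁, ∀ τ₂ ∈ P₂,
          (u₁ σ₁ σ₂ ≥ u₁ τ₁ τ₂ ↔ u₂ σ₁ σ₂ ≤ u₂ τ₁ τ₂)),
       (∃ α : ℝ, 0 < α ∧ ∃ β : ℝ, ∀ σ₁ ∈ P₁, ∀ σ₂ ∈ P₂,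
          u₂ σ₁ σ₂ = α * (-u₁ σ₁ σ₂) + β),
       (∃ α : ℝ, 0 < α ∧ ∃ β : ℝ, ∀ σ₁ ∈ P₁, ∀ σ₂ ∈ P₂,
          (α * u₁ σ₁ σ₂ + β) + u₂ σ₁ σ₂ = 0)] := by
  obtain ⟨h1L, h1R⟩ := hbi u₁ (Set.mem_insert _ _)
  obtain ⟨h2L, h2R⟩ := hbi u₂ (Set.mem_insert_of_mem _ rfl)
  tfae_have 2 → 3 := by
    rintro ⟨α, hα, β, h⟩
    exact ⟨α, hα, -β, fun σ₁ h₁ σ₂ h₂ => by linear_combination h σ₁ h₁ σ₂ h₂⟩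
  tfae_have 3 → 2 := by
    rintro ⟨α, hα, β, h⟩
    exact ⟨α, hα, -β, fun σ₁ h₁ σ₂ h₂ => by linear_combination h σ₁ h₁ σ₂ h₂⟩
  tfae_have 2 → 1 := by
    rintro ⟨α, hα, β, h⟩
    intro σ₁ hσ₁ σ₂ hσ₂ τ₁ hτ₁ τ₂ hτ₂
    rw [h σ₁ hσ₁ σ₂ hσ₂, h τ₁ hτ₁ τ₂ hτ₂]
    constructor
    · intro hh
      nlinarith
    · intro hh
      nlinarith
  tfae_have 1 → 2 := by
    intro adv
    have mono_eq : ∀ a₁ ∈ P₁, ∀ a₂ ∈ P₂, ∀ b₁ ∈ P₁, ∀ b₂ ∈ P₂,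
        u₁ a₁ a₂ = u₁ b₁ b₂ → u₂ a₁ a₂ = u₂ b₁ b₂ := by
      intro a₁ ha₁ a₂ ha₂ b₁ hb₁ b₂ hb₂ h
      exact le_antisymm ((adv a₁ ha₁ a₂ ha₂ b₁ hb₁ b₂ hb₂).1 h.ge)
        ((adv b₁ hb₁ b₂ hb₂ a₁ ha₁ a₂ ha₂).1 h.le)
    by_cases hex : ∃ p₁ ∈ P₁, ∃ p₂ ∈ P₂, ∃ q₁ ∈ P₁, ∃ q₂ ∈ P₂, u₁ q₁ q₂ < u₁ p₁ p₂
    · obtain ⟨p₁, hp₁, p₂, hp₂, q₁, hq₁, q₂, hq₂, hxy⟩ := hex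
      have hv : u₂ p₁ p₂ < u₂ q₁ q₂ := by
        by_contra hc
        push_neg at hc
        have := (adv q₁ hq₁ q₂ hq₂ p₁ hp₁ p₂ hp₂).2 hc
        exact absurd this (not_le.2 hxy)
      set α := (u₂ q₁ q₂ - u₂ p₁ p₂) / (u₁ p₁ p₂ - u₁ q₁ q₂) with hαdef
      have hαpos : 0 < α := div_pos (by linarith) (by linarith)
      have hαxy : α * (u₁ p₁ p₂ - u₁ q₁ q₂) = u₂ q₁ q₂ - u₂ p₁ p₂ :=
        div_mul_cancel₀ _ (sub_ne_zero.2 (ne_of_gt hxy))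
      refine ⟨α, hαpos, u₂ p₁ p₂ + α * u₁ p₁ p₂, ?_⟩
      intro w₁ hw₁ w₂ hw₂
      have pinp : (-α) * u₁ p₁ p₂ + (u₂ p₁ p₂ + α * u₁ p₁ p₂) = u₂ p₁ p₂ := by ring
      have pinq : (-α) * u₁ q₁ q₂ + (u₂ p₁ p₂ + α * u₁ p₁ p₂) = u₂ q₁ q₂ := by
        linear_combination hαxy
      have hne : u₁ p₁ p₂ ≠ u₁ q₁ q₂ := ne_of_gt hxy
      rcases le_or_gt (u₁ w₁ w₂) (u₁ p₁ p₂) with hwx | hwx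
      · rcases le_or_gt (u₁ q₁ q₂) (u₁ w₁ w₂) with hwy | hwy
        · obtain ⟨k, c, pX, pY, cov⟩ :=
            square hP₁ hP₂ h1L h1R h2L h2R mono_eq hp₁ hp₂ hq₁ hq₂ hxy
          have hw := cov w₁ hw₁ w₂ hw₂ hwy hwx
          have hl : k * u₁ w₁ w₂ + c
              = (-α) * u₁ w₁ w₂ + (u₂ p₁ p₂ + α * u₁ p₁ p₂) :=
            aff2 hne (by linarith) (by linarith) (u₁ w₁ w₂)
          linear_combination hw + hl
        · obtain ⟨k, c, pX, pZ, cov⟩ :=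
            square hP₁ hP₂ h1L h1R h2L h2R mono_eq hp₁ hp₂ hw₁ hw₂ (lt_trans hwy hxy)
          have hq := cov q₁ hq₁ q₂ hq₂ hwy.le hxy.le
          have hl : k * u₁ w₁ w₂ + c
              = (-α) * u₁ w₁ w₂ + (u₂ p₁ p₂ + α * u₁ p₁ p₂) :=
            aff2 hne (by linarith) (by linarith) (u₁ w₁ w₂)
          linear_combination hl - pZ
      · obtain ⟨k, c, pZ, pY, cov⟩ :=
          square hP₁ hP₂ h1L h1R h2L h2R mono_eq hw₁ hw₂ hq₁ hq₂ (lt_trans hxy hwx)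
        have hp := cov p₁ hp₁ p₂ hp₂ hxy.le hwx.le
        have hl : k * u₁ w₁ w₂ + c
            = (-α) * u₁ w₁ w₂ + (u₂ p₁ p₂ + α * u₁ p₁ p₂) :=
          aff2 hne (by linarith) (by linarith) (u₁ w₁ w₂)
        linear_combination hl - pZ
    · push_neg at hex
      by_cases hS : P₁.Nonempty ∧ P₂.Nonempty
      · obtain ⟨⟨p₁, hp₁⟩, ⟨p₂, hp₂⟩⟩ := hS
        refine ⟨1, one_pos, u₂ p₁ p₂ + u₁ p₁ p₂, ?_⟩
        intro w₁ hw₁ w₂ hw₂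
        have he : u₁ w₁ w₂ = u₁ p₁ p₂ :=
          le_antisymm (hex w₁ hw₁ w₂ hw₂ p₁ hp₁ p₂ hp₂) (hex p₁ hp₁ p₂ hp₂ w₁ hw₁ w₂ hw₂)
        have h2 := mono_eq w₁ hw₁ w₂ hw₂ p₁ hp₁ p₂ hp₂ he
        linear_combination h2 + he
      · refine ⟨1, one_pos, 0, ?_⟩
        intro σ₁ hσ₁ σ₂ hσ₂
        exact absurd ⟨⟨σ₁, hσ₁⟩, ⟨σ₂, hσ₂⟩⟩ hS
  tfae_finish
end

section
/- Let ξ₁, ξ₂ : [0,1] × [0,1] → ℝ be continuous functions. Suppose that for every pair of Borel probability measures p₁, p₂ on [0,1] that are absolutely continuous with respect to Lebesgue measure, and every such pair q₁, q₂, we have ∫∫ξ₁ d(p₁⊗p₂) ≥ ∫∫ξ₁ d(q₁⊗q₂) if and only if ∫∫ξ₂ d(p₁⊗p₂) ≤ ∫∫ξ₂ d(q₁⊗q₂). Then there exist α > 0 and β ∈ ℝ such that ξ₂(x,y) = -α·ξ₁(x,y) + β for all (x,y) ∈ [0,1]². -/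
/-!
Mixing two profiles `P` and `Q` coordinatewise with weights `(t, s) ∈ [0,1]²` makes both expected
payoffs biaffine in `(t, s)`. Reversed rankings put the level sets of the first payoff inside those
of the second, so their gradients are parallel and, on this family, the second payoff is a negative
affine function of the first. The diagonal `t = s` joins `P` to `Q`, so by the intermediate value
theorem the lines obtained from different pairs agree, giving `payoff ξ₂ = -α payoff ξ₁ + β` on
all profiles.
Testing against uniform distributions on small rectangles turns this into `ξ₂ = -α ξ₁ + β`
pointwise, by continuity.
-/

open MeasureTheory Set unitInterval ProbabilityTheory
open scoped NNReal BoundedContinuousFunction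

namespace MeasureTheory.Measure

variable {α β : Type*} [MeasurableSpace α] [MeasurableSpace β]

noncomputable def mix (t : ℝ) (μ ν : Measure α) : Measure α :=
  (1 - t).toNNReal • μ + t.toNNReal • ν

variable {t : ℝ} {μ ν : Measure α}

@[simp] lemma mix_zero (μ ν : Measure α) : mix 0 μ ν = μ := by simp [mix]

@[simp] lemma mix_one (μ ν : Measure α) : mix 1 μ ν = ν := by simp [mix]

instance [IsFiniteMeasure μ] [IsFiniteMeasure ν] : IsFiniteMeasure (mix t μ ν) := by
  unfold mix; infer_instance

lemma isProbabilityMeasure_mix (ht : t ∈ I) [IsProbabilityMeasure μ] [IsProbabilityMeasure ν] :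
    IsProbabilityMeasure (mix t μ ν) := by
  constructor
  simp only [mix, add_apply, smul_apply, measure_univ, ENNReal.smul_def, smul_eq_mul, mul_one]
  rw [← ENNReal.coe_add, ← Real.toNNReal_add (by linarith [ht.2]) ht.1]
  simp

lemma AbsolutelyContinuous.mix {ρ : Measure α} (hμ : μ ≪ ρ) (hν : ν ≪ ρ) : mix t μ ν ≪ ρ :=
  (hμ.smul_left _).add_left (hν.smul_left _)

lemma integral_mix {E : Type*} [NormedAddCommGroup E] [NormedSpace ℝ E] {f : α → E}
    (ht : t ∈ I) (hμ : Integrable f μ) (hν : Integrable f ν) :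
    ∫ x, f x ∂(mix t μ ν) = (1 - t) • ∫ x, f x ∂μ + t • ∫ x, f x ∂ν := by
  rw [mix, integral_add_measure (hμ.smul_measure_nnreal) (hν.smul_measure_nnreal),
    integral_smul_nnreal_measure, integral_smul_nnreal_measure, NNReal.smul_def,
    NNReal.smul_def, Real.coe_toNNReal _ (sub_nonneg.2 ht.2), Real.coe_toNNReal _ ht.1]

lemma mix_prod (ρ : Measure β) [SFinite μ] [SFinite ν] [SFinite ρ] :
    (mix t μ ν).prod ρ = mix t (μ.prod ρ) (ν.prod ρ) := by
  simp [mix, add_prod, prod_smul_left]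

lemma prod_mix (ρ : Measure β) [SFinite μ] [SFinite ν] [SFinite ρ] :
    ρ.prod (mix t μ ν) = mix t (ρ.prod μ) (ρ.prod ν) := by
  simp [mix, prod_add, prod_smul_right]

lemma ae_mem_prod {ν : Measure β} [SFinite μ] [SFinite ν] {s : Set α} {t : Set β}
    (hs : ∀ᵐ x ∂μ, x ∈ s) (ht : ∀ᵐ y ∂ν, y ∈ t) : ∀ᵐ z ∂μ.prod ν, z ∈ s ×ˢ t := by
  filter_upwards [quasiMeasurePreserving_fst.ae hs, quasiMeasurePreserving_snd.ae ht]
    with z h₁ h₂ using ⟨h₁, h₂⟩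

end MeasureTheory.Measure

section RankReversal

variable {X : Type*}

def RankReversingOn (s : Set X) (f g : X → ℝ) : Prop :=
  ∀ x ∈ s, ∀ y ∈ s, f x ≤ f y ↔ g y ≤ g x

def NegAffineOn (s : Set X) (f g : X → ℝ) : Prop :=
  ∃ α > 0, ∃ β, ∀ x ∈ s, g x = -α * f x + β

namespace RankReversingOn

variable {s : Set X} {f g : X → ℝ}

lemma eq_of_eq (h : RankReversingOn s f g) {x y : X} (hx : x ∈ s) (hy : y ∈ s)
    (hxy : f x = f y) : g x = g y :=
  le_antisymm ((h y hy x hx).1 hxy.ge) ((h x hx y hy).1 hxy.le)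

lemma lt_of_lt (h : RankReversingOn s f g) {x y : X} (hx : x ∈ s) (hy : y ∈ s)
    (hxy : f x < f y) : g y < g x :=
  lt_of_not_ge fun hle => hxy.not_ge ((h y hy x hx).2 hle)

lemma negAffineOn_of_eq_mul_add (h : RankReversingOn s f g) {c β : ℝ}
    (hline : ∀ x ∈ s, g x = c * f x + β) : NegAffineOn s f g := by
  by_cases hc : c < 0
  · exact ⟨-c, neg_pos.2 hc, β, fun x hx => by rw [hline x hx, neg_neg]⟩
  rcases s.eq_empty_or_nonempty with rfl | ⟨x₀, hx₀⟩
  · exact ⟨1, one_pos, 0, fun _ => False.elim⟩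
  have hconst : ∀ x ∈ s, f x = f x₀ := by
    intro x hx
    by_contra hne
    rcases lt_or_gt_of_ne hne with hlt | hlt
    · have := h.lt_of_lt hx hx₀ hlt
      rw [hline x hx, hline x₀ hx₀] at this
      nlinarith
    · have := h.lt_of_lt hx₀ hx hlt
      rw [hline x hx, hline x₀ hx₀] at this
      nlinarith
  refine ⟨1, one_pos, (c + 1) * f x₀ + β, fun x hx => ?_⟩
  rw [hline x hx, hconst x hx]
  ring

end RankReversingOn

lemma NegAffineOn.of_forall_uIcc {s : Set X} {f g : X → ℝ}
    (h : ∀ x ∈ s, ∀ y ∈ s, NegAffineOn {z ∈ s | f z ∈ uIcc (f x) (f y)} f g) :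
    NegAffineOn s f g := by
  by_cases hf : ∃ x ∈ s, ∃ y ∈ s, f x < f y
  swap
  · push Not at hf
    rcases s.eq_empty_or_nonempty with rfl | ⟨x₀, hx₀⟩
    · exact ⟨1, one_pos, 0, fun _ => False.elim⟩
    obtain ⟨α, hα, β, hline⟩ := h x₀ hx₀ x₀ hx₀
    refine ⟨α, hα, β, fun z hz => hline z ⟨hz, ?_⟩⟩
    rw [uIcc_self, mem_singleton_iff]
    exact le_antisymm (hf x₀ hx₀ z hz) (hf z hz x₀ hx₀)
  obtain ⟨x, hx, y, hy, hxy⟩ := hf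
  obtain ⟨α, hα, β, hline⟩ := h x hx y hy
  refine ⟨α, hα, β, fun z hz => ?_⟩
  -- the pair among `x, y, z` spanning the widest interval carries a line through all three
  obtain ⟨a, ha, b, hb, hxab, hyab, hzab⟩ : ∃ a ∈ s, ∃ b ∈ s, f x ∈ uIcc (f a) (f b) ∧
      f y ∈ uIcc (f a) (f b) ∧ f z ∈ uIcc (f a) (f b) := by
    rcases le_or_gt (f x) (f z) with hxz | hzx
    · rcases le_or_gt (f z) (f y) with hzy | hyz
      · exact ⟨x, hx, y, hy, left_mem_uIcc, right_mem_uIcc, uIcc_of_le hxy.le ▸ ⟨hxz, hzy⟩⟩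
      · exact ⟨x, hx, z, hz, left_mem_uIcc, uIcc_of_le hxz ▸ ⟨hxy.le, hyz.le⟩, right_mem_uIcc⟩
    · exact ⟨z, hz, y, hy, uIcc_of_le (hzx.trans hxy).le ▸ ⟨hzx.le, hxy.le⟩, right_mem_uIcc,
        left_mem_uIcc⟩
  obtain ⟨α', -, β', hline'⟩ := h a ha b hb
  have ex := (hline x ⟨hx, left_mem_uIcc⟩).symm.trans (hline' x ⟨hx, hxab⟩)
  have ey := (hline y ⟨hy, right_mem_uIcc⟩).symm.trans (hline' y ⟨hy, hyab⟩)
  have hα' : α' = α := by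
    have : (α' - α) * (f y - f x) = 0 := by linear_combination ey - ex
    linarith [(mul_eq_zero.1 this).resolve_right (sub_ne_zero.2 hxy.ne')]
  subst hα'
  rw [hline' z ⟨hz, hzab⟩]
  linarith

end RankReversal

section Biaffine

variable {F₁ F₂ : ℝ × ℝ → ℝ} {A₁ B₁ C₁ D₁ A₂ B₂ C₂ D₂ : ℝ}
  (hF₁ : ∀ t ∈ I, ∀ s ∈ I, F₁ (t, s) = A₁ + B₁ * t + C₁ * s + D₁ * (t * s))
  (hF₂ : ∀ t ∈ I, ∀ s ∈ I, F₂ (t, s) = A₂ + B₂ * t + C₂ * s + D₂ * (t * s))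
  (h : ∀ z ∈ I ×ˢ I, ∀ w ∈ I ×ˢ I, F₁ z = F₁ w → F₂ z = F₂ w)
include hF₁ hF₂ h

/- `(B + D s, C + D t)` is the gradient at `(t, s)`. As the level sets of `F₁` lie in those of
`F₂`, the gradients are parallel; exactly, the steps `ε c` in `t` and `ε b` in `s` change `F₁`
by the same amount, hence also `F₂`. -/
lemma biaffine_gradient_parallel {t s : ℝ} (ht : t ∈ Icc (1/4 : ℝ) (3/4))
    (hs : s ∈ Icc (1/4 : ℝ) (3/4)) :
    (B₂ + D₂ * s) * (C₁ + D₁ * t) = (B₁ + D₁ * s) * (C₂ + D₂ * t) := by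
  set b := B₁ + D₁ * s
  set c := C₁ + D₁ * t
  set ε := 1 / (4 * (|b| + |c| + 1))
  have hε : 0 < ε := by positivity
  have hεbc : ε * (|b| + |c|) ≤ 1 / 4 := by
    rw [div_mul_eq_mul_div, one_mul, div_le_iff₀ (by positivity)]
    linarith
  have hεb := abs_le.1 (show |ε * b| ≤ 1 / 4 by
    rw [abs_mul, abs_of_pos hε]; nlinarith [abs_nonneg c])
  have hεc := abs_le.1 (show |ε * c| ≤ 1 / 4 by
    rw [abs_mul, abs_of_pos hε]; nlinarith [abs_nonneg b])
  have ht' : t ∈ I := ⟨by linarith [ht.1], by linarith [ht.2]⟩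
  have hs' : s ∈ I := ⟨by linarith [hs.1], by linarith [hs.2]⟩
  have htc : t + ε * c ∈ I := ⟨by linarith [ht.1], by linarith [ht.2]⟩
  have hsb : s + ε * b ∈ I := ⟨by linarith [hs.1], by linarith [hs.2]⟩
  have hF := h (t + ε * c, s) ⟨htc, hs'⟩ (t, s + ε * b) ⟨ht', hsb⟩
    (by rw [hF₁ _ htc _ hs', hF₁ _ ht' _ hsb]; ring)
  rw [hF₂ _ htc _ hs', hF₂ _ ht' _ hsb] at hF
  have : ε * ((B₂ + D₂ * s) * c - b * (C₂ + D₂ * t)) = 0 := by linear_combination hF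
  linear_combination (mul_eq_zero.1 this).resolve_left hε.ne'

lemma exists_eq_mul_add_of_biaffine : ∃ c β : ℝ, ∀ z ∈ I ×ˢ I, F₂ z = c * F₁ z + β := by
  have g₀ := biaffine_gradient_parallel hF₁ hF₂ h (t := 1/4) (s := 1/4) (by norm_num) (by norm_num)
  have g₁ := biaffine_gradient_parallel hF₁ hF₂ h (t := 3/4) (s := 1/4) (by norm_num) (by norm_num)
  have g₂ := biaffine_gradient_parallel hF₁ hF₂ h (t := 1/4) (s := 3/4) (by norm_num) (by norm_num)
  have hBC : B₂ * C₁ = B₁ * C₂ := by linear_combination (4 * g₀ - g₁ - g₂) / 2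
  have hBD : B₂ * D₁ = B₁ * D₂ := by linear_combination 2 * g₁ - 2 * g₀
  have hCD : C₂ * D₁ = C₁ * D₂ := by linear_combination 2 * g₀ - 2 * g₂
  obtain ⟨c, hB, hC, hD⟩ : ∃ c, B₂ = c * B₁ ∧ C₂ = c * C₁ ∧ D₂ = c * D₁ := by
    by_cases hB₁ : B₁ ≠ 0
    · exact ⟨B₂ / B₁, by field_simp, by field_simp; linear_combination -hBC,
        by field_simp; linear_combination -hBD⟩
    by_cases hC₁ : C₁ ≠ 0
    · exact ⟨C₂ / C₁, by field_simp; linear_combination hBC, by field_simp,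
        by field_simp; linear_combination -hCD⟩
    by_cases hD₁ : D₁ ≠ 0
    · exact ⟨D₂ / D₁, by field_simp; linear_combination hBD, by field_simp; linear_combination hCD,
        by field_simp⟩
    push Not at hB₁ hC₁ hD₁
    have h01 : (0 : ℝ) ∈ I := unitInterval.zero_mem
    have h11 : (1 : ℝ) ∈ I := unitInterval.one_mem
    have e₁₀ := h (1, 0) ⟨h11, h01⟩ (0, 0) ⟨h01, h01⟩ (by simp [hF₁, hB₁, hC₁, hD₁])
    have e₀₁ := h (0, 1) ⟨h01, h11⟩ (0, 0) ⟨h01, h01⟩ (by simp [hF₁, hB₁, hC₁, hD₁])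
    have e₁₁ := h (1, 1) ⟨h11, h11⟩ (0, 0) ⟨h01, h01⟩ (by simp [hF₁, hB₁, hC₁, hD₁])
    simp only [hF₂ _ h01 _ h01, hF₂ _ h11 _ h01, hF₂ _ h01 _ h11, hF₂ _ h11 _ h11] at e₁₀ e₀₁ e₁₁
    exact ⟨0, by linarith, by linarith, by linarith⟩
  refine ⟨c, A₂ - c * A₁, fun ⟨t, s⟩ ⟨ht, hs⟩ => ?_⟩
  rw [hF₁ t ht s hs, hF₂ t ht s hs, hB, hC, hD]
  ring

end Biaffine

structure IsMixedStrategy (p : Measure ℝ) : Prop where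
  isProbabilityMeasure : IsProbabilityMeasure p
  absolutelyContinuous : p ≪ volume.restrict I

def mixedProfiles : Set (Measure ℝ × Measure ℝ) :=
  {P | IsMixedStrategy P.1 ∧ IsMixedStrategy P.2}

noncomputable def payoff (f : ℝ × ℝ → ℝ) (P : Measure ℝ × Measure ℝ) : ℝ :=
  ∫ z, f z ∂(P.1.prod P.2)

lemma IsMixedStrategy.ae_mem {p : Measure ℝ} (hp : IsMixedStrategy p) : ∀ᵐ x ∂p, x ∈ I :=
  hp.absolutelyContinuous.ae_le (ae_restrict_mem measurableSet_Icc)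

namespace mixedProfiles

variable {P : Measure ℝ × Measure ℝ} (hP : P ∈ mixedProfiles)
include hP

lemma isProbabilityMeasure_prod : IsProbabilityMeasure (P.1.prod P.2) :=
  have := hP.1.isProbabilityMeasure
  have := hP.2.isProbabilityMeasure
  inferInstance

lemma ae_mem : ∀ᵐ z ∂(P.1.prod P.2), z ∈ I ×ˢ I :=
  have := hP.1.isProbabilityMeasure
  have := hP.2.isProbabilityMeasure
  Measure.ae_mem_prod hP.1.ae_mem hP.2.ae_mem

lemma payoff_congr {f g : ℝ × ℝ → ℝ} (hfg : EqOn f g (I ×ˢ I)) : payoff f P = payoff g P :=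
  integral_congr_ae ((ae_mem hP).mono fun _ hz => hfg hz)

end mixedProfiles

open Measure in
lemma payoff_mix_mix (f : ℝ × ℝ →ᵇ ℝ) {p₁ p₂ q₁ q₂ : Measure ℝ} [IsFiniteMeasure p₁]
    [IsFiniteMeasure p₂] [IsFiniteMeasure q₁] [IsFiniteMeasure q₂] {t s : ℝ} (ht : t ∈ I)
    (hs : s ∈ I) :
    payoff f (mix t p₁ q₁, mix s p₂ q₂) =
      (1 - t) * ((1 - s) * payoff f (p₁, p₂) + s * payoff f (p₁, q₂)) +
        t * ((1 - s) * payoff f (q₁, p₂) + s * payoff f (q₁, q₂)) := by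
  simp only [payoff, mix_prod, prod_mix,
    integral_mix ht (f.integrable _) (f.integrable _),
    integral_mix hs (f.integrable _) (f.integrable _), smul_eq_mul]
  ring

open Measure in
lemma negAffineOn_payoff_uIcc {f₁ f₂ : ℝ × ℝ →ᵇ ℝ}
    (h : RankReversingOn mixedProfiles (payoff f₁) (payoff f₂)) {P Q : Measure ℝ × Measure ℝ}
    (hP : P ∈ mixedProfiles) (hQ : Q ∈ mixedProfiles) :
    NegAffineOn {R ∈ mixedProfiles | payoff f₁ R ∈ uIcc (payoff f₁ P) (payoff f₁ Q)}
      (payoff f₁) (payoff f₂) := by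
  have := hP.1.isProbabilityMeasure
  have := hP.2.isProbabilityMeasure
  have := hQ.1.isProbabilityMeasure
  have := hQ.2.isProbabilityMeasure
  let γ (z : ℝ × ℝ) : Measure ℝ × Measure ℝ := (mix z.1 P.1 Q.1, mix z.2 P.2 Q.2)
  have hγ : ∀ z ∈ I ×ˢ I, γ z ∈ mixedProfiles := fun z hz =>
    ⟨⟨isProbabilityMeasure_mix hz.1, hP.1.absolutelyContinuous.mix hQ.1.absolutelyContinuous⟩,
      ⟨isProbabilityMeasure_mix hz.2, hP.2.absolutelyContinuous.mix hQ.2.absolutelyContinuous⟩⟩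
  have hF (f : ℝ × ℝ →ᵇ ℝ) : ∀ t ∈ I, ∀ s ∈ I, payoff f (γ (t, s)) =
      payoff f (P.1, P.2) + (payoff f (Q.1, P.2) - payoff f (P.1, P.2)) * t +
        (payoff f (P.1, Q.2) - payoff f (P.1, P.2)) * s +
        (payoff f (Q.1, Q.2) - payoff f (Q.1, P.2) - payoff f (P.1, Q.2) + payoff f (P.1, P.2)) *
          (t * s) := fun t ht s hs => by
    rw [payoff_mix_mix f ht hs]
    ring
  have hrev : RankReversingOn (I ×ˢ I) (payoff f₁ ∘ γ) (payoff f₂ ∘ γ) :=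
    fun z hz w hw => h _ (hγ z hz) _ (hγ w hw)
  obtain ⟨c, β, hline⟩ := exists_eq_mul_add_of_biaffine (hF f₁) (hF f₂)
    fun z hz w hw => hrev.eq_of_eq hz hw
  obtain ⟨α, hα, β, hline⟩ := hrev.negAffineOn_of_eq_mul_add hline
  refine ⟨α, hα, β, fun R ⟨hR, hRI⟩ => ?_⟩
  have hdiag : ContinuousOn (fun t => payoff f₁ (γ (t, t))) (uIcc 0 1) := by
    rw [uIcc_of_le zero_le_one]
    refine ContinuousOn.congr ?_ fun t ht => hF f₁ t ht t ht
    fun_prop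
  obtain ⟨t, ht, hRt⟩ := intermediate_value_uIcc hdiag (by simpa [γ] using hRI)
  rw [uIcc_of_le zero_le_one] at ht
  rw [← hRt, ← h.eq_of_eq (hγ _ ⟨ht, ht⟩) hR hRt]
  exact hline _ ⟨ht, ht⟩

lemma exists_Icc_subset_inter_ball {x δ : ℝ} (hx : x ∈ I) (hδ : 0 < δ) :
    ∃ a b, a < b ∧ Icc a b ⊆ I ∩ Metric.ball x δ := by
  refine ⟨max 0 (x - δ / 2), min 1 (x + δ / 2), ?_, subset_inter ?_ ?_⟩
  · exact max_lt (lt_min zero_lt_one (by linarith [hx.1]))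
      (lt_min (by linarith [hx.2]) (by linarith))
  · exact Icc_subset_Icc (le_max_left _ _) (min_le_left _ _)
  · rw [Real.ball_eq_Ioo]
    exact Icc_subset_Ioo (lt_max_of_lt_right (by linarith)) (min_lt_of_right_lt (by linarith))

lemma isMixedStrategy_cond {s : Set ℝ} (hsI : s ⊆ I) (h0 : volume s ≠ 0) :
    IsMixedStrategy volume[|s] where
  isProbabilityMeasure := cond_isProbabilityMeasure_of_finite h0
    (measure_ne_top_of_subset hsI (by simp))
  absolutelyContinuous :=
    Measure.smul_absolutelyContinuous.trans (Measure.restrict_mono hsI le_rfl).absolutelyContinuous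

lemma exists_mem_mixedProfiles_payoff_pos (h : ℝ × ℝ →ᵇ ℝ) {z : ℝ × ℝ} (hz : z ∈ I ×ˢ I)
    (hpos : 0 < h z) : ∃ P ∈ mixedProfiles, 0 < payoff h P := by
  obtain ⟨δ, hδ, hball⟩ :=
    Metric.continuousAt_iff.1 h.continuous.continuousAt (h z / 2) (half_pos hpos)
  obtain ⟨a, b, hab, habI⟩ := exists_Icc_subset_inter_ball hz.1 hδ
  obtain ⟨c, d, hcd, hcdI⟩ := exists_Icc_subset_inter_ball hz.2 hδ
  have hP : (volume[|Icc a b], volume[|Icc c d]) ∈ mixedProfiles :=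
    ⟨isMixedStrategy_cond (habI.trans inter_subset_left) (by simp [hab]),
      isMixedStrategy_cond (hcdI.trans inter_subset_left) (by simp [hcd])⟩
  have := mixedProfiles.isProbabilityMeasure_prod hP
  have hae : ∀ᵐ w ∂(volume[|Icc a b].prod volume[|Icc c d]), h z / 2 ≤ h w := by
    filter_upwards [Measure.ae_mem_prod (ae_cond_mem measurableSet_Icc)
      (ae_cond_mem measurableSet_Icc)] with w hw
    have hwz : dist w z < δ := by
      rw [Prod.dist_eq]
      exact max_lt (habI hw.1).2 (hcdI hw.2).2
    have := hball hwz
    rw [Real.dist_eq, abs_lt] at this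
    linarith
  refine ⟨_, hP, ?_⟩
  calc 0 < h z / 2 := half_pos hpos
    _ = ∫ _, h z / 2 ∂(volume[|Icc a b].prod volume[|Icc c d]) := by simp
    _ ≤ ∫ w, h w ∂(volume[|Icc a b].prod volume[|Icc c d]) :=
      integral_mono_ae (integrable_const _) (h.integrable _) hae

lemma eqOn_of_payoff_eq {f g : ℝ × ℝ →ᵇ ℝ} (h : ∀ P ∈ mixedProfiles, payoff f P = payoff g P) :
    EqOn f g (I ×ˢ I) := by
  intro z hz
  by_contra hne
  wlog hlt : f z < g z generalizing f g
  · exact this (fun P hP => (h P hP).symm) (Ne.symm hne)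
      (lt_of_le_of_ne (not_lt.1 hlt) (Ne.symm hne))
  obtain ⟨P, hP, hpos⟩ := exists_mem_mixedProfiles_payoff_pos (g - f) hz (sub_pos.2 hlt)
  have := mixedProfiles.isProbabilityMeasure_prod hP
  have : payoff (⇑(g - f)) P = 0 := by
    simp only [payoff, BoundedContinuousFunction.coe_sub, Pi.sub_apply]
    rw [integral_sub (g.integrable _) (f.integrable _)]
    exact sub_eq_zero.2 (h P hP).symm
  linarith

lemma ContinuousOn.exists_boundedContinuousFunction_eqOn {X : Type*} [TopologicalSpace X]
    [T4Space X] {s : Set X} {f : X → ℝ} (hf : ContinuousOn f s) (hs : IsCompact s) :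
    ∃ F : X →ᵇ ℝ, EqOn F f s := by
  have : CompactSpace s := isCompact_iff_compactSpace.1 hs
  obtain ⟨F, -, hF⟩ := BoundedContinuousFunction.exists_norm_eq_domRestrict_eq_of_closed
    (BoundedContinuousFunction.mkOfCompact ⟨s.domRestrict f, hf.domRestrict⟩) hs.isClosed
  exact ⟨F, fun x hx => DFunLike.congr_fun hF ⟨x, hx⟩⟩

theorem stmt_5 (ξ₁ ξ₂ : ℝ × ℝ → ℝ)
    (hc₁ : ContinuousOn ξ₁ (Set.Icc (0:ℝ) 1 ×ˢ Set.Icc (0:ℝ) 1))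
    (hc₂ : ContinuousOn ξ₂ (Set.Icc (0:ℝ) 1 ×ˢ Set.Icc (0:ℝ) 1))
    (hadv : ∀ (p₁ p₂ q₁ q₂ : Measure ℝ),
      IsProbabilityMeasure p₁ → IsProbabilityMeasure p₂ →
      IsProbabilityMeasure q₁ → IsProbabilityMeasure q₂ →
      p₁ ≪ volume.restrict (Set.Icc (0:ℝ) 1) → p₂ ≪ volume.restrict (Set.Icc (0:ℝ) 1) →
      q₁ ≪ volume.restrict (Set.Icc (0:ℝ) 1) → q₂ ≪ volume.restrict (Set.Icc (0:ℝ) 1) →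
      ((∫ z, ξ₁ z ∂(p₁.prod p₂)) ≥ (∫ z, ξ₁ z ∂(q₁.prod q₂)) ↔
       (∫ z, ξ₂ z ∂(p₁.prod p₂)) ≤ (∫ z, ξ₂ z ∂(q₁.prod q₂)))) :
    ∃ α : ℝ, 0 < α ∧ ∃ β : ℝ,
      ∀ x ∈ Set.Icc (0:ℝ) 1, ∀ y ∈ Set.Icc (0:ℝ) 1, ξ₂ (x, y) = -α * ξ₁ (x, y) + β := by
  have hsq : IsCompact (I ×ˢ I) := isCompact_Icc.prod isCompact_Icc
  obtain ⟨Ξ₁, hΞ₁⟩ := hc₁.exists_boundedContinuousFunction_eqOn hsq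
  obtain ⟨Ξ₂, hΞ₂⟩ := hc₂.exists_boundedContinuousFunction_eqOn hsq
  have hrev : RankReversingOn mixedProfiles (payoff Ξ₁) (payoff Ξ₂) := fun P hP Q hQ => by
    simp only [mixedProfiles.payoff_congr hP hΞ₁, mixedProfiles.payoff_congr hP hΞ₂,
      mixedProfiles.payoff_congr hQ hΞ₁, mixedProfiles.payoff_congr hQ hΞ₂]
    exact hadv Q.1 Q.2 P.1 P.2 hQ.1.1 hQ.2.1 hP.1.1 hP.2.1 hQ.1.2 hQ.2.2 hP.1.2 hP.2.2
  obtain ⟨α, hα, β, hline⟩ :=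
    NegAffineOn.of_forall_uIcc fun P hP Q hQ => negAffineOn_payoff_uIcc hrev hP hQ
  have hEq : EqOn Ξ₂ ⇑((-α) • Ξ₁ + BoundedContinuousFunction.const (ℝ × ℝ) β) (I ×ˢ I) := by
    refine eqOn_of_payoff_eq fun P hP => ?_
    have := mixedProfiles.isProbabilityMeasure_prod hP
    rw [hline P hP]
    simp only [payoff, BoundedContinuousFunction.coe_add, BoundedContinuousFunction.coe_smul,
      BoundedContinuousFunction.const_apply', Pi.add_apply, smul_eq_mul]
    rw [integral_add ((Ξ₁.integrable _).const_mul _) (integrable_const β), integral_const_mul]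
    simp
  refine ⟨α, hα, β, fun x hx y hy => ?_⟩
  rw [← hΞ₁ ⟨hx, hy⟩, ← hΞ₂ ⟨hx, hy⟩, hEq ⟨hx, hy⟩]
  simp
end

section
/- Let P₁, P₂ be convex sets and u₁, u₂ : P₁ × P₂ → ℝ bi-affine with the game adversarial. Then for any three strategy profiles p⁽¹⁾, p⁽²⁾, p⁽³⁾ ∈ P₁ × P₂, there exist α > 0 and β ∈ ℝ such that u₂(p⁽ᵏ⁾) = -α·u₁(p⁽ᵏ⁾) + β for k = 1, 2, 3. -/
namespace StrictCompAux

variable {V₁ V₂ : Type*} [AddCommGroup V₁] [Module ℝ V₁] [AddCommGroup V₂] [Module ℝ V₂]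

structure Adv (P₁ : Set V₁) (P₂ : Set V₂) (u₁ u₂ : V₁ → V₂ → ℝ) : Prop where
  conv₁ : Convex ℝ P₁
  conv₂ : Convex ℝ P₂
  aff1x : ∀ x ∈ P₁, ∀ x' ∈ P₁, ∀ y ∈ P₂, ∀ t : ℝ, 0 ≤ t → t ≤ 1 →
      u₁ (t • x + (1 - t) • x') y = t * u₁ x y + (1 - t) * u₁ x' y
  aff1y : ∀ x ∈ P₁, ∀ y ∈ P₂, ∀ y' ∈ P₂, ∀ t : ℝ, 0 ≤ t → t ≤ 1 →
      u₁ x (t • y + (1 - t) • y') = t * u₁ x y + (1 - t) * u₁ x y'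
  aff2x : ∀ x ∈ P₁, ∀ x' ∈ P₁, ∀ y ∈ P₂, ∀ t : ℝ, 0 ≤ t → t ≤ 1 →
      u₂ (t • x + (1 - t) • x') y = t * u₂ x y + (1 - t) * u₂ x' y
  aff2y : ∀ x ∈ P₁, ∀ y ∈ P₂, ∀ y' ∈ P₂, ∀ t : ℝ, 0 ≤ t → t ≤ 1 →
      u₂ x (t • y + (1 - t) • y') = t * u₂ x y + (1 - t) * u₂ x y'
  adv : ∀ x ∈ P₁, ∀ y ∈ P₂, ∀ x' ∈ P₁, ∀ y' ∈ P₂,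
      (u₁ x y ≥ u₁ x' y' ↔ u₂ x y ≤ u₂ x' y')

variable {P₁ : Set V₁} {P₂ : Set V₂} {u₁ u₂ : V₁ → V₂ → ℝ}

theorem Adv.flip (H : Adv P₁ P₂ u₁ u₂) :
    Adv P₂ P₁ (fun y x => u₁ x y) (fun y x => u₂ x y) where
  conv₁ := H.conv₂
  conv₂ := H.conv₁
  aff1x := fun y hy y' hy' x hx t h0 h1 => H.aff1y x hx y hy y' hy' t h0 h1
  aff1y := fun y hy x hx x' hx' t h0 h1 => H.aff1x x hx x' hx' y hy t h0 h1
  aff2x := fun y hy y' hy' x hx t h0 h1 => H.aff2y x hx y hy y' hy' t h0 h1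
  aff2y := fun y hy x hx x' hx' t h0 h1 => H.aff2x x hx x' hx' y hy t h0 h1
  adv := fun y hy x hx y' hy' x' hx' => H.adv x hx y hy x' hx' y' hy'

def OnL (u₁ u₂ : V₁ → V₂ → ℝ) (α β : ℝ) (x : V₁) (y : V₂) : Prop :=
  u₂ x y = -α * u₁ x y + β

theorem coup_eq (H : Adv P₁ P₂ u₁ u₂) {x y x' y'} (hx : x ∈ P₁) (hy : y ∈ P₂)
    (hx' : x' ∈ P₁) (hy' : y' ∈ P₂) (h : u₁ x y = u₁ x' y') : u₂ x y = u₂ x' y' :=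
  le_antisymm ((H.adv x hx y hy x' hx' y' hy').mp h.ge)
    ((H.adv x' hx' y' hy' x hx y hy).mp h.le)

theorem coup_lt (H : Adv P₁ P₂ u₁ u₂) {x y x' y'} (hx : x ∈ P₁) (hy : y ∈ P₂)
    (hx' : x' ∈ P₁) (hy' : y' ∈ P₂) (h : u₁ x y < u₁ x' y') : u₂ x' y' < u₂ x y := by
  by_contra hc
  push_neg at hc
  exact absurd ((H.adv x hx y hy x' hx' y' hy').mpr hc) (not_le.mpr h)

theorem line2 (H : Adv P₁ P₂ u₁ u₂) {x y x' y'} (hx : x ∈ P₁) (hy : y ∈ P₂)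
    (hx' : x' ∈ P₁) (hy' : y' ∈ P₂) (hne : u₁ x y ≠ u₁ x' y') :
    ∃ α, 0 < α ∧ ∃ β, OnL u₁ u₂ α β x y ∧ OnL u₁ u₂ α β x' y' := by
  have hden : u₁ x' y' - u₁ x y ≠ 0 := sub_ne_zero.mpr (Ne.symm hne)
  refine ⟨(u₂ x y - u₂ x' y') / (u₁ x' y' - u₁ x y), ?_,
    u₂ x y + (u₂ x y - u₂ x' y') / (u₁ x' y' - u₁ x y) * u₁ x y, ?_, ?_⟩
  · rcases hne.lt_or_gt with h | h
    · exact div_pos (sub_pos.mpr (coup_lt H hx hy hx' hy' h)) (sub_pos.mpr h)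
    · have h2 := coup_lt H hx' hy' hx hy h
      exact div_pos_of_neg_of_neg (by linarith) (by linarith)
  · simp only [OnL]; ring
  · simp only [OnL]; field_simp; ring

theorem seg_cancel_y (H : Adv P₁ P₂ u₁ u₂) {α β : ℝ} {x y w} (hx : x ∈ P₁) (hy : y ∈ P₂)
    (hw : w ∈ P₂) {t : ℝ} (ht0 : 0 ≤ t) (ht1 : t < 1) (h1 : OnL u₁ u₂ α β x y)
    (h2 : OnL u₁ u₂ α β x (t • y + (1 - t) • w)) : OnL u₁ u₂ α β x w := by
  simp only [OnL] at h1 h2 ⊢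
  rw [H.aff2y x hx y hy w hw t ht0 ht1.le, H.aff1y x hx y hy w hw t ht0 ht1.le] at h2
  have h3 : (1 - t) * (u₂ x w - (-α * u₁ x w + β)) = 0 := by linear_combination h2 - t * h1
  rcases mul_eq_zero.mp h3 with h | h
  · linarith
  · linarith

theorem seg_cancel_x (H : Adv P₁ P₂ u₁ u₂) {α β : ℝ} {y x z} (hy : y ∈ P₂) (hx : x ∈ P₁)
    (hz : z ∈ P₁) {t : ℝ} (ht0 : 0 ≤ t) (ht1 : t < 1) (h1 : OnL u₁ u₂ α β x y)
    (h2 : OnL u₁ u₂ α β (t • x + (1 - t) • z) y) : OnL u₁ u₂ α β z y :=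
  seg_cancel_y H.flip hy hx hz ht0 ht1 h1 h2

theorem pin_y (H : Adv P₁ P₂ u₁ u₂) {α β : ℝ} {x y y'} (hx : x ∈ P₁) (hy : y ∈ P₂)
    (hy' : y' ∈ P₂) (hxy : OnL u₁ u₂ α β x y) (hxy' : OnL u₁ u₂ α β x y')
    {z w} (hz : z ∈ P₁) (hw : w ∈ P₂) (h1 : u₁ x y ≤ u₁ z w) (h2 : u₁ z w ≤ u₁ x y') :
    OnL u₁ u₂ α β z w := by
  simp only [OnL] at hxy hxy' ⊢
  rcases eq_or_lt_of_le (h1.trans h2) with hAB | hAB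
  · have h2' : u₁ z w ≤ u₁ x y := by rw [hAB]; exact h2
    have hv : u₁ z w = u₁ x y := le_antisymm h2' h1
    rw [coup_eq H hz hw hx hy hv, hv]
    exact hxy
  · have hden : 0 < u₁ x y' - u₁ x y := sub_pos.mpr hAB
    set t := (u₁ x y' - u₁ z w) / (u₁ x y' - u₁ x y) with htdef
    have ht0 : 0 ≤ t := div_nonneg (by linarith) hden.le
    have ht1 : t ≤ 1 := (div_le_one hden).mpr (by linarith)
    have hmem : t • y + (1 - t) • y' ∈ P₂ := H.conv₂ hy hy' ht0 (by linarith) (by ring)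
    have e1 : u₁ x (t • y + (1 - t) • y') = u₁ z w := by
      rw [H.aff1y x hx y hy y' hy' t ht0 ht1, htdef]
      field_simp
      ring
    have e2 : u₂ x (t • y + (1 - t) • y') = -α * u₁ x (t • y + (1 - t) • y') + β := by
      rw [H.aff2y x hx y hy y' hy' t ht0 ht1, H.aff1y x hx y hy y' hy' t ht0 ht1, hxy, hxy']
      ring
    rw [coup_eq H hz hw hx hmem e1.symm, e2, e1]

theorem extend0 (H : Adv P₁ P₂ u₁ u₂) {α β : ℝ} {x y y'} (hx : x ∈ P₁) (hy : y ∈ P₂)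
    (hy' : y' ∈ P₂) (hxy : OnL u₁ u₂ α β x y) (hxy' : OnL u₁ u₂ α β x y')
    (hlt : u₁ x y < u₁ x y') {w} (hw : w ∈ P₂) : OnL u₁ u₂ α β x w := by
  rcases le_or_gt (u₁ x w) (u₁ x y') with hTB | hTB
  · rcases le_or_gt (u₁ x y) (u₁ x w) with hAT | hAT
    · exact pin_y H hx hy hy' hxy hxy' hx hw hAT hTB
    · -- u₁ x w < u₁ x y : segment from y' to w, hits value u₁ x y
      have hden : 0 < u₁ x y' - u₁ x w := by linarith
      set t := (u₁ x y - u₁ x w) / (u₁ x y' - u₁ x w) with htdef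
      have ht0 : 0 ≤ t := div_nonneg (by linarith) hden.le
      have ht1 : t < 1 := (div_lt_one hden).mpr (by linarith)
      have hmem : t • y' + (1 - t) • w ∈ P₂ := H.conv₂ hy' hw ht0 (by linarith) (by ring)
      have e1 : u₁ x (t • y' + (1 - t) • w) = u₁ x y := by
        rw [H.aff1y x hx y' hy' w hw t ht0 ht1.le, htdef]
        field_simp
        ring
      have hLs : OnL u₁ u₂ α β x (t • y' + (1 - t) • w) := by
        simp only [OnL] at hxy ⊢
        rw [coup_eq H hx hmem hx hy e1, e1]
        exact hxy
      exact seg_cancel_y H hx hy' hw ht0 ht1 hxy' hLs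
  · -- u₁ x w > u₁ x y' : segment from y to w, hits value u₁ x y'
    have hden : 0 < u₁ x w - u₁ x y := by linarith
    set t := (u₁ x w - u₁ x y') / (u₁ x w - u₁ x y) with htdef
    have ht0 : 0 ≤ t := div_nonneg (by linarith) hden.le
    have ht1 : t < 1 := (div_lt_one hden).mpr (by linarith)
    have hmem : t • y + (1 - t) • w ∈ P₂ := H.conv₂ hy hw ht0 (by linarith) (by ring)
    have e1 : u₁ x (t • y + (1 - t) • w) = u₁ x y' := by
      rw [H.aff1y x hx y hy w hw t ht0 ht1.le, htdef]
      field_simp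
      ring
    have hLs : OnL u₁ u₂ α β x (t • y + (1 - t) • w) := by
      simp only [OnL] at hxy' ⊢
      rw [coup_eq H hx hmem hx hy' e1, e1]
      exact hxy'
    exact seg_cancel_y H hx hy hw ht0 ht1 hxy hLs

theorem extend (H : Adv P₁ P₂ u₁ u₂) {α β : ℝ} {x y y'} (hx : x ∈ P₁) (hy : y ∈ P₂)
    (hy' : y' ∈ P₂) (hxy : OnL u₁ u₂ α β x y) (hxy' : OnL u₁ u₂ α β x y')
    (hne : u₁ x y ≠ u₁ x y') {w} (hw : w ∈ P₂) : OnL u₁ u₂ α β x w := by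
  rcases hne.lt_or_gt with h | h
  · exact extend0 H hx hy hy' hxy hxy' h hw
  · exact extend0 H hx hy' hy hxy' hxy h hw

theorem extend' (H : Adv P₁ P₂ u₁ u₂) {α β : ℝ} {y x x'} (hy : y ∈ P₂) (hx : x ∈ P₁)
    (hx' : x' ∈ P₁) (hxy : OnL u₁ u₂ α β x y) (hx'y : OnL u₁ u₂ α β x' y)
    (hne : u₁ x y ≠ u₁ x' y) {z} (hz : z ∈ P₁) : OnL u₁ u₂ α β z y :=
  extend H.flip hy hx hx' hxy hx'y hne hz

theorem patch_pt0 (H : Adv P₁ P₂ u₁ u₂) {α β : ℝ} {x x' y y'} (hx : x ∈ P₁) (hx' : x' ∈ P₁)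
    (hy : y ∈ P₂) (hy' : y' ∈ P₂) (hxy : OnL u₁ u₂ α β x y) (hxy' : OnL u₁ u₂ α β x y')
    (hlt : u₁ x y < u₁ x y') {μ : ℝ} (hμ0 : 0 < μ) (hμ1 : μ < 1) :
    OnL u₁ u₂ α β x' (μ • y + (1 - μ) • y') := by
  have hmem : μ • y + (1 - μ) • y' ∈ P₂ := H.conv₂ hy hy' hμ0.le (by linarith) (by ring)
  have hU : u₁ x (μ • y + (1 - μ) • y') = μ * u₁ x y + (1 - μ) * u₁ x y' :=
    H.aff1y x hx y hy y' hy' μ hμ0.le hμ1.le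
  have hUa : u₁ x y < u₁ x (μ • y + (1 - μ) • y') := by
    rw [hU]; nlinarith [mul_pos (show (0:ℝ) < 1 - μ by linarith)
      (show (0:ℝ) < u₁ x y' - u₁ x y by linarith)]
  have hUb : u₁ x (μ • y + (1 - μ) • y') < u₁ x y' := by
    rw [hU]; nlinarith [mul_pos hμ0 (show (0:ℝ) < u₁ x y' - u₁ x y by linarith)]
  have hLm : OnL u₁ u₂ α β x (μ • y + (1 - μ) • y') := by
    simp only [OnL] at hxy hxy' ⊢
    rw [H.aff2y x hx y hy y' hy' μ hμ0.le hμ1.le, hU, hxy, hxy']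
    ring
  rcases lt_or_ge (u₁ x' (μ • y + (1 - μ) • y')) (u₁ x y) with hC | hC
  · -- value at x' is below the pinned interval
    have hden : 0 < u₁ x (μ • y + (1 - μ) • y') - u₁ x' (μ • y + (1 - μ) • y') := by linarith
    set s := (u₁ x y - u₁ x' (μ • y + (1 - μ) • y')) /
      (u₁ x (μ • y + (1 - μ) • y') - u₁ x' (μ • y + (1 - μ) • y')) with hsdef
    have hs0 : 0 ≤ s := div_nonneg (by linarith) hden.le
    have hs1 : s < 1 := (div_lt_one hden).mpr (by linarith)
    have hzmem : s • x + (1 - s) • x' ∈ P₁ := H.conv₁ hx hx' hs0 (by linarith) (by ring)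
    have e1 : u₁ (s • x + (1 - s) • x') (μ • y + (1 - μ) • y') = u₁ x y := by
      rw [H.aff1x x hx x' hx' (μ • y + (1 - μ) • y') hmem s hs0 hs1.le, hsdef]
      field_simp
      ring
    have hLz : OnL u₁ u₂ α β (s • x + (1 - s) • x') (μ • y + (1 - μ) • y') := by
      simp only [OnL] at hxy ⊢
      rw [coup_eq H hzmem hmem hx hy e1, e1]
      exact hxy
    exact seg_cancel_x H hmem hx hx' hs0 hs1 hLm hLz
  · rcases le_or_gt (u₁ x' (μ • y + (1 - μ) • y')) (u₁ x y') with hC2 | hC2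
    · exact pin_y H hx hy hy' hxy hxy' hx' hmem hC hC2
    · -- value at x' is above the pinned interval
      have hden : 0 < u₁ x' (μ • y + (1 - μ) • y') - u₁ x (μ • y + (1 - μ) • y') := by linarith
      set s := (u₁ x' (μ • y + (1 - μ) • y') - u₁ x y') /
        (u₁ x' (μ • y + (1 - μ) • y') - u₁ x (μ • y + (1 - μ) • y')) with hsdef
      have hs0 : 0 ≤ s := div_nonneg (by linarith) hden.le
      have hs1 : s < 1 := (div_lt_one hden).mpr (by linarith)
      have hzmem : s • x + (1 - s) • x' ∈ P₁ := H.conv₁ hx hx' hs0 (by linarith) (by ring)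
      have e1 : u₁ (s • x + (1 - s) • x') (μ • y + (1 - μ) • y') = u₁ x y' := by
        rw [H.aff1x x hx x' hx' (μ • y + (1 - μ) • y') hmem s hs0 hs1.le, hsdef]
        field_simp
        ring
      have hLz : OnL u₁ u₂ α β (s • x + (1 - s) • x') (μ • y + (1 - μ) • y') := by
        simp only [OnL] at hxy' ⊢
        rw [coup_eq H hzmem hmem hx hy' e1, e1]
        exact hxy'
      exact seg_cancel_x H hmem hx hx' hs0 hs1 hLm hLz

theorem patch_pt (H : Adv P₁ P₂ u₁ u₂) {α β : ℝ} {x x' y y'} (hx : x ∈ P₁) (hx' : x' ∈ P₁)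
    (hy : y ∈ P₂) (hy' : y' ∈ P₂) (hxy : OnL u₁ u₂ α β x y) (hxy' : OnL u₁ u₂ α β x y')
    (hne : u₁ x y ≠ u₁ x y') {μ : ℝ} (hμ0 : 0 < μ) (hμ1 : μ < 1) :
    OnL u₁ u₂ α β x' (μ • y + (1 - μ) • y') := by
  rcases hne.lt_or_gt with h | h
  · exact patch_pt0 H hx hx' hy hy' hxy hxy' h hμ0 hμ1
  · have h2 := patch_pt0 H hx hx' hy' hy hxy' hxy h (μ := 1 - μ) (by linarith) (by linarith)
    have hv : (1 - μ) • y' + (1 - (1 - μ)) • y = μ • y + (1 - μ) • y' := by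
      rw [sub_sub_cancel]
      exact add_comm _ _
    rwa [hv] at h2

theorem patch (H : Adv P₁ P₂ u₁ u₂) {α β : ℝ} {x x' y y'} (hx : x ∈ P₁) (hx' : x' ∈ P₁)
    (hy : y ∈ P₂) (hy' : y' ∈ P₂) (hxy : OnL u₁ u₂ α β x y) (hxy' : OnL u₁ u₂ α β x y')
    (hne : u₁ x y ≠ u₁ x y') : OnL u₁ u₂ α β x' y ∧ OnL u₁ u₂ α β x' y' := by
  have h13 := patch_pt H hx hx' hy hy' hxy hxy' hne (μ := (1:ℝ)/3) (by norm_num) (by norm_num)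
  have h23 := patch_pt H hx hx' hy hy' hxy hxy' hne (μ := (2:ℝ)/3) (by norm_num) (by norm_num)
  simp only [OnL] at h13 h23 ⊢
  rw [H.aff2y x' hx' y hy y' hy' ((1:ℝ)/3) (by norm_num) (by norm_num),
    H.aff1y x' hx' y hy y' hy' ((1:ℝ)/3) (by norm_num) (by norm_num)] at h13
  rw [H.aff2y x' hx' y hy y' hy' ((2:ℝ)/3) (by norm_num) (by norm_num),
    H.aff1y x' hx' y hy y' hy' ((2:ℝ)/3) (by norm_num) (by norm_num)] at h23
  constructor
  · linear_combination 2 * h23 - h13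
  · linear_combination 2 * h13 - h23

theorem patch' (H : Adv P₁ P₂ u₁ u₂) {α β : ℝ} {x x' y y'} (hx : x ∈ P₁) (hx' : x' ∈ P₁)
    (hy : y ∈ P₂) (hy' : y' ∈ P₂) (hxy : OnL u₁ u₂ α β x y) (hx'y : OnL u₁ u₂ α β x' y)
    (hne : u₁ x y ≠ u₁ x' y) : OnL u₁ u₂ α β x y' ∧ OnL u₁ u₂ α β x' y' :=
  patch H.flip hy hy' hx hx' hxy hx'y hne

theorem main_aux (H : Adv P₁ P₂ u₁ u₂) {x1 y1 x2 y2 x3 y3} (hx1 : x1 ∈ P₁) (hy1 : y1 ∈ P₂)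
    (hx2 : x2 ∈ P₁) (hy2 : y2 ∈ P₂) (hx3 : x3 ∈ P₁) (hy3 : y3 ∈ P₂)
    (hne : u₁ x1 y1 ≠ u₁ x2 y2) :
    ∃ α, 0 < α ∧ ∃ β, OnL u₁ u₂ α β x1 y1 ∧ OnL u₁ u₂ α β x2 y2 ∧ OnL u₁ u₂ α β x3 y3 := by
  by_cases hA : u₁ x1 y1 = u₁ x1 y2
  · -- Case B: pin along first coordinate at column y2
    have hne2 : u₁ x1 y2 ≠ u₁ x2 y2 := by rwa [hA] at hne
    obtain ⟨α, hα, β, L12, L22⟩ := line2 H hx1 hy2 hx2 hy2 hne2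
    have L11 : OnL u₁ u₂ α β x1 y1 := by
      simp only [OnL] at L12 ⊢
      rw [coup_eq H hx1 hy1 hx1 hy2 hA, hA]
      exact L12
    obtain ⟨L13, L23⟩ := patch' H hx1 hx2 hy2 hy3 L12 L22 hne2
    by_cases g1 : u₁ x1 y3 = u₁ x1 y2
    · by_cases g2 : u₁ x2 y3 = u₁ x2 y2
      · have hne3 : u₁ x1 y3 ≠ u₁ x2 y3 := by rw [g1, g2]; exact hne2
        have L33 := extend' H hy3 hx1 hx2 L13 L23 hne3 hx3
        exact ⟨α, hα, β, L11, L22, L33⟩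
      · have L33 := (patch H hx2 hx3 hy3 hy2 L23 L22 g2).1
        exact ⟨α, hα, β, L11, L22, L33⟩
    · have L33 := (patch H hx1 hx3 hy3 hy2 L13 L12 g1).1
      exact ⟨α, hα, β, L11, L22, L33⟩
  · -- Case A: pin along second coordinate at row x1
    obtain ⟨α, hα, β, L11, L12⟩ := line2 H hx1 hy1 hx1 hy2 hA
    obtain ⟨L21, L22⟩ := patch H hx1 hx2 hy1 hy2 L11 L12 hA
    obtain ⟨L31, L32⟩ := patch H hx1 hx3 hy1 hy2 L11 L12 hA
    by_cases h31 : u₁ x1 y1 = u₁ x3 y1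
    · by_cases h32 : u₁ x1 y2 = u₁ x3 y2
      · have hne3 : u₁ x3 y1 ≠ u₁ x3 y2 := by rw [← h31, ← h32]; exact hA
        have L33 := extend H hx3 hy1 hy2 L31 L32 hne3 hy3
        exact ⟨α, hα, β, L11, L22, L33⟩
      · have L33 := (patch' H hx1 hx3 hy2 hy3 L12 L32 h32).2
        exact ⟨α, hα, β, L11, L22, L33⟩
    · have L33 := (patch' H hx1 hx3 hy1 hy3 L11 L31 h31).2
      exact ⟨α, hα, β, L11, L22, L33⟩

end StrictCompAux

theorem stmt_7 {V₁ V₂ : Type*} [AddCommGroup V₁] [Module ℝ V₁] [AddCommGroup V₂] [Module ℝ V₂]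
    (P₁ : Set V₁) (P₂ : Set V₂) (hP₁ : Convex ℝ P₁) (hP₂ : Convex ℝ P₂)
    (u₁ u₂ : V₁ → V₂ → ℝ)
    (hbi : ∀ u ∈ ({u₁, u₂} : Set (V₁ → V₂ → ℝ)),
      (∀ x ∈ P₁, ∀ y ∈ P₁, ∀ z ∈ P₂, ∀ t : ℝ, t ∈ Set.Icc (0:ℝ) 1 →
        u (t • x + (1 - t) • y) z = t * u x z + (1 - t) * u y z) ∧
      (∀ x ∈ P₁, ∀ y ∈ P₂, ∀ z ∈ P₂, ∀ t : ℝ, t ∈ Set.Icc (0:ℝ) 1 →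
        u x (t • y + (1 - t) • z) = t * u x y + (1 - t) * u x z))
    (hadv : ∀ σ₁ ∈ P₁, ∀ σ₂ ∈ P₂, ∀ τ₁ ∈ P₁, ∀ τ₂ ∈ P₂,
      (u₁ σ₁ σ₂ ≥ u₁ τ₁ τ₂ ↔ u₂ σ₁ σ₂ ≤ u₂ τ₁ τ₂))
    (p q r : V₁ × V₂) (hp : p.1 ∈ P₁ ∧ p.2 ∈ P₂) (hq : q.1 ∈ P₁ ∧ q.2 ∈ P₂)
    (hr : r.1 ∈ P₁ ∧ r.2 ∈ P₂) :
    ∃ α : ℝ, 0 < α ∧ ∃ β : ℝ,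
      u₂ p.1 p.2 = -α * u₁ p.1 p.2 + β ∧
      u₂ q.1 q.2 = -α * u₁ q.1 q.2 + β ∧
      u₂ r.1 r.2 = -α * u₁ r.1 r.2 + β := by
  have h₁ := hbi u₁ (Set.mem_insert _ _)
  have h₂ := hbi u₂ (Set.mem_insert_of_mem _ rfl)
  have H : StrictCompAux.Adv P₁ P₂ u₁ u₂ :=
    { conv₁ := hP₁
      conv₂ := hP₂
      aff1x := fun x hx x' hx' y hy t a b => h₁.1 x hx x' hx' y hy t ⟨a, b⟩
      aff1y := fun x hx y hy y' hy' t a b => h₁.2 x hx y hy y' hy' t ⟨a, b⟩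
      aff2x := fun x hx x' hx' y hy t a b => h₂.1 x hx x' hx' y hy t ⟨a, b⟩
      aff2y := fun x hx y hy y' hy' t a b => h₂.2 x hx y hy y' hy' t ⟨a, b⟩
      adv := hadv }
  by_cases h1 : u₁ p.1 p.2 = u₁ q.1 q.2
  · by_cases h2 : u₁ p.1 p.2 = u₁ r.1 r.2
    · refine ⟨1, one_pos, u₂ p.1 p.2 + u₁ p.1 p.2, by ring, ?_, ?_⟩
      · rw [StrictCompAux.coup_eq H hq.1 hq.2 hp.1 hp.2 h1.symm, ← h1]; ring
      · rw [StrictCompAux.coup_eq H hr.1 hr.2 hp.1 hp.2 h2.symm, ← h2]; ring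
    · obtain ⟨α, hα, β, hP, hR, hQ⟩ :=
        StrictCompAux.main_aux H hp.1 hp.2 hr.1 hr.2 hq.1 hq.2 h2
      exact ⟨α, hα, β, hP, hQ, hR⟩
  · obtain ⟨α, hα, β, hP, hQ, hR⟩ :=
      StrictCompAux.main_aux H hp.1 hp.2 hq.1 hq.2 hr.1 hr.2 h1
    exact ⟨α, hα, β, hP, hQ, hR⟩
end

section
/- Let X be a set and u₁, u₂ : X → ℝ with u₁ non-constant. Suppose that for every three points x, y, z ∈ X there exist α > 0 and β ∈ ℝ (possibly depending on x, y, z) such that u₂(w) = -α·u₁(w) + β for w ∈ {x, y, z}. Then there exist a single α* > 0 and β* ∈ ℝ such that u₂(w) = -α*·u₁(w) + β* for all w ∈ X. -/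
theorem stmt_9 {X : Type*} (u₁ u₂ : X → ℝ) (hnc : ∃ x y : X, u₁ x ≠ u₁ y)
    (h : ∀ x y z : X, ∃ α : ℝ, 0 < α ∧ ∃ β : ℝ,
      u₂ x = -α * u₁ x + β ∧ u₂ y = -α * u₁ y + β ∧ u₂ z = -α * u₁ z + β) :
    ∃ α : ℝ, 0 < α ∧ ∃ β : ℝ, ∀ w : X, u₂ w = -α * u₁ w + β := by
  obtain ⟨x₀, y₀, hxy⟩ := hnc
  obtain ⟨α, hα, β, hx, hy, -⟩ := h x₀ y₀ y₀
  refine ⟨α, hα, β, fun w => ?_⟩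
  obtain ⟨α', hα', β', hx', hy', hw'⟩ := h x₀ y₀ w
  have hd : u₁ x₀ - u₁ y₀ ≠ 0 := sub_ne_zero.mpr hxy
  have hαα : α = α' := by
    have : -α * (u₁ x₀ - u₁ y₀) = -α' * (u₁ x₀ - u₁ y₀) := by linarith
    have := mul_right_cancel₀ hd this
    linarith
  have hββ : β = β' := by subst hαα; linarith
  rw [hαα, hββ]; exact hw'
end

section
/- Let S₁ = S₂ = {1, 2, 3} and ν₁, ν₂ : S₁ × S₂ → ℝ. If the mixed extension of the game (over probability vectors in the 2-simplex for each player, with expected payoffs E_{ν₁}, E_{ν₂}) is adversarial, then ν₂ is a positive affine transformation of -ν₁: there exist α > 0 and β with ν₂(i,j) = -α·ν₁(i,j) + β for all i, j ∈ {1,2,3}. -/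
noncomputable def adpVec (s : ℝ) (i k : Fin 3) : Fin 3 → ℝ :=
  fun x => s * (if x = i then 1 else 0) + (1 - s) * (if x = k then 1 else 0)

lemma adpVec_mem (s : ℝ) (h0 : 0 ≤ s) (h1 : s ≤ 1) (i k : Fin 3) :
    adpVec s i k ∈ stdSimplex ℝ (Fin 3) := by
  constructor
  · intro x
    apply add_nonneg <;> apply mul_nonneg
    · exact h0
    · split_ifs <;> norm_num
    · linarith
    · split_ifs <;> norm_num
  · fin_cases i <;> fin_cases k <;> simp [adpVec, Fin.sum_univ_three]

lemma adpEsum (ν : Fin 3 × Fin 3 → ℝ) (s t : ℝ) (i k j l : Fin 3) :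
    (∑ s₁, ∑ s₂, adpVec s i k s₁ * adpVec t j l s₂ * ν (s₁, s₂)) =
      s*t*ν (i,j) + s*(1-t)*ν (i,l) + (1-s)*t*ν (k,j) + (1-s)*(1-t)*ν (k,l) := by
  fin_cases i <;> fin_cases k <;> fin_cases j <;> fin_cases l <;>
    simp [adpVec, Fin.sum_univ_three] <;> ring

theorem stmt_10 (ν₁ ν₂ : Fin 3 × Fin 3 → ℝ)
    (hadv : ∀ p₁ ∈ stdSimplex ℝ (Fin 3), ∀ p₂ ∈ stdSimplex ℝ (Fin 3),
      ∀ q₁ ∈ stdSimplex ℝ (Fin 3), ∀ q₂ ∈ stdSimplex ℝ (Fin 3),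
      ((∑ s₁, ∑ s₂, p₁ s₁ * p₂ s₂ * ν₁ (s₁, s₂)) ≥ (∑ s₁, ∑ s₂, q₁ s₁ * q₂ s₂ * ν₁ (s₁, s₂)) ↔
       (∑ s₁, ∑ s₂, p₁ s₁ * p₂ s₂ * ν₂ (s₁, s₂)) ≤ (∑ s₁, ∑ s₂, q₁ s₁ * q₂ s₂ * ν₂ (s₁, s₂)))) :
    ∃ α : ℝ, 0 < α ∧ ∃ β : ℝ, ∀ i j : Fin 3, ν₂ (i, j) = -α * ν₁ (i, j) + β := by
  have key2 : ∀ s t s' t' : ℝ, 0 ≤ s → s ≤ 1 → 0 ≤ t → t ≤ 1 → 0 ≤ s' → s' ≤ 1 → 0 ≤ t' → t' ≤ 1 →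
      ∀ i k j l i' k' j' l' : Fin 3,
      (s*t*ν₁ (i,j) + s*(1-t)*ν₁ (i,l) + (1-s)*t*ν₁ (k,j) + (1-s)*(1-t)*ν₁ (k,l) ≥
       s'*t'*ν₁ (i',j') + s'*(1-t')*ν₁ (i',l') + (1-s')*t'*ν₁ (k',j') + (1-s')*(1-t')*ν₁ (k',l')) ↔
      (s*t*ν₂ (i,j) + s*(1-t)*ν₂ (i,l) + (1-s)*t*ν₂ (k,j) + (1-s)*(1-t)*ν₂ (k,l) ≤
       s'*t'*ν₂ (i',j') + s'*(1-t')*ν₂ (i',l') + (1-s')*t'*ν₂ (k',j') + (1-s')*(1-t')*ν₂ (k',l')) := by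
    intro s t s' t' hs0 hs1 ht0 ht1 hs0' hs1' ht0' ht1' i k j l i' k' j' l'
    rw [← adpEsum ν₁ s t i k j l, ← adpEsum ν₁ s' t' i' k' j' l',
        ← adpEsum ν₂ s t i k j l, ← adpEsum ν₂ s' t' i' k' j' l']
    exact hadv _ (adpVec_mem s hs0 hs1 i k) _ (adpVec_mem t ht0 ht1 j l)
      _ (adpVec_mem s' hs0' hs1' i' k') _ (adpVec_mem t' ht0' ht1' j' l')
  have pure_iff : ∀ x y : Fin 3 × Fin 3, ν₁ x ≥ ν₁ y ↔ ν₂ x ≤ ν₂ y := by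
    intro x y
    have h := key2 1 1 1 1 (by norm_num) (by norm_num) (by norm_num) (by norm_num)
      (by norm_num) (by norm_num) (by norm_num) (by norm_num) x.1 x.1 x.2 x.2 y.1 y.1 y.2 y.2
    norm_num at h
    exact h
  have EqT : ∀ x y : Fin 3 × Fin 3, ν₁ x = ν₁ y → ν₂ x = ν₂ y := fun x y h =>
    le_antisymm ((pure_iff x y).mp h.ge) ((pure_iff y x).mp h.le)
  have mixRow : ∀ (i j l : Fin 3) (y : Fin 3 × Fin 3) (t : ℝ), 0 ≤ t → t ≤ 1 →
      t * ν₁ (i,j) + (1-t) * ν₁ (i,l) = ν₁ y →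
      t * ν₂ (i,j) + (1-t) * ν₂ (i,l) = ν₂ y := by
    intro i j l y t h0 h1 hv
    have h₁ := key2 1 t 1 1 (by norm_num) (by norm_num) h0 h1
      (by norm_num) (by norm_num) (by norm_num) (by norm_num) i i j l y.1 y.1 y.2 y.2
    have h₂ := key2 1 1 1 t (by norm_num) (by norm_num) (by norm_num) (by norm_num)
      (by norm_num) (by norm_num) h0 h1 y.1 y.1 y.2 y.2 i i j l
    norm_num at h₁ h₂
    have u1 := h₁.mp (by linarith)
    have u2 := h₂.mp (by linarith)
    linarith
  have mixCol : ∀ (j i k : Fin 3) (y : Fin 3 × Fin 3) (t : ℝ), 0 ≤ t → t ≤ 1 →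
      t * ν₁ (i,j) + (1-t) * ν₁ (k,j) = ν₁ y →
      t * ν₂ (i,j) + (1-t) * ν₂ (k,j) = ν₂ y := by
    intro j i k y t h0 h1 hv
    have h₁ := key2 t 1 1 1 h0 h1 (by norm_num) (by norm_num)
      (by norm_num) (by norm_num) (by norm_num) (by norm_num) i k j j y.1 y.1 y.2 y.2
    have h₂ := key2 1 1 t 1 (by norm_num) (by norm_num) (by norm_num) (by norm_num)
      h0 h1 (by norm_num) (by norm_num) y.1 y.1 y.2 y.2 i k j j
    norm_num at h₁ h₂
    have u1 := h₁.mp (by linarith)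
    have u2 := h₂.mp (by linarith)
    linarith
  have prodEq : ∀ (i k j l : Fin 3) (y : Fin 3 × Fin 3) (s t : ℝ),
      0 ≤ s → s ≤ 1 → 0 ≤ t → t ≤ 1 →
      s*t*ν₁ (i,j) + s*(1-t)*ν₁ (i,l) + (1-s)*t*ν₁ (k,j) + (1-s)*(1-t)*ν₁ (k,l) = ν₁ y →
      s*t*ν₂ (i,j) + s*(1-t)*ν₂ (i,l) + (1-s)*t*ν₂ (k,j) + (1-s)*(1-t)*ν₂ (k,l) = ν₂ y := by
    intro i k j l y s t hs0 hs1 ht0 ht1 hv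
    have h₁ := key2 s t 1 1 hs0 hs1 ht0 ht1
      (by norm_num) (by norm_num) (by norm_num) (by norm_num) i k j l y.1 y.1 y.2 y.2
    have h₂ := key2 1 1 s t (by norm_num) (by norm_num) (by norm_num) (by norm_num)
      hs0 hs1 ht0 ht1 y.1 y.1 y.2 y.2 i k j l
    norm_num at h₁ h₂
    have u1 := h₁.mp (by linarith)
    have u2 := h₂.mp (by linarith)
    linarith
  have rowBtw : ∀ (i j l : Fin 3) (y : Fin 3 × Fin 3),
      ν₁ (i,l) ≤ ν₁ y → ν₁ y ≤ ν₁ (i,j) → ν₁ (i,l) < ν₁ (i,j) →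
      (ν₂ y - ν₂ (i,l)) * (ν₁ (i,j) - ν₁ (i,l)) = (ν₂ (i,j) - ν₂ (i,l)) * (ν₁ y - ν₁ (i,l)) := by
    intro i j l y hlo hhi hlt
    have hD : (0:ℝ) < ν₁ (i,j) - ν₁ (i,l) := by linarith
    set T := (ν₁ y - ν₁ (i,l)) / (ν₁ (i,j) - ν₁ (i,l)) with hT
    have h0 : 0 ≤ T := div_nonneg (by linarith) hD.le
    have h1 : T ≤ 1 := by rw [hT, div_le_one hD]; linarith
    have ht : T * (ν₁ (i,j) - ν₁ (i,l)) = ν₁ y - ν₁ (i,l) := div_mul_cancel₀ _ hD.ne'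
    have hv : T * ν₁ (i,j) + (1-T) * ν₁ (i,l) = ν₁ y := by linear_combination ht
    have h2 := mixRow i j l y T h0 h1 hv
    linear_combination (ν₂ (i,j) - ν₂ (i,l)) * ht - (ν₁ (i,j) - ν₁ (i,l)) * h2
  have colBtw : ∀ (j i k : Fin 3) (y : Fin 3 × Fin 3),
      ν₁ (k,j) ≤ ν₁ y → ν₁ y ≤ ν₁ (i,j) → ν₁ (k,j) < ν₁ (i,j) →
      (ν₂ y - ν₂ (k,j)) * (ν₁ (i,j) - ν₁ (k,j)) = (ν₂ (i,j) - ν₂ (k,j)) * (ν₁ y - ν₁ (k,j)) := by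
    intro j i k y hlo hhi hlt
    have hD : (0:ℝ) < ν₁ (i,j) - ν₁ (k,j) := by linarith
    set T := (ν₁ y - ν₁ (k,j)) / (ν₁ (i,j) - ν₁ (k,j)) with hT
    have h0 : 0 ≤ T := div_nonneg (by linarith) hD.le
    have h1 : T ≤ 1 := by rw [hT, div_le_one hD]; linarith
    have ht : T * (ν₁ (i,j) - ν₁ (k,j)) = ν₁ y - ν₁ (k,j) := div_mul_cancel₀ _ hD.ne'
    have hv : T * ν₁ (i,j) + (1-T) * ν₁ (k,j) = ν₁ y := by linear_combination ht
    have h2 := mixCol j i k y T h0 h1 hv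
    linear_combination (ν₂ (i,j) - ν₂ (k,j)) * ht - (ν₁ (i,j) - ν₁ (k,j)) * h2
  -- extremal cells
  obtain ⟨a, -, ha⟩ := Finset.exists_max_image (Finset.univ : Finset (Fin 3 × Fin 3)) ν₁
    ⟨((0:Fin 3), (0:Fin 3)), Finset.mem_univ _⟩
  obtain ⟨b, -, hbm⟩ := Finset.exists_min_image (Finset.univ : Finset (Fin 3 × Fin 3)) ν₁
    ⟨((0:Fin 3), (0:Fin 3)), Finset.mem_univ _⟩
  have ha' : ∀ c : Fin 3 × Fin 3, ν₁ c ≤ ν₁ a := fun c => ha c (Finset.mem_univ c)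
  have hb' : ∀ c : Fin 3 × Fin 3, ν₁ b ≤ ν₁ c := fun c => hbm c (Finset.mem_univ c)
  rcases eq_or_lt_of_le (hb' a) with hconst | hAB
  · -- ν₁ constant
    refine ⟨1, one_pos, ν₂ a + ν₁ a, fun i j => ?_⟩
    have h1 : ν₁ (i,j) = ν₁ a := le_antisymm (ha' _) (hconst ▸ hb' _)
    have h2 : ν₂ (i,j) = ν₂ a := EqT _ _ h1
    rw [h1, h2]; ring
  · -- nonconstant
    have hvBA : ν₂ a < ν₂ b := by
      by_contra h
      push_neg at h
      have := (pure_iff b a).mpr h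
      linarith
    have hc : ∀ c : Fin 3 × Fin 3,
        (ν₂ c - ν₂ a) * (ν₁ a - ν₁ b) = (ν₂ b - ν₂ a) * (ν₁ a - ν₁ c) := by
      intro c
      have hBc : ν₁ b ≤ ν₁ c := hb' c
      have hcA : ν₁ c ≤ ν₁ a := ha' c
      have hBm : ν₁ b ≤ ν₁ (a.1, b.2) := hb' _
      have hmA : ν₁ (a.1, b.2) ≤ ν₁ a := ha' _
      have hBm' : ν₁ b ≤ ν₁ (b.1, a.2) := hb' _
      have hm'A : ν₁ (b.1, a.2) ≤ ν₁ a := ha' _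
      rcases eq_or_lt_of_le hmA with h1A | h1A
      · -- ν₁ m = ν₁ a
        have hv : ν₂ (a.1, b.2) = ν₂ a := EqT _ _ h1A
        have e := colBtw b.2 a.1 b.1 c hBc (by linarith) (by simp only [Prod.mk.eta]; linarith)
        simp only [Prod.mk.eta] at e
        rw [h1A, hv] at e
        linear_combination e
      rcases eq_or_lt_of_le hBm with h1B | h1B
      · -- ν₁ b = ν₁ m
        have hv : ν₂ b = ν₂ (a.1, b.2) := EqT _ _ h1B
        have e := rowBtw a.1 a.2 b.2 c (by linarith) (by simp only [Prod.mk.eta]; linarith)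
          (by simp only [Prod.mk.eta]; linarith)
        simp only [Prod.mk.eta] at e
        rw [← h1B, ← hv] at e
        linear_combination e
      rcases eq_or_lt_of_le hm'A with h2A | h2A
      · -- ν₁ m' = ν₁ a
        have hv : ν₂ (b.1, a.2) = ν₂ a := EqT _ _ h2A
        have e := rowBtw b.1 a.2 b.2 c hBc (by linarith) (by simp only [Prod.mk.eta]; linarith)
        simp only [Prod.mk.eta] at e
        rw [h2A, hv] at e
        linear_combination e
      rcases eq_or_lt_of_le hBm' with h2B | h2B
      · -- ν₁ b = ν₁ m'
        have hv : ν₂ b = ν₂ (b.1, a.2) := EqT _ _ h2B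
        have e := colBtw a.2 a.1 b.1 c (by linarith) (by simp only [Prod.mk.eta]; linarith)
          (by simp only [Prod.mk.eta]; linarith)
        simp only [Prod.mk.eta] at e
        rw [← h2B, ← hv] at e
        linear_combination e
      -- now strictly interior values for both m and m'
      rcases lt_trichotomy (ν₁ (a.1, b.2)) (ν₁ (b.1, a.2)) with h12 | h12 | h12
      · -- c1 < c2
        have E1 := rowBtw b.1 a.2 b.2 (a.1, b.2) hBm h12.le h2B
        simp only [Prod.mk.eta] at E1
        have E2 := rowBtw a.1 a.2 b.2 (b.1, a.2) h12.le
          (by simp only [Prod.mk.eta]; linarith) (by simp only [Prod.mk.eta]; linarith)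
        simp only [Prod.mk.eta] at E2
        have hne : ν₁ (b.1, a.2) - ν₁ (a.1, b.2) ≠ 0 := by linarith
        have F2 : (ν₂ a - ν₂ (a.1, b.2)) * (ν₁ (b.1, a.2) - ν₁ b) =
            (ν₂ (b.1, a.2) - ν₂ b) * (ν₁ a - ν₁ (a.1, b.2)) := by
          apply mul_left_cancel₀ hne
          linear_combination (-(ν₁ a - ν₁ (a.1, b.2))) * E1 - (ν₁ (b.1, a.2) - ν₁ b) * E2
        have F3 : (ν₂ a - ν₂ b) * (ν₁ (b.1, a.2) - ν₁ b) =
            (ν₂ (b.1, a.2) - ν₂ b) * (ν₁ a - ν₁ b) := by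
          linear_combination F2 + E1
        have E3 : (ν₂ c - ν₂ b) * (ν₁ (b.1, a.2) - ν₁ b) =
            (ν₂ (b.1, a.2) - ν₂ b) * (ν₁ c - ν₁ b) := by
          rcases le_total (ν₁ c) (ν₁ (b.1, a.2)) with hX | hX
          · have e := rowBtw b.1 a.2 b.2 c hBc hX h2B
            simp only [Prod.mk.eta] at e
            exact e
          · have e := rowBtw a.1 a.2 b.2 c (by linarith)
              (by simp only [Prod.mk.eta]; linarith) (by simp only [Prod.mk.eta]; linarith)
            simp only [Prod.mk.eta] at e
            have hne2 : ν₁ a - ν₁ (a.1, b.2) ≠ 0 := by linarith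
            have F4 : (ν₂ c - ν₂ (a.1, b.2)) * (ν₁ (b.1, a.2) - ν₁ b) =
                (ν₂ (b.1, a.2) - ν₂ b) * (ν₁ c - ν₁ (a.1, b.2)) := by
              apply mul_left_cancel₀ hne2
              linear_combination (ν₁ (b.1, a.2) - ν₁ b) * e + (ν₁ c - ν₁ (a.1, b.2)) * F2
            linear_combination F4 + E1
        have hne3 : ν₁ (b.1, a.2) - ν₁ b ≠ 0 := by linarith
        apply mul_left_cancel₀ hne3
        linear_combination (ν₁ a - ν₁ b) * E3 + (ν₁ b - ν₁ c) * F3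
      · -- c1 = c2 : kink case, use product mixtures
        have hvm : ν₂ (a.1, b.2) = ν₂ (b.1, a.2) := EqT _ _ h12
        set r := Real.sqrt ((ν₁ (a.1, b.2) - ν₁ b) / (ν₁ a - ν₁ (a.1, b.2))) with hrdef
        have hdivpos : 0 < (ν₁ (a.1, b.2) - ν₁ b) / (ν₁ a - ν₁ (a.1, b.2)) :=
          div_pos (by linarith) (by linarith)
        have hr : 0 < r := Real.sqrt_pos.mpr hdivpos
        have hr2 : r^2 = (ν₁ (a.1, b.2) - ν₁ b) / (ν₁ a - ν₁ (a.1, b.2)) :=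
          Real.sq_sqrt hdivpos.le
        have hr2' : r^2 * (ν₁ a - ν₁ (a.1, b.2)) = ν₁ (a.1, b.2) - ν₁ b := by
          rw [hr2]; exact div_mul_cancel₀ _ (ne_of_gt (by linarith))
        have h1r : (0:ℝ) < 1 + r := by linarith
        obtain ⟨s, hsdef⟩ : ∃ s : ℝ, s = r / (1 + r) := ⟨_, rfl⟩
        have hs0 : 0 < s := by rw [hsdef]; exact div_pos hr h1r
        have hs1 : s < 1 := by rw [hsdef, div_lt_one h1r]; linarith
        have hsr : s * (1 + r) = r := by rw [hsdef]; exact div_mul_cancel₀ _ h1r.ne'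
        have hrs : (1 - s) * r = s := by linear_combination -hsr
        have hK : s^2 * (ν₁ a - ν₁ (a.1, b.2)) = (1-s)^2 * (ν₁ (a.1, b.2) - ν₁ b) := by
          linear_combination (-(ν₁ a - ν₁ (a.1, b.2))) * (s + (1-s)*r) * hrs + (1-s)^2 * hr2'
        have hv : s*s*ν₁ (a.1, a.2) + s*(1-s)*ν₁ (a.1, b.2) + (1-s)*s*ν₁ (b.1, a.2) +
            (1-s)*(1-s)*ν₁ (b.1, b.2) = ν₁ (a.1, b.2) := by
          simp only [Prod.mk.eta]
          linear_combination hK - (1-s)*s*h12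
        have EP := prodEq a.1 b.1 a.2 b.2 (a.1, b.2) s s hs0.le hs1.le hs0.le hs1.le hv
        simp only [Prod.mk.eta] at EP
        have Ek : (ν₂ a - ν₂ (a.1, b.2)) * (ν₁ (a.1, b.2) - ν₁ b) =
            (ν₂ (a.1, b.2) - ν₂ b) * (ν₁ a - ν₁ (a.1, b.2)) := by
          have hs2 : s^2 ≠ 0 := pow_ne_zero 2 hs0.ne'
          apply mul_left_cancel₀ hs2
          linear_combination (ν₁ (a.1, b.2) - ν₁ b) * EP +
            (ν₁ (a.1, b.2) - ν₁ b) * (1-s) * s * hvm - (ν₂ (a.1, b.2) - ν₂ b) * hK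
        rcases le_total (ν₁ c) (ν₁ (a.1, b.2)) with hX | hX
        · have E3 := colBtw b.2 a.1 b.1 c hBc hX (by simp only [Prod.mk.eta]; linarith)
          simp only [Prod.mk.eta] at E3
          have hne : ν₁ (a.1, b.2) - ν₁ b ≠ 0 := by linarith
          apply mul_left_cancel₀ hne
          linear_combination (ν₁ a - ν₁ b) * E3 + (ν₁ b - ν₁ c) * Ek
        · have E3 := rowBtw a.1 a.2 b.2 c hX (by simp only [Prod.mk.eta]; linarith)
            (by simp only [Prod.mk.eta]; linarith)
          simp only [Prod.mk.eta] at E3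
          have hne : ν₁ a - ν₁ (a.1, b.2) ≠ 0 := by linarith
          apply mul_left_cancel₀ hne
          linear_combination (ν₁ a - ν₁ b) * E3 + (ν₁ c - ν₁ a) * Ek
      · -- c2 < c1
        have E1 := colBtw b.2 a.1 b.1 (b.1, a.2) hBm' h12.le h1B
        simp only [Prod.mk.eta] at E1
        have E2 := colBtw a.2 a.1 b.1 (a.1, b.2) h12.le
          (by simp only [Prod.mk.eta]; linarith) (by simp only [Prod.mk.eta]; linarith)
        simp only [Prod.mk.eta] at E2
        have hne : ν₁ (a.1, b.2) - ν₁ (b.1, a.2) ≠ 0 := by linarith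
        have F2 : (ν₂ a - ν₂ (b.1, a.2)) * (ν₁ (a.1, b.2) - ν₁ b) =
            (ν₂ (a.1, b.2) - ν₂ b) * (ν₁ a - ν₁ (b.1, a.2)) := by
          apply mul_left_cancel₀ hne
          linear_combination (-(ν₁ a - ν₁ (b.1, a.2))) * E1 - (ν₁ (a.1, b.2) - ν₁ b) * E2
        have F3 : (ν₂ a - ν₂ b) * (ν₁ (a.1, b.2) - ν₁ b) =
            (ν₂ (a.1, b.2) - ν₂ b) * (ν₁ a - ν₁ b) := by
          linear_combination F2 + E1
        have E3 : (ν₂ c - ν₂ b) * (ν₁ (a.1, b.2) - ν₁ b) =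
            (ν₂ (a.1, b.2) - ν₂ b) * (ν₁ c - ν₁ b) := by
          rcases le_total (ν₁ c) (ν₁ (a.1, b.2)) with hX | hX
          · have e := colBtw b.2 a.1 b.1 c hBc hX h1B
            simp only [Prod.mk.eta] at e
            exact e
          · have e := colBtw a.2 a.1 b.1 c (by linarith)
              (by simp only [Prod.mk.eta]; linarith) (by simp only [Prod.mk.eta]; linarith)
            simp only [Prod.mk.eta] at e
            have hne2 : ν₁ a - ν₁ (b.1, a.2) ≠ 0 := by linarith
            have F4 : (ν₂ c - ν₂ (b.1, a.2)) * (ν₁ (a.1, b.2) - ν₁ b) =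
                (ν₂ (a.1, b.2) - ν₂ b) * (ν₁ c - ν₁ (b.1, a.2)) := by
              apply mul_left_cancel₀ hne2
              linear_combination (ν₁ (a.1, b.2) - ν₁ b) * e + (ν₁ c - ν₁ (b.1, a.2)) * F2
            linear_combination F4 + E1
        have hne3 : ν₁ (a.1, b.2) - ν₁ b ≠ 0 := by linarith
        apply mul_left_cancel₀ hne3
        linear_combination (ν₁ a - ν₁ b) * E3 + (ν₁ b - ν₁ c) * F3
    refine ⟨(ν₂ b - ν₂ a) / (ν₁ a - ν₁ b), div_pos (by linarith) (by linarith),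
      ν₂ a + (ν₂ b - ν₂ a) / (ν₁ a - ν₁ b) * ν₁ a, fun i j => ?_⟩
    have h := hc (i, j)
    have hD : ν₁ a - ν₁ b ≠ 0 := by linarith
    field_simp
    linear_combination h
end

section
/- Let P₁, P₂ be convex sets and u₁, u₂ : P₁ × P₂ → ℝ bi-affine with the game adversarial, and suppose the restriction property holds: for any finite subsets S₁ ⊆ P₁ and S₂ ⊆ P₂ with |S₁|, |S₂| ≤ 3, the restriction of the game to convex combinations of S₁ × S₂ satisfies the ADP conclusion (existence of α > 0, β with u₂ = -αu₁ + β on that restriction). Then u₂ = -α*u₁ + β* globally for some α* > 0, β* ∈ ℝ (assuming u₁ non-constant), or u₁ and u₂ are both constant. -/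
theorem stmt_11 {V₁ V₂ : Type*} [AddCommGroup V₁] [Module ℝ V₁] [AddCommGroup V₂] [Module ℝ V₂]
    (P₁ : Set V₁) (P₂ : Set V₂) (hP₁ : Convex ℝ P₁) (hP₂ : Convex ℝ P₂)
    (u₁ u₂ : V₁ → V₂ → ℝ)
    (hbi : ∀ u ∈ ({u₁, u₂} : Set (V₁ → V₂ → ℝ)),
      (∀ x ∈ P₁, ∀ y ∈ P₁, ∀ z ∈ P₂, ∀ t : ℝ, t ∈ Set.Icc (0:ℝ) 1 →
        u (t • x + (1 - t) • y) z = t * u x z + (1 - t) * u y z) ∧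
      (∀ x ∈ P₁, ∀ y ∈ P₂, ∀ z ∈ P₂, ∀ t : ℝ, t ∈ Set.Icc (0:ℝ) 1 →
        u x (t • y + (1 - t) • z) = t * u x y + (1 - t) * u x z))
    (hadv : ∀ σ₁ ∈ P₁, ∀ σ₂ ∈ P₂, ∀ τ₁ ∈ P₁, ∀ τ₂ ∈ P₂,
      (u₁ σ₁ σ₂ ≥ u₁ τ₁ τ₂ ↔ u₂ σ₁ σ₂ ≤ u₂ τ₁ τ₂))
    (hrestrict : ∀ (T₁ : Finset V₁) (T₂ : Finset V₂), ↑T₁ ⊆ P₁ → ↑T₂ ⊆ P₂ →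
      T₁.card ≤ 3 → T₂.card ≤ 3 →
      ∃ α : ℝ, 0 < α ∧ ∃ β : ℝ,
        ∀ x ∈ convexHull ℝ (T₁ : Set V₁), ∀ y ∈ convexHull ℝ (T₂ : Set V₂),
          u₂ x y = -α * u₁ x y + β) :
    (∃ α : ℝ, 0 < α ∧ ∃ β : ℝ, ∀ σ₁ ∈ P₁, ∀ σ₂ ∈ P₂, u₂ σ₁ σ₂ = -α * u₁ σ₁ σ₂ + β) ∨
    ((∃ c₁ : ℝ, ∀ σ₁ ∈ P₁, ∀ σ₂ ∈ P₂, u₁ σ₁ σ₂ = c₁) ∧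
     (∃ c₂ : ℝ, ∀ σ₁ ∈ P₁, ∀ σ₂ ∈ P₂, u₂ σ₁ σ₂ = c₂)) := by

  classical
  by_cases hne : ∃ a ∈ P₁, ∃ b ∈ P₂, ∃ c ∈ P₁, ∃ d ∈ P₂, u₁ a b ≠ u₁ c d
  · left
    obtain ⟨a, ha, b, hb, c, hc, d, hd, hne⟩ := hne
    have hsub1 : ↑({a, c} : Finset V₁) ⊆ P₁ := by
      intro x hx; simp at hx; rcases hx with rfl | rfl <;> assumption
    have hsub2 : ↑({b, d} : Finset V₂) ⊆ P₂ := by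
      intro x hx; simp at hx; rcases hx with rfl | rfl <;> assumption
    have hcard1 : ({a, c} : Finset V₁).card ≤ 3 :=
      (Finset.card_insert_le _ _).trans (by simp)
    have hcard2 : ({b, d} : Finset V₂).card ≤ 3 :=
      (Finset.card_insert_le _ _).trans (by simp)
    obtain ⟨α, hα, β, hαβ⟩ := hrestrict {a, c} {b, d} hsub1 hsub2 hcard1 hcard2
    refine ⟨α, hα, β, fun σ₁ h₁ σ₂ h₂ => ?_⟩
    have hsub1' : ↑({a, c, σ₁} : Finset V₁) ⊆ P₁ := by
      intro x hx; simp at hx; rcases hx with rfl | rfl | rfl <;> assumption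
    have hsub2' : ↑({b, d, σ₂} : Finset V₂) ⊆ P₂ := by
      intro x hx; simp at hx; rcases hx with rfl | rfl | rfl <;> assumption
    have hcard1' : ({a, c, σ₁} : Finset V₁).card ≤ 3 :=
      (Finset.card_insert_le _ _).trans (Nat.succ_le_succ
        ((Finset.card_insert_le _ _).trans (by simp)))
    have hcard2' : ({b, d, σ₂} : Finset V₂).card ≤ 3 :=
      (Finset.card_insert_le _ _).trans (Nat.succ_le_succ
        ((Finset.card_insert_le _ _).trans (by simp)))
    obtain ⟨α', hα', β', hαβ'⟩ := hrestrict {a, c, σ₁} {b, d, σ₂} hsub1' hsub2' hcard1' hcard2'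
    have mem1 : ∀ x ∈ ({a, c} : Finset V₁), x ∈ convexHull ℝ (({a, c} : Finset V₁) : Set V₁) :=
      fun x hx => subset_convexHull ℝ _ (by exact_mod_cast hx)
    have mem2 : ∀ x ∈ ({b, d} : Finset V₂), x ∈ convexHull ℝ (({b, d} : Finset V₂) : Set V₂) :=
      fun x hx => subset_convexHull ℝ _ (by exact_mod_cast hx)
    have mem1' : ∀ x ∈ ({a, c, σ₁} : Finset V₁),
        x ∈ convexHull ℝ (({a, c, σ₁} : Finset V₁) : Set V₁) :=
      fun x hx => subset_convexHull ℝ _ (by exact_mod_cast hx)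
    have mem2' : ∀ x ∈ ({b, d, σ₂} : Finset V₂),
        x ∈ convexHull ℝ (({b, d, σ₂} : Finset V₂) : Set V₂) :=
      fun x hx => subset_convexHull ℝ _ (by exact_mod_cast hx)
    have e1 := hαβ a (mem1 a (by simp)) b (mem2 b (by simp))
    have e2 := hαβ c (mem1 c (by simp)) d (mem2 d (by simp))
    have e1' := hαβ' a (mem1' a (by simp)) b (mem2' b (by simp))
    have e2' := hαβ' c (mem1' c (by simp)) d (mem2' d (by simp))
    have hαeq : α = α' := by
      have h : (α' - α) * (u₁ a b - u₁ c d) = 0 := by linarith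
      rcases mul_eq_zero.mp h with h | h
      · linarith
      · exact absurd (by linarith) hne
    have hβeq : β = β' := by rw [hαeq] at e1; linarith
    have := hαβ' σ₁ (mem1' σ₁ (by simp)) σ₂ (mem2' σ₂ (by simp))
    rw [hαeq, hβeq]; exact this
  · right
    push_neg at hne
    constructor
    · by_cases h : ∃ a ∈ P₁, ∃ b ∈ P₂, True
      · obtain ⟨a, ha, b, hb, -⟩ := h
        exact ⟨u₁ a b, fun σ₁ h₁ σ₂ h₂ => hne σ₁ h₁ σ₂ h₂ a ha b hb⟩
      · exact ⟨0, fun σ₁ h₁ σ₂ h₂ => absurd ⟨σ₁, h₁, σ₂, h₂, trivial⟩ h⟩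
    · by_cases h : ∃ a ∈ P₁, ∃ b ∈ P₂, True
      · obtain ⟨a, ha, b, hb, -⟩ := h
        refine ⟨u₂ a b, fun σ₁ h₁ σ₂ h₂ => ?_⟩
        have h1 := (hadv σ₁ h₁ σ₂ h₂ a ha b hb).mp
          (ge_of_eq (hne σ₁ h₁ σ₂ h₂ a ha b hb))
        have h2 := (hadv a ha b hb σ₁ h₁ σ₂ h₂).mp
          (ge_of_eq (hne a ha b hb σ₁ h₁ σ₂ h₂))
        linarith
      · exact ⟨0, fun σ₁ h₁ σ₂ h₂ => absurd ⟨σ₁, h₁, σ₂, h₂, trivial⟩ h⟩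
end

section
/- Let C be a convex subset of a real vector space and f, g : C → ℝ affine functions. If f and g represent the same total preorder on C (for all x, y ∈ C: f(x) ≤ f(y) ⟺ g(x) ≤ g(y)), and f is non-constant, then there exist α > 0 and β ∈ ℝ such that g = αf + β. -/
/-!
If `f` and `g` induce the same preorder on `C`, then `g` is constant on the level sets of `f`,
so `g` respects every convex combination that `f` sees: whenever `f c` lies between `f a` and
`f b`, the point `(f c, g c)` lies on the segment from `(f a, g a)` to `(f b, g b)`. Among any
three points one has the middle `f`-value, so the graph points `(f x, g x)`, `x ∈ C`, are all
collinear, and the line has positive slope because `f` and `g` increase together.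
-/

theorem lt_of_lt_of_le_iff {α β γ : Type*} [LinearOrder β] [LinearOrder γ] {C : Set α}
    {f : α → β} {g : α → γ} (hrep : ∀ x ∈ C, ∀ y ∈ C, (f x ≤ f y ↔ g x ≤ g y)) {x y : α}
    (hx : x ∈ C) (hy : y ∈ C) (h : f x < f y) : g x < g y :=
  lt_of_not_ge fun h' => h.not_ge ((hrep y hy x hx).2 h')

theorem sub_div_sub_pos_of_le_iff {α 𝕜 : Type*} [Field 𝕜] [LinearOrder 𝕜]
    [IsStrictOrderedRing 𝕜] {C : Set α} {f g : α → 𝕜}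
    (hrep : ∀ x ∈ C, ∀ y ∈ C, (f x ≤ f y ↔ g x ≤ g y)) {x y : α} (hx : x ∈ C) (hy : y ∈ C)
    (hne : f x ≠ f y) : 0 < (g y - g x) / (f y - f x) := by
  rcases hne.lt_or_gt with h | h
  · exact div_pos (sub_pos.2 (lt_of_lt_of_le_iff hrep hx hy h)) (sub_pos.2 h)
  · exact div_pos_of_neg_of_neg (sub_neg.2 (lt_of_lt_of_le_iff hrep hy hx h)) (sub_neg.2 h)

section Affine

variable {𝕜 V : Type*} [Field 𝕜] [LinearOrder 𝕜] [IsStrictOrderedRing 𝕜]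
  [AddCommGroup V] [Module 𝕜 V]

def IsAffineOn (C : Set V) (f : V → 𝕜) : Prop :=
  ∀ x ∈ C, ∀ y ∈ C, ∀ t ∈ Set.Icc (0 : 𝕜) 1, f (t • x + (1 - t) • y) = t * f x + (1 - t) * f y

variable {C : Set V} {f g : V → 𝕜} (hrep : ∀ x ∈ C, ∀ y ∈ C, (f x ≤ f y ↔ g x ≤ g y))
variable (hC : Convex 𝕜 C) (hf : IsAffineOn C f) (hg : IsAffineOn C g)
include hrep hC hf hg

theorem apply_eq_comb_of_apply_eq_comb {a b c : V} (ha : a ∈ C) (hb : b ∈ C) (hc : c ∈ C)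
    {t : 𝕜} (ht : t ∈ Set.Icc (0 : 𝕜) 1) (hfc : f c = t * f a + (1 - t) * f b) :
    g c = t * g a + (1 - t) * g b := by
  have hp : t • a + (1 - t) • b ∈ C := hC ha hb ht.1 (sub_nonneg.2 ht.2) (add_sub_cancel t 1)
  have hfp : f (t • a + (1 - t) • b) = f c := by rw [hf a ha b hb t ht, hfc]
  have hgp : g (t • a + (1 - t) • b) = g c :=
    le_antisymm ((hrep _ hp c hc).1 hfp.le) ((hrep c hc _ hp).1 hfp.ge)
  rw [← hgp, hg a ha b hb t ht]

theorem graph_collinear_of_le_of_le {a b c : V} (ha : a ∈ C) (hb : b ∈ C) (hc : c ∈ C)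
    (hac : f a ≤ f c) (hcb : f c ≤ f b) :
    (f b - f a) * (g c - g a) = (f c - f a) * (g b - g a) := by
  rcases (hac.trans hcb).eq_or_lt with hab | hab
  · have hca : f c = f a := le_antisymm (hab ▸ hcb) hac
    rw [← hab, hca, sub_self, zero_mul, zero_mul]
  obtain ⟨t, ht, htd⟩ : ∃ t ∈ Set.Icc (0 : 𝕜) 1, t * (f b - f a) = f c - f a :=
    ⟨(f c - f a) / (f b - f a),
      ⟨div_nonneg (sub_nonneg.2 hac) (sub_pos.2 hab).le,
        (div_le_one (sub_pos.2 hab)).2 (sub_le_sub_right hcb _)⟩,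
      div_mul_cancel₀ _ (sub_pos.2 hab).ne'⟩
  have hgc := apply_eq_comb_of_apply_eq_comb hrep hC hf hg hb ha hc ht (by linear_combination -htd)
  linear_combination (f b - f a) * hgc + (g b - g a) * htd

theorem graph_collinear {a b c : V} (ha : a ∈ C) (hb : b ∈ C) (hc : c ∈ C) :
    (f b - f a) * (g c - g a) = (f c - f a) * (g b - g a) := by
  have mid : ∀ {p q r : V}, p ∈ C → q ∈ C → r ∈ C → f p ≤ f r → f r ≤ f q →
      (f q - f p) * (g r - g p) = (f r - f p) * (g q - g p) :=
    fun hp hq hr => graph_collinear_of_le_of_le hrep hC hf hg hp hq hr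
  -- both sides differ by a determinant that is alternating in `a, b, c`, so it suffices to
  -- put the point with the middle `f`-value last
  rcases le_total (f a) (f b) with hab | hba
  · rcases le_total (f c) (f a) with hca | hac
    · linear_combination -mid hc hb ha hca hab
    · rcases le_total (f c) (f b) with hcb | hbc
      · exact mid ha hb hc hac hcb
      · linear_combination -mid ha hc hb hab hbc
  · rcases le_total (f c) (f b) with hcb | hbc
    · linear_combination mid hc ha hb hcb hba
    · rcases le_total (f c) (f a) with hca | hac
      · linear_combination -mid hb ha hc hbc hca
      · linear_combination mid hb hc ha hba hac

end Affine

theorem stmt_16 {V : Type*} [AddCommGroup V] [Module ℝ V]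
    (C : Set V) (hC : Convex ℝ C) (f g : V → ℝ)
    (hf : ∀ x ∈ C, ∀ y ∈ C, ∀ t : ℝ, t ∈ Set.Icc (0:ℝ) 1 →
      f (t • x + (1 - t) • y) = t * f x + (1 - t) * f y)
    (hg : ∀ x ∈ C, ∀ y ∈ C, ∀ t : ℝ, t ∈ Set.Icc (0:ℝ) 1 →
      g (t • x + (1 - t) • y) = t * g x + (1 - t) * g y)
    (hrep : ∀ x ∈ C, ∀ y ∈ C, (f x ≤ f y ↔ g x ≤ g y))
    (hnc : ∃ x ∈ C, ∃ y ∈ C, f x ≠ f y) :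
    ∃ α : ℝ, 0 < α ∧ ∃ β : ℝ, ∀ x ∈ C, g x = α * f x + β := by
  obtain ⟨x₀, hx₀, y₀, hy₀, hne⟩ := hnc
  have hd : f y₀ - f x₀ ≠ 0 := sub_ne_zero.2 hne.symm
  refine ⟨_, sub_div_sub_pos_of_le_iff hrep hx₀ hy₀ hne,
    g x₀ - (g y₀ - g x₀) / (f y₀ - f x₀) * f x₀, fun x hx => ?_⟩
  have hcol := graph_collinear hrep hC hf hg hx₀ hy₀ hx
  field_simp
  linear_combination hcol
end

section
/- Let S₁, S₂ be finite nonempty sets and ν₁, ν₂ : S₁ × S₂ → ℝ. Suppose the mixed extension of ⟨S₁, S₂, ν₁, ν₂⟩ is adversarial. Then there exists a function ν₁' : S₁ × S₂ → ℝ that is a positive affine transformation of ν₁ (ν₁' = αν₁ + β, α > 0) such that ν₁'(s) + ν₂(s) = 0 for all s ∈ S₁ × S₂, i.e., the game ⟨S₁, S₂, ν₁', ν₂⟩ is zero-sum. -/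
open Finset

noncomputable def mix2 {S : Type*} [DecidableEq S] (i i' : S) (t : ℝ) : S → ℝ :=
  fun k => t * (if k = i then 1 else 0) + (1 - t) * (if k = i' then 1 else 0)

lemma mix2_mem {S : Type*} [Fintype S] [DecidableEq S] (i i' : S) {t : ℝ}
    (h0 : 0 ≤ t) (h1 : t ≤ 1) : mix2 i i' t ∈ stdSimplex ℝ S := by
  constructor
  · intro k
    unfold mix2
    have a1 : (0:ℝ) ≤ (if k = i then (1:ℝ) else 0) := by split <;> norm_num
    have a2 : (0:ℝ) ≤ (if k = i' then (1:ℝ) else 0) := by split <;> norm_num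
    nlinarith
  · simp [mix2, Finset.sum_add_distrib, ← Finset.mul_sum, Finset.sum_ite_eq]

noncomputable def phi {S₁ S₂ : Type*} (ν : S₁ × S₂ → ℝ) (i i' : S₁) (j j' : S₂) (t u : ℝ) : ℝ :=
  t*u*ν (i,j) + t*(1-u)*ν (i,j') + (1-t)*u*ν (i',j) + (1-t)*(1-u)*ν (i',j')

lemma phi_dirac {S₁ S₂ : Type*} (ν : S₁ × S₂ → ℝ) (i : S₁) (j : S₂) :
    phi ν i i j j 1 1 = ν (i,j) := by unfold phi; ring

lemma sum_mix2 {S₁ S₂ : Type*} [Fintype S₁] [Fintype S₂] [DecidableEq S₁] [DecidableEq S₂]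
    (ν : S₁ × S₂ → ℝ) (i i' : S₁) (j j' : S₂) (t u : ℝ) :
    (∑ s₁, ∑ s₂, mix2 i i' t s₁ * mix2 j j' u s₂ * ν (s₁, s₂)) = phi ν i i' j j' t u := by
  unfold phi
  simp only [mix2, add_mul, mul_add, ite_mul, mul_ite, one_mul, zero_mul, mul_one, mul_zero,
    Finset.sum_add_distrib, Finset.sum_ite_eq, Finset.sum_ite_eq', Finset.mem_univ, if_true,
    ite_add_ite, add_zero, zero_add]
  ring

theorem stmt_17 {S₁ S₂ : Type*} [Fintype S₁] [Fintype S₂] [Nonempty S₁] [Nonempty S₂]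
    (ν₁ ν₂ : S₁ × S₂ → ℝ)
    (hadv : ∀ p₁ ∈ stdSimplex ℝ S₁, ∀ p₂ ∈ stdSimplex ℝ S₂,
      ∀ q₁ ∈ stdSimplex ℝ S₁, ∀ q₂ ∈ stdSimplex ℝ S₂,
      ((∑ s₁, ∑ s₂, p₁ s₁ * p₂ s₂ * ν₁ (s₁, s₂)) ≥ (∑ s₁, ∑ s₂, q₁ s₁ * q₂ s₂ * ν₁ (s₁, s₂)) ↔
       (∑ s₁, ∑ s₂, p₁ s₁ * p₂ s₂ * ν₂ (s₁, s₂)) ≤ (∑ s₁, ∑ s₂, q₁ s₁ * q₂ s₂ * ν₂ (s₁, s₂)))) :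
    ∃ ν₁' : S₁ × S₂ → ℝ,
      (∃ α : ℝ, 0 < α ∧ ∃ β : ℝ, ∀ s : S₁ × S₂, ν₁' s = α * ν₁ s + β) ∧
      (∀ s : S₁ × S₂, ν₁' s + ν₂ s = 0) := by
  classical
  obtain ⟨⟨a₁, a₂⟩, hA⟩ := Finite.exists_max ν₁
  obtain ⟨⟨b₁, b₂⟩, hB⟩ := Finite.exists_min ν₁
  -- the two iff tools
  have Hiff : ∀ (i i' : S₁) (j j' : S₂) (t u : ℝ), 0 ≤ t → t ≤ 1 → 0 ≤ u → u ≤ 1 →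
      ∀ (k k' : S₁) (l l' : S₂) (v w : ℝ), 0 ≤ v → v ≤ 1 → 0 ≤ w → w ≤ 1 →
      (phi ν₁ i i' j j' t u ≥ phi ν₁ k k' l l' v w ↔
        phi ν₂ i i' j j' t u ≤ phi ν₂ k k' l l' v w) := by
    intro i i' j j' t u ht0 ht1 hu0 hu1 k k' l l' v w hv0 hv1 hw0 hw1
    have h := hadv (mix2 i i' t) (mix2_mem i i' ht0 ht1) (mix2 j j' u) (mix2_mem j j' hu0 hu1)
      (mix2 k k' v) (mix2_mem k k' hv0 hv1) (mix2 l l' w) (mix2_mem l l' hw0 hw1)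
    rwa [sum_mix2, sum_mix2, sum_mix2, sum_mix2] at h
  have Heq : ∀ (i i' : S₁) (j j' : S₂) (t u : ℝ), 0 ≤ t → t ≤ 1 → 0 ≤ u → u ≤ 1 →
      ∀ (k k' : S₁) (l l' : S₂) (v w : ℝ), 0 ≤ v → v ≤ 1 → 0 ≤ w → w ≤ 1 →
      phi ν₁ i i' j j' t u = phi ν₁ k k' l l' v w →
      phi ν₂ i i' j j' t u = phi ν₂ k k' l l' v w := by
    intro i i' j j' t u ht0 ht1 hu0 hu1 k k' l l' v w hv0 hv1 hw0 hw1 h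
    have h1 := Hiff i i' j j' t u ht0 ht1 hu0 hu1 k k' l l' v w hv0 hv1 hw0 hw1
    have h2 := Hiff k k' l l' v w hv0 hv1 hw0 hw1 i i' j j' t u ht0 ht1 hu0 hu1
    exact le_antisymm (h1.mp (ge_of_eq h)) (h2.mp (ge_of_eq h.symm))
  have HeqD : ∀ (i : S₁) (j : S₂) (k : S₁) (l : S₂),
      ν₁ (i,j) = ν₁ (k,l) → ν₂ (i,j) = ν₂ (k,l) := by
    intro i j k l h
    have := Heq i i j j 1 1 zero_le_one le_rfl zero_le_one le_rfl k k l l 1 1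
      zero_le_one le_rfl zero_le_one le_rfl (by rw [phi_dirac, phi_dirac]; exact h)
    rwa [phi_dirac, phi_dirac] at this
  have HltD : ∀ (i : S₁) (j : S₂) (k : S₁) (l : S₂),
      ν₁ (k,l) < ν₁ (i,j) → ν₂ (i,j) < ν₂ (k,l) := by
    intro i j k l h
    have h1 := Hiff i i j j 1 1 zero_le_one le_rfl zero_le_one le_rfl k k l l 1 1
      zero_le_one le_rfl zero_le_one le_rfl
    have h2 := Hiff k k l l 1 1 zero_le_one le_rfl zero_le_one le_rfl i i j j 1 1
      zero_le_one le_rfl zero_le_one le_rfl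
    simp only [phi_dirac] at h1 h2
    have hle : ν₂ (i,j) ≤ ν₂ (k,l) := h1.mp (le_of_lt h)
    rcases lt_or_eq_of_le hle with h' | h'
    · exact h'
    · exact absurd (h2.mpr (le_of_eq h'.symm)) (not_le.mpr h)
  -- main claim
  obtain ⟨α, hα, key⟩ : ∃ α : ℝ, 0 < α ∧
      ∀ c : S₁ × S₂, ν₂ c = ν₂ (b₁,b₂) - α * (ν₁ c - ν₁ (b₁,b₂)) := by
    by_cases hconst : ν₁ (a₁,a₂) = ν₁ (b₁,b₂)
    · refine ⟨1, one_pos, fun c => ?_⟩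
      obtain ⟨c₁, c₂⟩ := c
      have h1 : ν₁ (c₁,c₂) = ν₁ (b₁,b₂) := le_antisymm (hconst ▸ hA (c₁,c₂)) (hB (c₁,c₂))
      rw [HeqD c₁ c₂ b₁ b₂ h1, h1]; ring
    · -- ν₁ not constant
      have hK : 0 < ν₁ (a₁,a₂) - ν₁ (b₁,b₂) :=
        sub_pos.mpr (lt_of_le_of_ne (hB (a₁,a₂)) fun h => hconst h.symm)
      have hKne : ν₁ (a₁,a₂) - ν₁ (b₁,b₂) ≠ 0 := ne_of_gt hK
      have hyab : ν₂ (a₁,a₂) < ν₂ (b₁,b₂) := HltD a₁ a₂ b₁ b₂ (by linarith)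
      refine ⟨(ν₂ (b₁,b₂) - ν₂ (a₁,a₂)) / (ν₁ (a₁,a₂) - ν₁ (b₁,b₂)),
        div_pos (by linarith) hK, ?_⟩
      suffices keymul : ∀ c : S₁ × S₂,
          (ν₂ c - ν₂ (b₁,b₂)) * (ν₁ (a₁,a₂) - ν₁ (b₁,b₂))
            = (ν₂ (a₁,a₂) - ν₂ (b₁,b₂)) * (ν₁ c - ν₁ (b₁,b₂)) by
        intro c
        have h := keymul c
        field_simp
        linear_combination h
      by_cases hxe : ν₁ (b₁,a₂) = ν₁ (b₁,b₂)
      · -- degenerate: the corner (b₁,a₂) is also a minimizer; single-line argument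
        intro c; obtain ⟨c₁, c₂⟩ := c
        obtain ⟨t, ht0, ht1, ht⟩ : ∃ t : ℝ, 0 ≤ t ∧ t ≤ 1 ∧
            t * (ν₁ (a₁,a₂) - ν₁ (b₁,b₂)) = ν₁ (c₁,c₂) - ν₁ (b₁,b₂) :=
          ⟨(ν₁ (c₁,c₂) - ν₁ (b₁,b₂)) / (ν₁ (a₁,a₂) - ν₁ (b₁,b₂)),
            div_nonneg (by linarith [hB (c₁,c₂)]) hK.le,
            by rw [div_le_one hK]; linarith [hA (c₁,c₂)],
            div_mul_cancel₀ _ hKne⟩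
        have e1 := Heq a₁ b₁ a₂ a₂ t 1 ht0 ht1 zero_le_one le_rfl c₁ c₁ c₂ c₂ 1 1
          zero_le_one le_rfl zero_le_one le_rfl (by
            rw [phi_dirac]; unfold phi; linear_combination ht + (1-t) * hxe)
        rw [phi_dirac] at e1
        unfold phi at e1
        have hye : ν₂ (b₁,a₂) = ν₂ (b₁,b₂) := HeqD b₁ a₂ b₁ b₂ hxe
        linear_combination (-(ν₁ (a₁,a₂) - ν₁ (b₁,b₂))) * e1
          + (ν₁ (a₁,a₂) - ν₁ (b₁,b₂)) * (1-t) * hye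
          + (ν₂ (a₁,a₂) - ν₂ (b₁,b₂)) * ht
      by_cases hxd : ν₁ (a₁,b₂) = ν₁ (b₁,b₂)
      · -- degenerate: the corner (a₁,b₂) is also a minimizer; single-line argument
        intro c; obtain ⟨c₁, c₂⟩ := c
        obtain ⟨t, ht0, ht1, ht⟩ : ∃ t : ℝ, 0 ≤ t ∧ t ≤ 1 ∧
            t * (ν₁ (a₁,a₂) - ν₁ (b₁,b₂)) = ν₁ (c₁,c₂) - ν₁ (b₁,b₂) :=
          ⟨(ν₁ (c₁,c₂) - ν₁ (b₁,b₂)) / (ν₁ (a₁,a₂) - ν₁ (b₁,b₂)),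
            div_nonneg (by linarith [hB (c₁,c₂)]) hK.le,
            by rw [div_le_one hK]; linarith [hA (c₁,c₂)],
            div_mul_cancel₀ _ hKne⟩
        have e1 := Heq a₁ a₁ a₂ b₂ 1 t zero_le_one le_rfl ht0 ht1 c₁ c₁ c₂ c₂ 1 1
          zero_le_one le_rfl zero_le_one le_rfl (by
            rw [phi_dirac]; unfold phi; linear_combination ht + (1-t) * hxd)
        rw [phi_dirac] at e1
        unfold phi at e1
        have hyd : ν₂ (a₁,b₂) = ν₂ (b₁,b₂) := HeqD a₁ b₂ b₁ b₂ hxd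
        linear_combination (-(ν₁ (a₁,a₂) - ν₁ (b₁,b₂))) * e1
          + (ν₁ (a₁,a₂) - ν₁ (b₁,b₂)) * (1-t) * hyd
          + (ν₂ (a₁,a₂) - ν₂ (b₁,b₂)) * ht
      -- main (nondegenerate) case
      have hp : 0 < ν₁ (a₁,b₂) - ν₁ (b₁,b₂) :=
        sub_pos.mpr (lt_of_le_of_ne (hB (a₁,b₂)) fun h => hxd h.symm)
      have hq : 0 < ν₁ (b₁,a₂) - ν₁ (b₁,b₂) :=
        sub_pos.mpr (lt_of_le_of_ne (hB (b₁,a₂)) fun h => hxe h.symm)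
      -- step 1 : p' q = q' p
      obtain ⟨ε₁, hε₁0, hε₁t, hε₁u⟩ : ∃ ε : ℝ, 0 < ε ∧
          (ν₁ (b₁,a₂) - ν₁ (b₁,b₂)) * ε ≤ 1 ∧ (ν₁ (a₁,b₂) - ν₁ (b₁,b₂)) * ε ≤ 1 :=
        ⟨1 / ((ν₁ (a₁,b₂) - ν₁ (b₁,b₂)) + (ν₁ (b₁,a₂) - ν₁ (b₁,b₂)) + 1), by positivity,
          by rw [mul_one_div, div_le_one (by linarith)]; linarith,
          by rw [mul_one_div, div_le_one (by linarith)]; linarith⟩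
      have e1 := Heq a₁ b₁ a₂ b₂ ((ν₁ (b₁,a₂) - ν₁ (b₁,b₂)) * ε₁) 0
        (mul_nonneg hq.le hε₁0.le) hε₁t le_rfl zero_le_one
        a₁ b₁ a₂ b₂ 0 ((ν₁ (a₁,b₂) - ν₁ (b₁,b₂)) * ε₁)
        le_rfl zero_le_one (mul_nonneg hp.le hε₁0.le) hε₁u
        (by unfold phi; ring)
      unfold phi at e1
      have Rel1 : (ν₂ (a₁,b₂) - ν₂ (b₁,b₂)) * (ν₁ (b₁,a₂) - ν₁ (b₁,b₂))
          = (ν₂ (b₁,a₂) - ν₂ (b₁,b₂)) * (ν₁ (a₁,b₂) - ν₁ (b₁,b₂)) :=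
        mul_right_cancel₀ (ne_of_gt hε₁0) (by linear_combination e1)
      -- step 2 : r' q = q' r
      obtain ⟨ε, hε0, hε1, hεval⟩ : ∃ ε : ℝ, 0 < ε ∧ ε ≤ 1 ∧
          ε * ((ν₁ (a₁,b₂) - ν₁ (b₁,b₂)) + (ν₁ (b₁,a₂) - ν₁ (b₁,b₂))
            + (ν₁ (a₁,a₂) - ν₁ (b₁,b₂)) + 1) = ν₁ (b₁,a₂) - ν₁ (b₁,b₂) :=
        ⟨(ν₁ (b₁,a₂) - ν₁ (b₁,b₂)) / ((ν₁ (a₁,b₂) - ν₁ (b₁,b₂)) + (ν₁ (b₁,a₂) - ν₁ (b₁,b₂))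
            + (ν₁ (a₁,a₂) - ν₁ (b₁,b₂)) + 1), by positivity,
          by rw [div_le_one (by linarith)]; linarith,
          div_mul_cancel₀ _ (by positivity)⟩
      have hrlow : ν₁ (a₁,b₂) ≤ ν₁ (a₁,a₂) := hA (a₁,b₂)
      have hrhigh : ν₁ (b₁,b₂) ≤ ν₁ (b₁,a₂) := hB (b₁,a₂)
      have hnum0 : 0 ≤ (ν₁ (a₁,b₂) - ν₁ (b₁,b₂)) * ε + (ν₁ (b₁,a₂) - ν₁ (b₁,b₂)) * ε
          + (ν₁ (a₁,a₂) - ν₁ (a₁,b₂) - ν₁ (b₁,a₂) + ν₁ (b₁,b₂)) * (ε * ε) := by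
        nlinarith [hp, hq, hε0, hε1]
      have hnum1 : (ν₁ (a₁,b₂) - ν₁ (b₁,b₂)) * ε + (ν₁ (b₁,a₂) - ν₁ (b₁,b₂)) * ε
          + (ν₁ (a₁,a₂) - ν₁ (a₁,b₂) - ν₁ (b₁,a₂) + ν₁ (b₁,b₂)) * (ε * ε)
          ≤ ν₁ (b₁,a₂) - ν₁ (b₁,b₂) := by
        have hrK : ν₁ (a₁,a₂) - ν₁ (a₁,b₂) - ν₁ (b₁,a₂) + ν₁ (b₁,b₂)
            ≤ ν₁ (a₁,a₂) - ν₁ (b₁,b₂) := by linarith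
        have h1 : (ν₁ (a₁,a₂) - ν₁ (a₁,b₂) - ν₁ (b₁,a₂) + ν₁ (b₁,b₂)) * (ε*ε)
            ≤ (ν₁ (a₁,a₂) - ν₁ (b₁,b₂)) * (ε*ε) :=
          mul_le_mul_of_nonneg_right hrK (by positivity)
        have h2 : (ν₁ (a₁,a₂) - ν₁ (b₁,b₂)) * (ε*ε) ≤ (ν₁ (a₁,a₂) - ν₁ (b₁,b₂)) * ε := by
          nlinarith [mul_nonneg (mul_nonneg hK.le hε0.le) (sub_nonneg.mpr hε1)]
        have h3 : (ν₁ (a₁,b₂) - ν₁ (b₁,b₂)) * ε + (ν₁ (b₁,a₂) - ν₁ (b₁,b₂)) * ε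
            + (ν₁ (a₁,a₂) - ν₁ (b₁,b₂)) * ε = (ν₁ (b₁,a₂) - ν₁ (b₁,b₂)) - ε := by
          linear_combination hεval
        linarith
      obtain ⟨u₂, hu₂0, hu₂1, hu₂⟩ : ∃ u : ℝ, 0 ≤ u ∧ u ≤ 1 ∧
          u * (ν₁ (b₁,a₂) - ν₁ (b₁,b₂)) = (ν₁ (a₁,b₂) - ν₁ (b₁,b₂)) * ε
            + (ν₁ (b₁,a₂) - ν₁ (b₁,b₂)) * ε
            + (ν₁ (a₁,a₂) - ν₁ (a₁,b₂) - ν₁ (b₁,a₂) + ν₁ (b₁,b₂)) * (ε * ε) :=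
        ⟨((ν₁ (a₁,b₂) - ν₁ (b₁,b₂)) * ε + (ν₁ (b₁,a₂) - ν₁ (b₁,b₂)) * ε
            + (ν₁ (a₁,a₂) - ν₁ (a₁,b₂) - ν₁ (b₁,a₂) + ν₁ (b₁,b₂)) * (ε * ε))
              / (ν₁ (b₁,a₂) - ν₁ (b₁,b₂)),
          div_nonneg hnum0 hq.le, by rw [div_le_one hq]; linarith,
          div_mul_cancel₀ _ (ne_of_gt hq)⟩
      have e2 := Heq a₁ b₁ a₂ b₂ ε ε hε0.le hε1 hε0.le hε1
        a₁ b₁ a₂ b₂ 0 u₂ le_rfl zero_le_one hu₂0 hu₂1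
        (by unfold phi; linear_combination -hu₂)
      unfold phi at e2
      have Rel2 : (ν₂ (a₁,a₂) - ν₂ (a₁,b₂) - ν₂ (b₁,a₂) + ν₂ (b₁,b₂)) * (ν₁ (b₁,a₂) - ν₁ (b₁,b₂))
          = (ν₂ (b₁,a₂) - ν₂ (b₁,b₂)) * (ν₁ (a₁,a₂) - ν₁ (a₁,b₂) - ν₁ (b₁,a₂) + ν₁ (b₁,b₂)) :=
        mul_right_cancel₀ (by positivity : ε * ε ≠ 0)
          (by linear_combination (ν₁ (b₁,a₂) - ν₁ (b₁,b₂)) * e2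
            + (ν₂ (b₁,a₂) - ν₂ (b₁,b₂)) * hu₂ - ε * Rel1)
      -- consequences
      have hq'K : (ν₂ (b₁,a₂) - ν₂ (b₁,b₂)) * (ν₁ (a₁,a₂) - ν₁ (b₁,b₂))
          = (ν₁ (b₁,a₂) - ν₁ (b₁,b₂)) * (ν₂ (a₁,a₂) - ν₂ (b₁,b₂)) := by
        linear_combination -Rel1 - Rel2
      have hp'K : (ν₂ (a₁,b₂) - ν₂ (b₁,b₂)) * (ν₁ (a₁,a₂) - ν₁ (b₁,b₂))
          = (ν₁ (a₁,b₂) - ν₁ (b₁,b₂)) * (ν₂ (a₁,a₂) - ν₂ (b₁,b₂)) :=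
        mul_right_cancel₀ (ne_of_gt hq) (by
          linear_combination (ν₁ (a₁,a₂) - ν₁ (b₁,b₂)) * Rel1
            + (ν₁ (a₁,b₂) - ν₁ (b₁,b₂)) * hq'K)
      -- final: arbitrary pure profile
      intro c; obtain ⟨c₁, c₂⟩ := c
      by_cases hcd : ν₁ (c₁,c₂) ≤ ν₁ (a₁,b₂)
      · obtain ⟨t, ht0, ht1, ht⟩ : ∃ t : ℝ, 0 ≤ t ∧ t ≤ 1 ∧
            t * (ν₁ (a₁,b₂) - ν₁ (b₁,b₂)) = ν₁ (c₁,c₂) - ν₁ (b₁,b₂) :=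
          ⟨(ν₁ (c₁,c₂) - ν₁ (b₁,b₂)) / (ν₁ (a₁,b₂) - ν₁ (b₁,b₂)),
            div_nonneg (by linarith [hB (c₁,c₂)]) hp.le,
            by rw [div_le_one hp]; linarith,
            div_mul_cancel₀ _ (ne_of_gt hp)⟩
        have e3 := Heq a₁ b₁ a₂ b₂ t 0 ht0 ht1 le_rfl zero_le_one c₁ c₁ c₂ c₂ 1 1
          zero_le_one le_rfl zero_le_one le_rfl
          (by rw [phi_dirac]; unfold phi; linear_combination ht)
        rw [phi_dirac] at e3
        unfold phi at e3
        linear_combination (-(ν₁ (a₁,a₂) - ν₁ (b₁,b₂))) * e3 + t * hp'K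
          + (ν₂ (a₁,a₂) - ν₂ (b₁,b₂)) * ht
      · have hMd : 0 < ν₁ (a₁,a₂) - ν₁ (a₁,b₂) := by
          have := hA (c₁,c₂); linarith [not_le.mp hcd]
        obtain ⟨u, hu0, hu1, hu⟩ : ∃ u : ℝ, 0 ≤ u ∧ u ≤ 1 ∧
            u * (ν₁ (a₁,a₂) - ν₁ (a₁,b₂)) = ν₁ (c₁,c₂) - ν₁ (a₁,b₂) :=
          ⟨(ν₁ (c₁,c₂) - ν₁ (a₁,b₂)) / (ν₁ (a₁,a₂) - ν₁ (a₁,b₂)),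
            div_nonneg (by linarith [not_le.mp hcd]) hMd.le,
            by rw [div_le_one hMd]; linarith [hA (c₁,c₂)],
            div_mul_cancel₀ _ (ne_of_gt hMd)⟩
        have e4 := Heq a₁ b₁ a₂ b₂ 1 u zero_le_one le_rfl hu0 hu1 c₁ c₁ c₂ c₂ 1 1
          zero_le_one le_rfl zero_le_one le_rfl
          (by rw [phi_dirac]; unfold phi; linear_combination hu)
        rw [phi_dirac] at e4
        unfold phi at e4
        linear_combination (-(ν₁ (a₁,a₂) - ν₁ (b₁,b₂))) * e4 + (1-u) * hp'K
          + (ν₂ (a₁,a₂) - ν₂ (b₁,b₂)) * hu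
  exact ⟨fun s => α * ν₁ s + (-(α * ν₁ (b₁,b₂)) - ν₂ (b₁,b₂)),
    ⟨α, hα, -(α * ν₁ (b₁,b₂)) - ν₂ (b₁,b₂), fun s => rfl⟩,
    fun s => by rw [key s]; ring⟩
end

section
/- Let P₁, P₂ be convex sets and u₁, u₂ : P₁ × P₂ → ℝ bi-affine. If the game ⟨P₁, P₂, u₁, u₂⟩ is adversarial, then there exists α > 0 such that αu₁ + u₂ is constant on P₁ × P₂. -/
def col (a1 a2 b1 b2 c1 c2 : ℝ) : Prop :=
  (b1 - a1) * (c2 - a2) = (c1 - a1) * (b2 - a2)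

lemma col_refl₁ (a1 a2 b1 b2 : ℝ) : col a1 a2 b1 b2 a1 a2 := by unfold col; ring

lemma col_refl₂ (a1 a2 b1 b2 : ℝ) : col a1 a2 b1 b2 b1 b2 := by unfold col; ring

lemma col_swap12 {a1 a2 b1 b2 c1 c2 : ℝ} (h : col a1 a2 b1 b2 c1 c2) :
    col b1 b2 a1 a2 c1 c2 := by unfold col at *; linear_combination -h

lemma col_swap23 {a1 a2 b1 b2 c1 c2 : ℝ} (h : col a1 a2 b1 b2 c1 c2) :
    col a1 a2 c1 c2 b1 b2 := by unfold col at *; linear_combination -h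

lemma col_line {a1 a2 b1 b2 c1 c2 d1 d2 e1 e2 : ℝ} (hab : a1 ≠ b1)
    (hc : col a1 a2 b1 b2 c1 c2) (hd : col a1 a2 b1 b2 d1 d2) (he : col a1 a2 b1 b2 e1 e2) :
    col c1 c2 d1 d2 e1 e2 := by
  have hb : b1 - a1 ≠ 0 := sub_ne_zero.mpr (Ne.symm hab)
  unfold col at hc hd he
  have hc' : c2 = a2 + (c1 - a1) * ((b2 - a2) / (b1 - a1)) := by
    field_simp
    linear_combination hc
  have hd' : d2 = a2 + (d1 - a1) * ((b2 - a2) / (b1 - a1)) := by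
    field_simp
    linear_combination hd
  have he' : e2 = a2 + (e1 - a1) * ((b2 - a2) / (b1 - a1)) := by
    field_simp
    linear_combination he
  unfold col
  rw [hc', hd', he']
  ring

lemma col_glue {p1 p2 q1 q2 r1 r2 w11 w12 w21 w22 : ℝ}
    (hw : w11 ≠ w21) (hpw : p1 ≠ w21) (hwq : w11 ≠ q1)
    (hA : col p1 p2 w21 w22 w11 w12) (hB : col w11 w12 q1 q2 w21 w22)
    (hR : col p1 p2 w21 w22 r1 r2 ∨ col w11 w12 q1 q2 r1 r2) :
    col p1 p2 q1 q2 r1 r2 := by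
  have s1 : col w11 w12 w21 w22 p1 p2 :=
    col_line hpw hA (col_refl₂ _ _ _ _) (col_refl₁ _ _ _ _)
  have s2 : col w21 w22 w11 w12 q1 q2 :=
    col_line hwq hB (col_refl₁ _ _ _ _) (col_refl₂ _ _ _ _)
  have s2' : col w11 w12 w21 w22 q1 q2 := col_swap12 s2
  have s3 : col w11 w12 w21 w22 r1 r2 := by
    rcases hR with hRl | hRr
    · exact col_line hpw hA (col_refl₂ _ _ _ _) hRl
    · exact col_swap12 (col_line hwq hB (col_refl₁ _ _ _ _) hRr)
  exact col_line hw s1 s2' s3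

lemma col_glue3 {p1 p2 e1 e2 q1 q2 a1 a2 b1 b2 r1 r2 : ℝ}
    (hpe : p1 ≠ e1) (hab : a1 ≠ b1) (heq : e1 ≠ q1) (hae : a1 ≠ e1) (heb : e1 ≠ b1)
    (h1 : col p1 p2 e1 e2 a1 a2) (h2 : col a1 a2 b1 b2 e1 e2) (h3 : col e1 e2 q1 q2 b1 b2)
    (hR : col p1 p2 e1 e2 r1 r2 ∨ col e1 e2 q1 q2 r1 r2) :
    col p1 p2 q1 q2 r1 r2 := by
  have t1 : col a1 a2 e1 e2 p1 p2 :=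
    col_line hpe h1 (col_refl₂ _ _ _ _) (col_refl₁ _ _ _ _)
  have t2 : col e1 e2 a1 a2 b1 b2 :=
    col_line hab h2 (col_refl₁ _ _ _ _) (col_refl₂ _ _ _ _)
  have t2' : col a1 a2 e1 e2 b1 b2 := col_swap12 t2
  have t3 : col b1 b2 e1 e2 q1 q2 :=
    col_line heq h3 (col_refl₁ _ _ _ _) (col_refl₂ _ _ _ _)
  have t4 : col a1 a2 e1 e2 q1 q2 := by
    have hEBA : col e1 e2 b1 b2 a1 a2 := col_swap23 t2
    have hEBQ : col e1 e2 b1 b2 q1 q2 := col_swap12 t3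
    exact col_line heb hEBA (col_refl₁ _ _ _ _) hEBQ
  have t5 : col a1 a2 e1 e2 r1 r2 := by
    rcases hR with hRl | hRr
    · exact col_line hpe h1 (col_refl₂ _ _ _ _) hRl
    · have hBER : col b1 b2 e1 e2 r1 r2 :=
        col_line heq h3 (col_refl₁ _ _ _ _) hRr
      have hBEA : col b1 b2 e1 e2 a1 a2 := col_swap12 (col_swap23 t2)
      exact col_line (fun h => heb h.symm) hBEA (col_refl₂ _ _ _ _) hBER
  exact col_line hae t1 t4 t5

theorem stmt_19 {V₁ V₂ : Type*} [AddCommGroup V₁] [Module ℝ V₁] [AddCommGroup V₂] [Module ℝ V₂]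
    (P₁ : Set V₁) (P₂ : Set V₂) (hP₁ : Convex ℝ P₁) (hP₂ : Convex ℝ P₂)
    (u₁ u₂ : V₁ → V₂ → ℝ)
    (hbi : ∀ u ∈ ({u₁, u₂} : Set (V₁ → V₂ → ℝ)),
      (∀ x ∈ P₁, ∀ y ∈ P₁, ∀ z ∈ P₂, ∀ t : ℝ, t ∈ Set.Icc (0:ℝ) 1 →
        u (t • x + (1 - t) • y) z = t * u x z + (1 - t) * u y z) ∧
      (∀ x ∈ P₁, ∀ y ∈ P₂, ∀ z ∈ P₂, ∀ t : ℝ, t ∈ Set.Icc (0:ℝ) 1 →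
        u x (t • y + (1 - t) • z) = t * u x y + (1 - t) * u x z))
    (hadv : ∀ σ₁ ∈ P₁, ∀ σ₂ ∈ P₂, ∀ τ₁ ∈ P₁, ∀ τ₂ ∈ P₂,
      (u₁ σ₁ σ₂ ≥ u₁ τ₁ τ₂ ↔ u₂ σ₁ σ₂ ≤ u₂ τ₁ τ₂)) :
    ((∃ c : ℝ, ∀ σ₁ ∈ P₁, ∀ σ₂ ∈ P₂, u₁ σ₁ σ₂ + u₂ σ₁ σ₂ = c) ↔
     (∃ β : ℝ, ∀ σ₁ ∈ P₁, ∀ σ₂ ∈ P₂, u₂ σ₁ σ₂ = -u₁ σ₁ σ₂ + β)) ∧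
    (∃ α : ℝ, 0 < α ∧ ∃ c : ℝ, ∀ σ₁ ∈ P₁, ∀ σ₂ ∈ P₂, α * u₁ σ₁ σ₂ + u₂ σ₁ σ₂ = c) := by
  constructor
  · constructor
    · rintro ⟨c, hc⟩
      exact ⟨c, fun σ₁ h₁ σ₂ h₂ => by linarith [hc σ₁ h₁ σ₂ h₂]⟩
    · rintro ⟨β, hβ⟩
      exact ⟨β, fun σ₁ h₁ σ₂ h₂ => by linarith [hβ σ₁ h₁ σ₂ h₂]⟩
  -- the interesting part
  by_cases hne₁ : P₁.Nonempty
  swap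
  · exact ⟨1, one_pos, 0, fun σ₁ h₁ => absurd ⟨σ₁, h₁⟩ hne₁⟩
  by_cases hne₂ : P₂.Nonempty
  swap
  · exact ⟨1, one_pos, 0, fun σ₁ h₁ σ₂ h₂ => absurd ⟨σ₂, h₂⟩ hne₂⟩
  obtain ⟨a0, ha0⟩ := hne₁
  obtain ⟨b0, hb0⟩ := hne₂
  have hbi₁ := hbi u₁ (Set.mem_insert _ _)
  have hbi₂ := hbi u₂ (Set.mem_insert_of_mem _ rfl)
  have factE : ∀ x ∈ P₁, ∀ y ∈ P₂, ∀ x' ∈ P₁, ∀ y' ∈ P₂,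
      u₁ x y = u₁ x' y' → u₂ x y = u₂ x' y' := by
    intro x hx y hy x' hx' y' hy' h
    have h1 := (hadv x hx y hy x' hx' y' hy').mp (le_of_eq h.symm)
    have h2 := (hadv x' hx' y' hy' x hx y hy).mp (le_of_eq h)
    linarith
  have factS : ∀ x ∈ P₁, ∀ y ∈ P₂, ∀ x' ∈ P₁, ∀ y' ∈ P₂,
      u₁ x y > u₁ x' y' → u₂ x y < u₂ x' y' := by
    intro x hx y hy x' hx' y' hy' h
    have h1 := (hadv x hx y hy x' hx' y' hy').mp (le_of_lt h)
    rcases lt_or_ge (u₂ x y) (u₂ x' y') with h' | h'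
    · exact h'
    · have := (hadv x' hx' y' hy' x hx y hy).mpr h'
      linarith
  have seg2 : ∀ x ∈ P₁, ∀ y ∈ P₂, ∀ y' ∈ P₂, ∀ v : ℝ,
      u₁ x y ≤ v → v ≤ u₁ x y' → ∃ z ∈ P₂, u₁ x z = v ∧
        col (u₁ x y) (u₂ x y) (u₁ x y') (u₂ x y') v (u₂ x z) := by
    intro x hx y hy y' hy' v hlo hhi
    rcases eq_or_lt_of_le (le_trans hlo hhi) with heq | hlt
    · refine ⟨y, hy, le_antisymm hlo (by linarith), ?_⟩
      unfold col
      have : v = u₁ x y := by linarith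
      rw [this]
      ring
    · set e := u₁ x y with he
      set e' := u₁ x y' with he'
      set t : ℝ := (v - e) / (e' - e) with ht
      have hden : e' - e ≠ 0 := by intro h; rw [sub_eq_zero] at h; linarith
      have ht0 : 0 ≤ t := div_nonneg (by linarith) (by linarith)
      have ht1 : t ≤ 1 := (div_le_one (by linarith)).mpr (by linarith)
      have hmem : t • y' + (1 - t) • y ∈ P₂ := hP₂ hy' hy ht0 (by linarith) (by ring)
      have hv1 : u₁ x (t • y' + (1 - t) • y) = t * e' + (1 - t) * e :=
        hbi₁.2 x hx y' hy' y hy t ⟨ht0, ht1⟩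
      have hv2 : u₂ x (t • y' + (1 - t) • y) = t * u₂ x y' + (1 - t) * u₂ x y :=
        hbi₂.2 x hx y' hy' y hy t ⟨ht0, ht1⟩
      have htv : t * (e' - e) = v - e := by
        rw [ht]; field_simp
      refine ⟨t • y' + (1 - t) • y, hmem, by rw [hv1]; nlinarith [htv], ?_⟩
      unfold col
      rw [hv2]
      linear_combination (u₂ x y' - u₂ x y) * htv
  have seg1 : ∀ y ∈ P₂, ∀ x ∈ P₁, ∀ x' ∈ P₁, ∀ v : ℝ,
      u₁ x y ≤ v → v ≤ u₁ x' y → ∃ z ∈ P₁, u₁ z y = v ∧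
        col (u₁ x y) (u₂ x y) (u₁ x' y) (u₂ x' y) v (u₂ z y) := by
    intro y hy x hx x' hx' v hlo hhi
    rcases eq_or_lt_of_le (le_trans hlo hhi) with heq | hlt
    · refine ⟨x, hx, le_antisymm hlo (by linarith), ?_⟩
      unfold col
      have : v = u₁ x y := by linarith
      rw [this]
      ring
    · set e := u₁ x y with he
      set e' := u₁ x' y with he'
      set t : ℝ := (v - e) / (e' - e) with ht
      have hden : e' - e ≠ 0 := by intro h; rw [sub_eq_zero] at h; linarith
      have ht0 : 0 ≤ t := div_nonneg (by linarith) (by linarith)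
      have ht1 : t ≤ 1 := (div_le_one (by linarith)).mpr (by linarith)
      have hmem : t • x' + (1 - t) • x ∈ P₁ := hP₁ hx' hx ht0 (by linarith) (by ring)
      have hv1 : u₁ (t • x' + (1 - t) • x) y = t * e' + (1 - t) * e :=
        hbi₁.1 x' hx' x hx y hy t ⟨ht0, ht1⟩
      have hv2 : u₂ (t • x' + (1 - t) • x) y = t * u₂ x' y + (1 - t) * u₂ x y :=
        hbi₂.1 x' hx' x hx y hy t ⟨ht0, ht1⟩
      have htv : t * (e' - e) = v - e := by
        rw [ht]; field_simp
      refine ⟨t • x' + (1 - t) • x, hmem, by rw [hv1]; nlinarith [htv], ?_⟩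
      unfold col
      rw [hv2]
      linear_combination (u₂ x' y - u₂ x y) * htv
  have main : ∀ x ∈ P₁, ∀ y ∈ P₂, ∀ x' ∈ P₁, ∀ y' ∈ P₂, ∀ x'' ∈ P₁, ∀ y'' ∈ P₂,
      u₁ x y < u₁ x'' y'' → u₁ x'' y'' < u₁ x' y' →
      col (u₁ x y) (u₂ x y) (u₁ x' y') (u₂ x' y') (u₁ x'' y'') (u₂ x'' y'') := by
    intro x hx y hy x' hx' y' hy' x'' hx'' y'' hy'' hpv hvq
    by_cases hq1 : u₁ x' y' ≤ u₁ x y'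
    · obtain ⟨zq, hzq, hzqv, hzqc⟩ := seg2 x hx y hy y' hy' (u₁ x' y') (by linarith) hq1
      have e1 : u₂ x zq = u₂ x' y' := factE x hx zq hzq x' hx' y' hy' (by rw [hzqv])
      rw [e1] at hzqc
      obtain ⟨zv, hzv, hzvv, hzvc⟩ :=
        seg2 x hx y hy y' hy' (u₁ x'' y'') (by linarith) (by linarith)
      have e2 : u₂ x zv = u₂ x'' y'' := factE x hx zv hzv x'' hx'' y'' hy'' (by rw [hzvv])
      rw [e2] at hzvc
      exact col_line (show u₁ x y ≠ u₁ x y' by intro h; linarith)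
        (col_refl₁ _ _ _ _) hzqc hzvc
    by_cases hp1 : u₁ x y' ≤ u₁ x y
    · obtain ⟨zp, hzp, hzpv, hzpc⟩ := seg1 y' hy' x hx x' hx' (u₁ x y) hp1 (by linarith)
      have e1 : u₂ zp y' = u₂ x y := factE zp hzp y' hy' x hx y hy (by rw [hzpv])
      rw [e1] at hzpc
      obtain ⟨zv, hzv, hzvv, hzvc⟩ :=
        seg1 y' hy' x hx x' hx' (u₁ x'' y'') (by linarith) (by linarith)
      have e2 : u₂ zv y' = u₂ x'' y'' := factE zv hzv y' hy' x'' hx'' y'' hy'' (by rw [hzvv])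
      rw [e2] at hzvc
      exact col_line (show u₁ x y' ≠ u₁ x' y' by intro h; linarith)
        hzpc (col_refl₂ _ _ _ _) hzvc
    by_cases hq2 : u₁ x' y' ≤ u₁ x' y
    · obtain ⟨zq, hzq, hzqv, hzqc⟩ := seg1 y hy x hx x' hx' (u₁ x' y') (by linarith) hq2
      have e1 : u₂ zq y = u₂ x' y' := factE zq hzq y hy x' hx' y' hy' (by rw [hzqv])
      rw [e1] at hzqc
      obtain ⟨zv, hzv, hzvv, hzvc⟩ :=
        seg1 y hy x hx x' hx' (u₁ x'' y'') (by linarith) (by linarith)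
      have e2 : u₂ zv y = u₂ x'' y'' := factE zv hzv y hy x'' hx'' y'' hy'' (by rw [hzvv])
      rw [e2] at hzvc
      exact col_line (show u₁ x y ≠ u₁ x' y by intro h; linarith)
        (col_refl₁ _ _ _ _) hzqc hzvc
    by_cases hp2 : u₁ x' y ≤ u₁ x y
    · obtain ⟨zp, hzp, hzpv, hzpc⟩ := seg2 x' hx' y hy y' hy' (u₁ x y) hp2 (by linarith)
      have e1 : u₂ x' zp = u₂ x y := factE x' hx' zp hzp x hx y hy (by rw [hzpv])
      rw [e1] at hzpc
      obtain ⟨zv, hzv, hzvv, hzvc⟩ :=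
        seg2 x' hx' y hy y' hy' (u₁ x'' y'') (by linarith) (by linarith)
      have e2 : u₂ x' zv = u₂ x'' y'' := factE x' hx' zv hzv x'' hx'' y'' hy'' (by rw [hzvv])
      rw [e2] at hzvc
      exact col_line (show u₁ x' y ≠ u₁ x' y' by intro h; linarith)
        hzpc (col_refl₂ _ _ _ _) hzvc
    push_neg at hq1 hp1 hq2 hp2
    rcases lt_trichotomy (u₁ x' y) (u₁ x y') with hlt | heqm | hgt
    · -- m2 < m1
      obtain ⟨zA, hzA, hzAv, hzAc⟩ :=
        seg2 x hx y hy y' hy' (u₁ x' y) (by linarith) (by linarith)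
      have eA : u₂ x' y = u₂ x zA := factE x' hx' y hy x hx zA hzA (by rw [hzAv])
      obtain ⟨zB, hzB, hzBv, hzBc⟩ :=
        seg2 x' hx' y hy y' hy' (u₁ x y') (by linarith) (by linarith)
      have eB : u₂ x' zB = u₂ x y' := factE x' hx' zB hzB x hx y' hy' (by rw [hzBv])
      rw [eB, eA] at hzBc
      have hR : col (u₁ x y) (u₂ x y) (u₁ x y') (u₂ x y') (u₁ x'' y'') (u₂ x'' y'') ∨
          col (u₁ x' y) (u₂ x zA) (u₁ x' y') (u₂ x' y') (u₁ x'' y'') (u₂ x'' y'') := by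
        by_cases hvm : u₁ x'' y'' ≤ u₁ x y'
        · left
          obtain ⟨zR, hzR, hzRv, hzRc⟩ := seg2 x hx y hy y' hy' (u₁ x'' y'') (by linarith) hvm
          have eR : u₂ x zR = u₂ x'' y'' := factE x hx zR hzR x'' hx'' y'' hy'' (by rw [hzRv])
          rw [eR] at hzRc
          exact hzRc
        · right
          obtain ⟨zR, hzR, hzRv, hzRc⟩ :=
            seg2 x' hx' y hy y' hy' (u₁ x'' y'') (by linarith) (by linarith)
          have eR : u₂ x' zR = u₂ x'' y'' := factE x' hx' zR hzR x'' hx'' y'' hy'' (by rw [hzRv])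
          rw [eR, eA] at hzRc
          exact hzRc
      exact col_glue (ne_of_lt hlt) (show u₁ x y ≠ u₁ x y' by intro h; linarith)
        (show u₁ x' y ≠ u₁ x' y' by intro h; linarith) hzAc hzBc hR
    · -- m2 = m1 : the three-chain case
      have hYX : u₂ x' y = u₂ x y' := factE x' hx' y hy x hx y' hy' heqm
      have hxhm : ((1:ℝ)/2) • x + (1 - (1:ℝ)/2) • x' ∈ P₁ :=
        hP₁ hx hx' (by norm_num) (by norm_num) (by norm_num)
      have hva : u₁ (((1:ℝ)/2) • x + (1 - (1:ℝ)/2) • x') y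
          = (1/2 : ℝ) * u₁ x y + (1 - 1/2) * u₁ x' y :=
        hbi₁.1 x hx x' hx' y hy (1/2) ⟨by norm_num, by norm_num⟩
      have hvb : u₁ (((1:ℝ)/2) • x + (1 - (1:ℝ)/2) • x') y'
          = (1/2 : ℝ) * u₁ x y' + (1 - 1/2) * u₁ x' y' :=
        hbi₁.1 x hx x' hx' y' hy' (1/2) ⟨by norm_num, by norm_num⟩
      set xh : V₁ := ((1:ℝ)/2) • x + (1 - (1:ℝ)/2) • x' with hxh_def
      obtain ⟨z1, hz1, hz1v, hz1c⟩ :=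
        seg2 x hx y hy y' hy' (u₁ xh y) (by rw [hva]; linarith) (by rw [hva]; linarith)
      have e1 : u₂ x z1 = u₂ xh y := factE x hx z1 hz1 xh hxhm y hy (by rw [hz1v])
      rw [e1] at hz1c
      obtain ⟨z2, hz2, hz2v, hz2c⟩ :=
        seg2 xh hxhm y hy y' hy' (u₁ x y') (by rw [hva]; linarith) (by rw [hvb]; linarith)
      have e2 : u₂ xh z2 = u₂ x y' := factE xh hxhm z2 hz2 x hx y' hy' (by rw [hz2v])
      rw [e2] at hz2c
      obtain ⟨z3, hz3, hz3v, hz3c⟩ :=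
        seg2 x' hx' y hy y' hy' (u₁ xh y') (by rw [hvb]; linarith) (by rw [hvb]; linarith)
      have e3 : u₂ x' z3 = u₂ xh y' := factE x' hx' z3 hz3 xh hxhm y' hy' (by rw [hz3v])
      rw [e3, heqm, hYX] at hz3c
      have hR : col (u₁ x y) (u₂ x y) (u₁ x y') (u₂ x y') (u₁ x'' y'') (u₂ x'' y'') ∨
          col (u₁ x y') (u₂ x y') (u₁ x' y') (u₂ x' y') (u₁ x'' y'') (u₂ x'' y'') := by
        by_cases hvm : u₁ x'' y'' ≤ u₁ x y'
        · left
          obtain ⟨zR, hzR, hzRv, hzRc⟩ := seg2 x hx y hy y' hy' (u₁ x'' y'') (by linarith) hvm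
          have eR : u₂ x zR = u₂ x'' y'' := factE x hx zR hzR x'' hx'' y'' hy'' (by rw [hzRv])
          rw [eR] at hzRc
          exact hzRc
        · right
          obtain ⟨zR, hzR, hzRv, hzRc⟩ :=
            seg2 x' hx' y hy y' hy' (u₁ x'' y'') (by linarith) (by linarith)
          have eR : u₂ x' zR = u₂ x'' y'' := factE x' hx' zR hzR x'' hx'' y'' hy'' (by rw [hzRv])
          rw [eR, heqm, hYX] at hzRc
          exact hzRc
      exact col_glue3 (show u₁ x y ≠ u₁ x y' by intro h; linarith)
        (show u₁ xh y ≠ u₁ xh y' by rw [hva, hvb]; intro h; linarith)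
        (show u₁ x y' ≠ u₁ x' y' by intro h; linarith)
        (show u₁ xh y ≠ u₁ x y' by rw [hva]; intro h; linarith)
        (show u₁ x y' ≠ u₁ xh y' by rw [hvb]; intro h; linarith)
        hz1c hz2c hz3c hR
    · -- m1 < m2
      obtain ⟨zA, hzA, hzAv, hzAc⟩ :=
        seg1 y hy x hx x' hx' (u₁ x y') (by linarith) (by linarith)
      have eA : u₂ zA y = u₂ x y' := factE zA hzA y hy x hx y' hy' (by rw [hzAv])
      rw [eA] at hzAc
      obtain ⟨zB, hzB, hzBv, hzBc⟩ :=
        seg1 y' hy' x hx x' hx' (u₁ x' y) (by linarith) (by linarith)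
      have eB : u₂ zB y' = u₂ x' y := factE zB hzB y' hy' x' hx' y hy (by rw [hzBv])
      rw [eB] at hzBc
      have hR : col (u₁ x y) (u₂ x y) (u₁ x' y) (u₂ x' y) (u₁ x'' y'') (u₂ x'' y'') ∨
          col (u₁ x y') (u₂ x y') (u₁ x' y') (u₂ x' y') (u₁ x'' y'') (u₂ x'' y'') := by
        by_cases hvm : u₁ x'' y'' ≤ u₁ x' y
        · left
          obtain ⟨zR, hzR, hzRv, hzRc⟩ := seg1 y hy x hx x' hx' (u₁ x'' y'') (by linarith) hvm
          have eR : u₂ zR y = u₂ x'' y'' := factE zR hzR y hy x'' hx'' y'' hy'' (by rw [hzRv])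
          rw [eR] at hzRc
          exact hzRc
        · right
          obtain ⟨zR, hzR, hzRv, hzRc⟩ :=
            seg1 y' hy' x hx x' hx' (u₁ x'' y'') (by linarith) (by linarith)
          have eR : u₂ zR y' = u₂ x'' y'' := factE zR hzR y' hy' x'' hx'' y'' hy'' (by rw [hzRv])
          rw [eR] at hzRc
          exact hzRc
      exact col_glue (ne_of_lt hgt) (show u₁ x y ≠ u₁ x' y by intro h; linarith)
        (show u₁ x y' ≠ u₁ x' y' by intro h; linarith) hzAc hzBc hR
  by_cases hconst : ∀ x ∈ P₁, ∀ y ∈ P₂, ∀ x' ∈ P₁, ∀ y' ∈ P₂, u₁ x y = u₁ x' y'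
  · refine ⟨1, one_pos, u₁ a0 b0 + u₂ a0 b0, ?_⟩
    intro σ₁ h₁ σ₂ h₂
    have h := hconst σ₁ h₁ σ₂ h₂ a0 ha0 b0 hb0
    have h' := factE σ₁ h₁ σ₂ h₂ a0 ha0 b0 hb0 h
    rw [one_mul, h, h']
  · push_neg at hconst
    obtain ⟨ax, hax, ay, hay, bx, hbx, bY, hbY, hAB⟩ :
        ∃ ax ∈ P₁, ∃ ay ∈ P₂, ∃ bx ∈ P₁, ∃ bY ∈ P₂, u₁ bx bY < u₁ ax ay := by
      obtain ⟨x1, hx1, y1, hy1, x2, hx2, y2, hy2, hne⟩ := hconst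
      rcases lt_or_gt_of_ne hne with h | h
      · exact ⟨x2, hx2, y2, hy2, x1, hx1, y1, hy1, h⟩
      · exact ⟨x1, hx1, y1, hy1, x2, hx2, y2, hy2, h⟩
    have hS : u₂ ax ay < u₂ bx bY := factS ax hax ay hay bx hbx bY hbY hAB
    have hd : u₁ ax ay - u₁ bx bY ≠ 0 := by intro h; rw [sub_eq_zero] at h; linarith
    refine ⟨(u₂ bx bY - u₂ ax ay) / (u₁ ax ay - u₁ bx bY),
      div_pos (by linarith) (by linarith),
      (u₂ bx bY - u₂ ax ay) / (u₁ ax ay - u₁ bx bY) * u₁ ax ay + u₂ ax ay, ?_⟩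
    intro σ₁ h₁ σ₂ h₂
    have hcol : col (u₁ ax ay) (u₂ ax ay) (u₁ bx bY) (u₂ bx bY) (u₁ σ₁ σ₂) (u₂ σ₁ σ₂) := by
      rcases lt_trichotomy (u₁ σ₁ σ₂) (u₁ bx bY) with h | h | h
      · exact col_swap23 (col_swap12
          (main σ₁ h₁ σ₂ h₂ ax hax ay hay bx hbx bY hbY h hAB))
      · have hu2 := factE σ₁ h₁ σ₂ h₂ bx hbx bY hbY h
        rw [show u₁ σ₁ σ₂ = u₁ bx bY from h, hu2]
        exact col_refl₂ _ _ _ _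
      · rcases lt_trichotomy (u₁ σ₁ σ₂) (u₁ ax ay) with h' | h' | h'
        · exact col_swap12 (main bx hbx bY hbY ax hax ay hay σ₁ h₁ σ₂ h₂ h h')
        · have hu2 := factE σ₁ h₁ σ₂ h₂ ax hax ay hay h'
          rw [show u₁ σ₁ σ₂ = u₁ ax ay from h', hu2]
          exact col_refl₁ _ _ _ _
        · exact col_swap12 (col_swap23
            (main bx hbx bY hbY σ₁ h₁ σ₂ h₂ ax hax ay hay hAB h'))
    unfold col at hcol
    have key : (u₂ bx bY - u₂ ax ay) / (u₁ ax ay - u₁ bx bY) * (u₁ σ₁ σ₂ - u₁ ax ay)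
        = u₂ ax ay - u₂ σ₁ σ₂ := by
      rw [div_mul_eq_mul_div, div_eq_iff hd]
      linear_combination -hcol
    linear_combination key
end
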